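/- arXiv:2601.00801 — 3 statements merged into one kernel-verified Lean document; each statement's English description precedes it below -/
import Mathlib

section
/- Let p ∈ [1,∞), I an interval, t₀ ∈ I, α ∈ ℝ, h ∈ 𝒱_p(I), g(t) = α + ∫_{t₀}^t h(x)dx, and f ∈ 𝒱_p(g(I)). Then (f ∘ g)·h ∈ 𝒱_p(I) with ν_p((f∘g)·h, I) ≤ ν_p(f, g(I))·(sup_I |h| + 2^{1/p} ν_p(h,I)) + ν_p(h,I)·sup_{g(I)} |f|. -/
open Set Finset MeasureTheory Real

noncomputable section

/-- Set of p-variation partition sums of `f` over `I`. -/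
def varSums (p : ℝ) (f : ℝ → ℝ) (I : Set ℝ) : Set ℝ :=
  {S | ∃ (N : ℕ) (t : ℕ → ℝ), (∀ k ≤ N, t k ∈ I) ∧ (∀ k < N, t k < t (k + 1)) ∧
    S = (∑ k ∈ Finset.range N, |f (t (k + 1)) - f (t k)| ^ p) ^ (1 / p)}

/-- The p-variation `ν_p(f, I)`. -/
def nuVar (p : ℝ) (f : ℝ → ℝ) (I : Set ℝ) : ℝ := sSup (varSums p f I)

/-- `sup_I |f|`. -/
def supAbs (f : ℝ → ℝ) (I : Set ℝ) : ℝ := sSup ((fun x => |f x|) '' I)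

/-- The norm of the space `𝒱_p(I)`. -/
def vNorm (p : ℝ) (f : ℝ → ℝ) (I : Set ℝ) : ℝ := supAbs f I + nuVar p f I

namespace BLSAux

variable {p : ℝ} {f : ℝ → ℝ} {I : Set ℝ}

lemma hp_pos (hp : 1 ≤ p) : 0 < p := lt_of_lt_of_le one_pos hp

lemma hp_ne (hp : 1 ≤ p) : p ≠ 0 := (hp_pos hp).ne'

lemma rpow_abs_inv (hp : 1 ≤ p) (a : ℝ) : (|a| ^ p) ^ (1 / p) = |a| := by
  rw [one_div, Real.rpow_rpow_inv (abs_nonneg a) (hp_ne hp)]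

lemma rpow_abs_inv' (hp : 1 ≤ p) (a : ℝ) : (|a| ^ p) ^ (p⁻¹ : ℝ) = |a| :=
  Real.rpow_rpow_inv (abs_nonneg a) (hp_ne hp)

lemma zero_mem_varSums (hp : 1 ≤ p) (f : ℝ → ℝ) (hI : I.Nonempty) : (0 : ℝ) ∈ varSums p f I := by
  obtain ⟨c, hc⟩ := hI
  exact ⟨0, fun _ => c, fun k _ => hc, fun k hk => absurd hk (Nat.not_lt_zero k),
    by simp [Real.zero_rpow (inv_ne_zero (hp_ne hp))]⟩

lemma nuVar_nonneg (hp : 1 ≤ p) (hI : I.Nonempty) (hb : BddAbove (varSums p f I)) : 0 ≤ nuVar p f I :=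
  le_csSup hb (zero_mem_varSums hp f hI)

/-- a partition sum of `p`-th powers is at most `nuVar ^ p`. -/
lemma sum_pow_le_nuVar_pow (hp : 1 ≤ p) (hb : BddAbove (varSums p f I))
    {N : ℕ} {t : ℕ → ℝ} (hmem : ∀ k ≤ N, t k ∈ I) (hstrict : ∀ k < N, t k < t (k + 1)) :
    ∑ k ∈ Finset.range N, |f (t (k + 1)) - f (t k)| ^ p ≤ nuVar p f I ^ p := by
  have hT : (0 : ℝ) ≤ ∑ k ∈ Finset.range N, |f (t (k + 1)) - f (t k)| ^ p :=
    Finset.sum_nonneg fun k _ => Real.rpow_nonneg (abs_nonneg _) p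
  have hmem' : (∑ k ∈ Finset.range N, |f (t (k + 1)) - f (t k)| ^ p) ^ (1 / p)
      ∈ varSums p f I := ⟨N, t, hmem, hstrict, rfl⟩
  have h1 : (∑ k ∈ Finset.range N, |f (t (k + 1)) - f (t k)| ^ p) ^ (1 / p) ≤ nuVar p f I :=
    le_csSup hb hmem'
  calc ∑ k ∈ Finset.range N, |f (t (k + 1)) - f (t k)| ^ p
      = (((∑ k ∈ Finset.range N, |f (t (k + 1)) - f (t k)| ^ p) ^ (1 / p)) : ℝ) ^ p := by
        rw [one_div, Real.rpow_inv_rpow hT (hp_ne hp)]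
    _ ≤ nuVar p f I ^ p :=
        Real.rpow_le_rpow (Real.rpow_nonneg hT _) h1 (hp_pos hp).le

lemma abs_sub_le_nuVar (hp : 1 ≤ p) (hb : BddAbove (varSums p f I))
    {a b : ℝ} (ha : a ∈ I) (hb' : b ∈ I) : |f b - f a| ≤ nuVar p f I := by
  rcases lt_trichotomy a b with hab | rfl | hab
  · have hmem' : (|f b - f a|) ∈ varSums p f I := by
      refine ⟨1, fun k => if k = 0 then a else b, ?_, ?_, ?_⟩
      · intro k _; by_cases hk : k = 0 <;> simp [hk, ha, hb']
      · intro k hk; interval_cases k; simpa using hab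
      · simp [rpow_abs_inv' hp]
    exact le_csSup hb hmem'
  · simpa using nuVar_nonneg hp ⟨a, ha⟩ hb
  · have hmem' : (|f a - f b|) ∈ varSums p f I := by
      refine ⟨1, fun k => if k = 0 then b else a, ?_, ?_, ?_⟩
      · intro k _; by_cases hk : k = 0 <;> simp [hk, ha, hb']
      · intro k hk; interval_cases k; simpa using hab
      · simp [rpow_abs_inv' hp]
    rw [abs_sub_comm]
    exact le_csSup hb hmem'

lemma abs_le_center (hp : 1 ≤ p) (hb : BddAbove (varSums p f I))
    {c y : ℝ} (hc : c ∈ I) (hy : y ∈ I) : |f y| ≤ |f c| + nuVar p f I := by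
  have := abs_sub_le_nuVar hp hb hc hy
  have h2 : |f y| ≤ |f c| + |f y - f c| := by
    calc |f y| = |f c + (f y - f c)| := by ring_nf
    _ ≤ |f c| + |f y - f c| := abs_add_le _ _
  linarith

lemma bddAbove_absImage (hp : 1 ≤ p) (hb : BddAbove (varSums p f I))
    {c : ℝ} (hc : c ∈ I) : BddAbove ((fun y => |f y|) '' I) := by
  refine ⟨|f c| + nuVar p f I, ?_⟩
  rintro z ⟨y, hy, rfl⟩
  exact abs_le_center hp hb hc hy

lemma le_supAbs (hp : 1 ≤ p) (hb : BddAbove (varSums p f I))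
    {c y : ℝ} (hc : c ∈ I) (hy : y ∈ I) : |f y| ≤ supAbs f I :=
  le_csSup (bddAbove_absImage hp hb hc) ⟨y, hy, rfl⟩

lemma supAbs_nonneg (hp : 1 ≤ p) (hb : BddAbove (varSums p f I))
    {c : ℝ} (hc : c ∈ I) : 0 ≤ supAbs f I :=
  le_trans (abs_nonneg (f c)) (le_supAbs hp hb hc hc)

/-- partition sums along a weakly increasing sequence are bounded by `nuVar ^ p`. -/
lemma weak_mono_sum_le (hp : 1 ≤ p) (hb : BddAbove (varSums p f I))
    {L : ℕ} {v : ℕ → ℝ} (hmem : ∀ k ≤ L, v k ∈ I) (hmono : ∀ k < L, v k ≤ v (k + 1)) :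
    ∑ k ∈ Finset.range L, |f (v (k + 1)) - f (v k)| ^ p ≤ nuVar p f I ^ p := by
  have key : ∀ (L : ℕ) (v : ℕ → ℝ), (∀ k ≤ L, v k ∈ I) → (∀ k < L, v k ≤ v (k + 1)) →
      ∃ (N : ℕ) (u : ℕ → ℝ), (∀ k ≤ N, u k ∈ I) ∧ (∀ k < N, u k < u (k + 1)) ∧ u N = v L ∧
        ∑ k ∈ Finset.range L, |f (v (k + 1)) - f (v k)| ^ p ≤
          ∑ k ∈ Finset.range N, |f (u (k + 1)) - f (u k)| ^ p := by
    intro L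
    induction L with
    | zero =>
      intro v hmem _
      exact ⟨0, fun _ => v 0, fun k _ => by simpa using hmem 0 le_rfl,
        fun k hk => absurd hk (Nat.not_lt_zero k), rfl, by simp⟩
    | succ L ih =>
      intro v hmem hmono
      obtain ⟨N, u, humem, hustr, hulast, husum⟩ :=
        ih v (fun k hk => hmem k (hk.trans (Nat.le_succ L)))
          (fun k hk => hmono k (hk.trans_le (Nat.le_succ L)))
      rcases eq_or_lt_of_le (hmono L (Nat.lt_succ_self L)) with heq | hlt
      · refine ⟨N, u, humem, hustr, by rw [hulast, heq], ?_⟩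
        rw [Finset.sum_range_succ, ← heq]
        simpa [Real.zero_rpow (hp_ne hp)] using husum
      · refine ⟨N + 1, fun k => if k ≤ N then u k else v (L + 1), ?_, ?_, ?_, ?_⟩
        · intro k hk
          by_cases hkN : k ≤ N
          · simp only [hkN, if_true]; exact humem k hkN
          · simp only [hkN, if_false]; exact hmem (L + 1) le_rfl
        · intro k hk
          rcases Nat.lt_or_ge k N with hkN | hkN
          · simp only [hkN.le, Nat.succ_le_of_lt hkN, if_true]
            exact hustr k hkN
          · have hkeq : k = N := le_antisymm (Nat.lt_succ_iff.mp hk) hkN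
            subst hkeq
            simp only [le_refl, if_true, Nat.not_succ_le_self, if_false]
            rw [hulast]; exact hlt
        · simp
        · rw [Finset.sum_range_succ, Finset.sum_range_succ (n := N)]
          have hterms : ∀ k < N, (if k + 1 ≤ N then u (k+1) else v (L+1)) = u (k+1) ∧
              (if k ≤ N then u k else v (L+1)) = u k := fun k hk =>
            ⟨by simp [Nat.succ_le_of_lt hk], by simp [hk.le]⟩
          have hsum_eq : ∑ k ∈ Finset.range N,
              |f (if k + 1 ≤ N then u (k+1) else v (L+1)) - f (if k ≤ N then u k else v (L+1))| ^ p
              = ∑ k ∈ Finset.range N, |f (u (k + 1)) - f (u k)| ^ p := by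
            refine Finset.sum_congr rfl fun k hk => ?_
            rw [(hterms k (Finset.mem_range.mp hk)).1, (hterms k (Finset.mem_range.mp hk)).2]
          rw [hsum_eq]
          simp only [le_refl, if_true, Nat.not_succ_le_self, if_false, hulast]
          exact add_le_add husum le_rfl
  obtain ⟨N, u, humem, hustr, _, husum⟩ := key L v hmem hmono
  exact le_trans husum (sum_pow_le_nuVar_pow hp hb humem hustr)

/-- same for weakly decreasing sequences. -/
lemma weak_anti_sum_le (hp : 1 ≤ p) (hb : BddAbove (varSums p f I))
    {L : ℕ} {v : ℕ → ℝ} (hmem : ∀ k ≤ L, v k ∈ I) (hmono : ∀ k < L, v (k + 1) ≤ v k) :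
    ∑ k ∈ Finset.range L, |f (v (k + 1)) - f (v k)| ^ p ≤ nuVar p f I ^ p := by
  have hwmem : ∀ k ≤ L, v (L - k) ∈ I := fun k _ => hmem (L - k) (Nat.sub_le L k)
  have hwmono : ∀ k, k < L → v (L - k) ≤ v (L - (k + 1)) := by
    intro k hk
    have h2 : L - (k + 1) + 1 = L - k := by omega
    have h3 := hmono (L - (k + 1)) (by omega)
    rw [h2] at h3; exact h3
  have h1 := weak_mono_sum_le hp hb (L := L) (v := fun k => v (L - k)) hwmem hwmono
  calc ∑ k ∈ Finset.range L, |f (v (k + 1)) - f (v k)| ^ p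
      = ∑ k ∈ Finset.range L, |f (v (L - (L - 1 - k + 1))) - f (v (L - (L - 1 - k)))| ^ p := by
        refine Finset.sum_congr rfl fun k hk => ?_
        have hkL := Finset.mem_range.mp hk
        have e1 : L - (L - 1 - k + 1) = k := by omega
        have e2 : L - (L - 1 - k) = k + 1 := by omega
        rw [e1, e2, abs_sub_comm]
    _ = ∑ k ∈ Finset.range L, |f (v (L - (k + 1))) - f (v (L - k))| ^ p :=
        Finset.sum_range_reflect (fun k => |f (v (L - (k + 1))) - f (v (L - k))| ^ p) L
    _ ≤ nuVar p f I ^ p := h1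

/-- chained pairs estimate. -/
lemma pairs_sum_le (hp : 1 ≤ p) (hb : BddAbove (varSums p f I)) (hne : I.Nonempty)
    {M : ℕ} {a b : ℕ → ℝ} (hma : ∀ i < M, a i ∈ I) (hmb : ∀ i < M, b i ∈ I)
    (hlt : ∀ i < M, a i < b i) (hchain : ∀ i, i + 1 < M → b i ≤ a (i + 1)) :
    ∑ i ∈ Finset.range M, |f (b i) - f (a i)| ^ p ≤ nuVar p f I ^ p := by
  rcases Nat.eq_zero_or_pos M with rfl | hM
  · simpa using Real.rpow_nonneg (nuVar_nonneg hp hne hb) p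
  set v : ℕ → ℝ := fun k => if k % 2 = 0 then a (k / 2) else b (k / 2) with hv
  have hL := weak_mono_sum_le hp hb (L := 2 * M - 1) (v := v)
    (fun k hk => by
      rcases Nat.even_or_odd k with he | ho
      · have : k % 2 = 0 := Nat.even_iff.mp he
        simp only [hv, this, if_true]
        exact hma _ (by omega)
      · have h1 : k % 2 = 1 := Nat.odd_iff.mp ho
        simp only [hv, h1]
        norm_num
        exact hmb _ (by omega))
    (fun k hk => by
      rcases Nat.even_or_odd k with he | ho
      · have h0 : k % 2 = 0 := Nat.even_iff.mp he
        have h1 : (k + 1) % 2 = 1 := by omega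
        have h2 : (k + 1) / 2 = k / 2 := by omega
        simp only [hv, h0, h1, h2]
        norm_num
        exact (hlt _ (by omega)).le
      · have h0 : k % 2 = 1 := Nat.odd_iff.mp ho
        have h1 : (k + 1) % 2 = 0 := by omega
        have h2 : (k + 1) / 2 = k / 2 + 1 := by omega
        simp only [hv, h0, h1, h2]
        norm_num
        exact hchain _ (by omega))
  refine le_trans ?_ hL
  have himg : ∑ i ∈ Finset.range M, |f (b i) - f (a i)| ^ p =
      ∑ k ∈ (Finset.range M).image (fun i => 2 * i), |f (v (k + 1)) - f (v k)| ^ p := by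
    rw [Finset.sum_image (by intro x _ y _ hxy; dsimp only at hxy; omega)]
    refine Finset.sum_congr rfl fun i hi => ?_
    have h0 : (2 * i) % 2 = 0 := by omega
    have h1 : (2 * i + 1) % 2 = 1 := by omega
    have h2 : (2 * i + 1) / 2 = i := by omega
    have h3 : (2 * i) / 2 = i := by omega
    simp only [hv, h0, h1, h2, h3]
    norm_num
  rw [himg]
  refine Finset.sum_le_sum_of_subset_of_nonneg ?_ (fun k _ _ => Real.rpow_nonneg (abs_nonneg _) p)
  intro k hk
  simp only [Finset.mem_image, Finset.mem_range] at hk ⊢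
  obtain ⟨i, hi, rfl⟩ := hk
  omega

/-- The set of points with ε-oscillation is finite for functions with bounded p-variation sums. -/
lemma finite_bad (hp : 1 ≤ p) (hb : BddAbove (varSums p f I)) (hne : I.Nonempty)
    {ε : ℝ} (hε : 0 < ε) :
    {s | s ∈ I ∧ ∀ δ > 0, ∃ u ∈ I, |u - s| < δ ∧ ε ≤ |f u - f s|}.Finite := by
  by_contra hinf
  have hinf' : {s | s ∈ I ∧ ∀ δ > 0, ∃ u ∈ I, |u - s| < δ ∧ ε ≤ |f u - f s|}.Infinite := hinf
  set D := nuVar p f I with hD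
  have hD0 : 0 ≤ D := nuVar_nonneg hp hne hb
  set m : ℕ := ⌈(D / ε) ^ p⌉₊ + 1 with hm
  obtain ⟨T, hTsub, hTcard⟩ := Set.Infinite.exists_subset_card_eq hinf' m
  set l := T.sort (· ≤ ·) with hl
  have hlen : l.length = m := by rw [hl, Finset.length_sort, hTcard]
  set E : ℕ → ℝ := fun i => l.getD i 0 with hE
  have hEmem : ∀ i, i < m → E i ∈ T := by
    intro i hi
    rw [hE]
    simp only []
    rw [List.getD_eq_getElem l 0 (by omega)]
    rw [hl] at *
    exact (Finset.mem_sort (α := ℝ) (· ≤ ·)).mp (List.getElem_mem _)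
  have hEbad : ∀ i, i < m → E i ∈ I ∧ ∀ δ > 0, ∃ u ∈ I, |u - E i| < δ ∧ ε ≤ |f u - f (E i)| :=
    fun i hi => hTsub (hEmem i hi)
  have hsorted : l.Pairwise (· < ·) := (Finset.sortedLT_sort T).pairwise
  have hEstrict : ∀ i j, i < j → j < m → E i < E j := by
    intro i j hij hj
    have h1 := List.pairwise_iff_getElem.mp hsorted i j (by omega) (by omega) hij
    rw [hE]
    simp only []
    rw [List.getD_eq_getElem l 0 (by omega), List.getD_eq_getElem l 0 (by omega)]
    exact h1
  -- gaps
  set dl : ℕ → ℝ := fun i => if i = 0 then 1 else E i - E (i - 1) with hdl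
  set dr : ℕ → ℝ := fun i => if i + 1 < m then E (i + 1) - E i else 1 with hdr
  set δf : ℕ → ℝ := fun i => min (dl i) (dr i) / 2 with hδf
  have hdlpos : ∀ i, i < m → 0 < dl i := by
    intro i hi
    by_cases h0 : i = 0
    · simp [hdl, h0]
    · have := hEstrict (i - 1) i (by omega) hi
      simp only [hdl, if_neg h0]
      linarith
  have hdrpos : ∀ i, i < m → 0 < dr i := by
    intro i hi
    by_cases h0 : i + 1 < m
    · have := hEstrict i (i + 1) (by omega) h0
      simp only [hdr, if_pos h0]
      linarith
    · simp [hdr, h0]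
  have hδpos : ∀ i, i < m → 0 < δf i := by
    intro i hi
    simp only [hδf]
    exact div_pos (lt_min (hdlpos i hi) (hdrpos i hi)) two_pos
  have hu : ∀ i, i < m → ∃ u ∈ I, |u - E i| < δf i ∧ ε ≤ |f u - f (E i)| := by
    intro i hi
    exact (hEbad i hi).2 (δf i) (hδpos i hi)
  choose u humem habs hosc using fun (i : ℕ) (hi : i < m) => hu i hi
  -- make total functions
  set A : ℕ → ℝ := fun i => if hi : i < m then min (u i hi) (E i) else 0 with hA
  set B : ℕ → ℝ := fun i => if hi : i < m then max (u i hi) (E i) else 1 with hB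
  have hAB : ∀ i, i < m → A i < B i := by
    intro i hi
    rw [hA, hB]
    simp only [dif_pos hi]
    rcases lt_trichotomy (u i hi) (E i) with h | h | h
    · rw [min_eq_left h.le, max_eq_right h.le]; exact h
    · exfalso
      have := hosc i hi
      rw [h] at this
      simp at this
      linarith
    · rw [min_eq_right h.le, max_eq_left h.le]; exact h
  have hAmem : ∀ i, i < m → A i ∈ I := by
    intro i hi
    rw [hA]; simp only [dif_pos hi]
    rcases le_total (u i hi) (E i) with h | h
    · rw [min_eq_left h]; exact humem i hi
    · rw [min_eq_right h]; exact (hEbad i hi).1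
  have hBmem : ∀ i, i < m → B i ∈ I := by
    intro i hi
    rw [hB]; simp only [dif_pos hi]
    rcases le_total (u i hi) (E i) with h | h
    · rw [max_eq_right h]; exact (hEbad i hi).1
    · rw [max_eq_left h]; exact humem i hi
  have hchain : ∀ i, i + 1 < m → B i ≤ A (i + 1) := by
    intro i hi1
    have hi : i < m := by omega
    have hub := habs i hi
    have hub1 := habs (i + 1) hi1
    have hgap : E (i + 1) - E i > 0 := by
      have := hEstrict i (i + 1) (by omega) hi1; linarith
    have hδi : δf i ≤ (E (i + 1) - E i) / 2 := by
      have hdreq : dr i = E (i + 1) - E i := by simp only [hdr, if_pos hi1]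
      have hmin := min_le_right (dl i) (dr i)
      simp only [hδf]
      linarith
    have hδi1 : δf (i + 1) ≤ (E (i + 1) - E i) / 2 := by
      have h0 : ¬(i + 1 = 0) := by omega
      have hdleq : dl (i + 1) = E (i + 1) - E i := by
        simp only [hdl, if_neg h0, Nat.add_sub_cancel]
      have hmin := min_le_left (dl (i + 1)) (dr (i + 1))
      simp only [hδf]
      linarith
    have hBi : B i < E i + δf i := by
      rw [hB]; simp only [dif_pos hi]
      have h1 := abs_lt.mp hub
      rcases le_total (u i hi) (E i) with h | h
      · rw [max_eq_right h]; linarith [hδpos i hi]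
      · rw [max_eq_left h]; linarith [h1.2]
    have hAi1 : E (i + 1) - δf (i + 1) < A (i + 1) := by
      rw [hA]; simp only [dif_pos hi1]
      have h1 := abs_lt.mp hub1
      rcases le_total (u (i + 1) hi1) (E (i + 1)) with h | h
      · rw [min_eq_left h]; linarith [h1.1]
      · rw [min_eq_right h]; linarith [hδpos (i + 1) hi1]
    linarith
  have hsum := pairs_sum_le hp hb hne (M := m) (a := A) (b := B) hAmem hBmem hAB hchain
  have hterm : ∀ i ∈ Finset.range m, ε ^ p ≤ |f (B i) - f (A i)| ^ p := by
    intro i hi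
    have him := Finset.mem_range.mp hi
    have heq : |f (B i) - f (A i)| = |f (u i him) - f (E i)| := by
      rw [hA, hB]; simp only [dif_pos him]
      rcases le_total (u i him) (E i) with h | h
      · rw [min_eq_left h, max_eq_right h, abs_sub_comm]
      · rw [min_eq_right h, max_eq_left h]
    rw [heq]
    exact Real.rpow_le_rpow hε.le (hosc i him) (hp_pos hp).le
  have hmain : (m : ℝ) * ε ^ p ≤ D ^ p := by
    calc (m : ℝ) * ε ^ p = ∑ _i ∈ Finset.range m, ε ^ p := by
          rw [Finset.sum_const, Finset.card_range, nsmul_eq_mul]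
      _ ≤ ∑ i ∈ Finset.range m, |f (B i) - f (A i)| ^ p := Finset.sum_le_sum hterm
      _ ≤ D ^ p := hsum
  have hεp : 0 < ε ^ p := Real.rpow_pos_of_pos hε p
  have hle : (m : ℝ) ≤ (D / ε) ^ p := by
    rw [Real.div_rpow hD0 hε.le]
    rw [le_div_iff₀ hεp]
    exact hmain
  have hlt : (D / ε) ^ p < m := by
    have h1 : (D / ε) ^ p ≤ (⌈(D / ε) ^ p⌉₊ : ℝ) := Nat.le_ceil _
    have h2 : ((⌈(D / ε) ^ p⌉₊ : ℕ) : ℝ) < m := by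
      rw [hm]; push_cast; linarith
    linarith
  linarith

/-- A function with bounded p-variation sums on an order-connected set is interval integrable
between any two points of the set. -/
lemma intervalIntegrable_of_bdd_le (hp : 1 ≤ p) (hb : BddAbove (varSums p f I))
    (hI : I.OrdConnected) {a b : ℝ} (ha : a ∈ I) (hbb : b ∈ I) (hab : a ≤ b) :
    IntervalIntegrable f volume a b := by
  set Bad : Set ℝ := ⋃ n : ℕ, {s | s ∈ I ∧ ∀ δ > 0, ∃ u ∈ I,
      |u - s| < δ ∧ 1 / (n + 1) ≤ |f u - f s|} with hBad
  have hcnt : Bad.Countable := by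
    refine Set.countable_iUnion fun n => Set.Finite.countable ?_
    exact finite_bad hp hb ⟨a, ha⟩ (by positivity)
  have hBadnull : volume Bad = 0 := hcnt.measure_zero _
  have hIccI : Icc a b ⊆ I := hI.out ha hbb
  have hcont : ∀ s ∈ I \ Bad, ContinuousWithinAt f I s := by
    intro s hs
    rw [Metric.continuousWithinAt_iff]
    intro ε hε
    obtain ⟨n, hn⟩ := exists_nat_one_div_lt hε
    have hsnot : s ∉ {s | s ∈ I ∧ ∀ δ > 0, ∃ u ∈ I,
        |u - s| < δ ∧ 1 / (n + 1) ≤ |f u - f s|} := by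
      intro hmem
      exact hs.2 (Set.mem_iUnion.mpr ⟨n, hmem⟩)
    simp only [Set.mem_setOf_eq, hs.1, true_and, not_forall] at hsnot
    push_neg at hsnot
    obtain ⟨δ, hδpos, hδprop⟩ := hsnot
    refine ⟨δ, hδpos, fun {u} hu hdist => ?_⟩
    have h2 := hδprop u hu (by rwa [Real.dist_eq] at hdist)
    rw [Real.dist_eq]
    calc |f u - f s| < 1 / (n + 1) := by push_cast at h2 ⊢; linarith
      _ < ε := hn
  set s' : Set ℝ := Icc a b \ Bad with hs'
  have hs'meas : MeasurableSet s' := measurableSet_Icc.diff hcnt.measurableSet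
  have hconts' : ContinuousOn f s' := by
    intro s hs
    have h1 : ContinuousWithinAt f I s := hcont s ⟨hIccI hs.1, hs.2⟩
    exact h1.mono fun y hy => hIccI hy.1
  have haem : AEMeasurable f (volume.restrict s') := hconts'.aemeasurable hs'meas
  have hae : s' =ᵐ[volume] Icc a b := by
    rw [MeasureTheory.ae_eq_set]
    constructor
    · refine measure_mono_null (fun x hx => ?_) (OuterMeasureClass.measure_empty volume)
      exact absurd hx.1.1 hx.2
    · refine measure_mono_null (fun x hx => ?_) hBadnull
      by_contra hxB
      exact hx.2 ⟨hx.1, hxB⟩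
  have haem2 : AEMeasurable f (volume.restrict (Icc a b)) := by
    rwa [Measure.restrict_congr_set hae] at haem
  haveI hfin : IsFiniteMeasure (volume.restrict (Icc a b)) := by
    constructor
    rw [Measure.restrict_apply_univ]
    simp [Real.volume_Icc]
  have hint : IntegrableOn f (Icc a b) volume := by
    constructor
    · exact haem2.aestronglyMeasurable
    · refine MeasureTheory.HasFiniteIntegral.of_bounded (C := |f a| + nuVar p f I) ?_
      refine (MeasureTheory.ae_restrict_iff' measurableSet_Icc).mpr
        (Filter.Eventually.of_forall fun y hy => ?_)
      simpa [Real.norm_eq_abs] using abs_le_center hp hb ha (hIccI hy)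
  rw [intervalIntegrable_iff_integrableOn_Ioc_of_le hab]
  exact hint.mono_set Set.Ioc_subset_Icc_self

lemma intervalIntegrable_of_bdd (hp : 1 ≤ p) (hb : BddAbove (varSums p f I))
    (hI : I.OrdConnected) {a b : ℝ} (ha : a ∈ I) (hbb : b ∈ I) :
    IntervalIntegrable f volume a b := by
  rcases le_total a b with hab | hab
  · exact intervalIntegrable_of_bdd_le hp hb hI ha hbb hab
  · exact (intervalIntegrable_of_bdd_le hp hb hI hbb ha hab).symm

section Sign

variable {g : ℝ → ℝ} {t₀ α : ℝ}

lemma g_sub (hp : 1 ≤ p) (hb : BddAbove (varSums p f I)) (hI : I.OrdConnected)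
    (ht₀ : t₀ ∈ I) (hgdef : ∀ t ∈ I, g t = α + ∫ x in t₀..t, f x)
    {u v : ℝ} (hu : u ∈ I) (hv : v ∈ I) :
    g v - g u = ∫ x in u..v, f x := by
  rw [hgdef v hv, hgdef u hu]
  have h1 := intervalIntegral.integral_interval_sub_left
    (intervalIntegrable_of_bdd hp hb hI ht₀ hv)
    (intervalIntegrable_of_bdd hp hb hI ht₀ hu)
  linarith

lemma exists_pos_of_lt (hp : 1 ≤ p) (hb : BddAbove (varSums p f I)) (hI : I.OrdConnected)
    (ht₀ : t₀ ∈ I) (hgdef : ∀ t ∈ I, g t = α + ∫ x in t₀..t, f x)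
    {a b : ℝ} (ha : a ∈ I) (hbm : b ∈ I) (hab : a < b) (hg : g a < g b) :
    ∃ s, s ∈ I ∧ a ≤ s ∧ s ≤ b ∧ 0 < f s := by
  by_contra hcon
  push_neg at hcon
  have hint : (∫ x in a..b, f x) ≤ 0 := by
    have h1 : 0 ≤ ∫ x in a..b, -f x := by
      refine intervalIntegral.integral_nonneg hab.le fun u hu => ?_
      have := hcon u (hI.out ha hbm hu) hu.1 hu.2
      simpa using this
    rw [intervalIntegral.integral_neg] at h1
    linarith
  have h2 := g_sub hp hb hI ht₀ hgdef ha hbm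
  linarith

lemma exists_neg_of_lt (hp : 1 ≤ p) (hb : BddAbove (varSums p f I)) (hI : I.OrdConnected)
    (ht₀ : t₀ ∈ I) (hgdef : ∀ t ∈ I, g t = α + ∫ x in t₀..t, f x)
    {a b : ℝ} (ha : a ∈ I) (hbm : b ∈ I) (hab : a < b) (hg : g b < g a) :
    ∃ s, s ∈ I ∧ a ≤ s ∧ s ≤ b ∧ f s < 0 := by
  by_contra hcon
  push_neg at hcon
  have hint : 0 ≤ ∫ x in a..b, f x := by
    refine intervalIntegral.integral_nonneg hab.le fun u hu => ?_
    exact hcon u (hI.out ha hbm hu) hu.1 hu.2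
  have h2 := g_sub hp hb hI ht₀ hgdef ha hbm
  linarith

end Sign

section Runs

/-- the sequence `x` is (weakly) monotone on indices `[a, e]`. -/
def MonoSeq (x : ℕ → ℝ) (a e : ℕ) : Prop :=
  (∀ i j, a ≤ i → i ≤ j → j ≤ e → x i ≤ x j) ∨ (∀ i j, a ≤ i → i ≤ j → j ≤ e → x j ≤ x i)

lemma monoSeq_succ (x : ℕ → ℝ) (a : ℕ) : MonoSeq x a (a + 1) := by
  rcases le_total (x a) (x (a + 1)) with hc | hc
  · left
    intro i j hai hij hje
    rcases Nat.eq_or_lt_of_le hij with rfl | hlt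
    · exact le_rfl
    · have hi : i = a := by omega
      have hj : j = a + 1 := by omega
      rw [hi, hj]; exact hc
  · right
    intro i j hai hij hje
    rcases Nat.eq_or_lt_of_le hij with rfl | hlt
    · exact le_rfl
    · have hi : i = a := by omega
      have hj : j = a + 1 := by omega
      rw [hi, hj]; exact hc

open Classical in
/-- end of the maximal monotone run of `x` starting at `a` (within `[0, N]`). -/
def nextRun (x : ℕ → ℝ) (N a : ℕ) : ℕ :=
  if h : a < N then
    ((Finset.Icc (a + 1) N).filter (fun e => MonoSeq x a e)).max'
      ⟨a + 1, Finset.mem_filter.mpr ⟨Finset.mem_Icc.mpr ⟨le_rfl, h⟩, monoSeq_succ x a⟩⟩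
  else N

lemma nextRun_spec (x : ℕ → ℝ) (N a : ℕ) (ha : a < N) :
    a < nextRun x N a ∧ nextRun x N a ≤ N ∧ MonoSeq x a (nextRun x N a) ∧
      ∀ e, e ≤ N → a < e → MonoSeq x a e → e ≤ nextRun x N a := by
  classical
  rw [nextRun, dif_pos ha]
  have hmem := Finset.max'_mem ((Finset.Icc (a + 1) N).filter (fun e => MonoSeq x a e))
    ⟨a + 1, Finset.mem_filter.mpr ⟨Finset.mem_Icc.mpr ⟨le_rfl, ha⟩, monoSeq_succ x a⟩⟩
  rw [Finset.mem_filter, Finset.mem_Icc] at hmem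
  refine ⟨by omega, hmem.1.2, hmem.2, ?_⟩
  intro e he hae hmono
  exact Finset.le_max' _ e (Finset.mem_filter.mpr ⟨Finset.mem_Icc.mpr ⟨hae, he⟩, hmono⟩)

lemma nextRun_of_ge (x : ℕ → ℝ) (N a : ℕ) (ha : ¬ a < N) : nextRun x N a = N := by
  rw [nextRun, dif_neg ha]

/-- starting index of the `j`-th run. -/
def runIdx (x : ℕ → ℝ) (N : ℕ) : ℕ → ℕ := fun j => (nextRun x N)^[j] 0

lemma runIdx_zero (x : ℕ → ℝ) (N : ℕ) : runIdx x N 0 = 0 := rfl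

lemma runIdx_succ (x : ℕ → ℝ) (N j : ℕ) :
    runIdx x N (j + 1) = nextRun x N (runIdx x N j) := by
  rw [runIdx, Function.iterate_succ_apply']
  rfl

lemma runIdx_le (x : ℕ → ℝ) (N : ℕ) : ∀ j, runIdx x N j ≤ N := by
  intro j
  induction j with
  | zero => exact Nat.zero_le N
  | succ j ih =>
    rw [runIdx_succ]
    by_cases hj : runIdx x N j < N
    · exact (nextRun_spec x N _ hj).2.1
    · rw [nextRun_of_ge x N _ hj]

lemma runIdx_mono_succ (x : ℕ → ℝ) (N j : ℕ) : runIdx x N j ≤ runIdx x N (j + 1) := by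
  rw [runIdx_succ]
  by_cases hj : runIdx x N j < N
  · exact (nextRun_spec x N _ hj).1.le
  · rw [nextRun_of_ge x N _ hj]
    exact runIdx_le x N j

lemma runIdx_mono (x : ℕ → ℝ) (N : ℕ) : Monotone (runIdx x N) :=
  monotone_nat_of_le_succ (runIdx_mono_succ x N)

lemma runIdx_last (x : ℕ → ℝ) (N : ℕ) : runIdx x N N = N := by
  have key : ∀ j, j ≤ runIdx x N j ∨ runIdx x N j = N := by
    intro j
    induction j with
    | zero => exact Or.inl le_rfl
    | succ j ih =>
      by_cases hj : runIdx x N j < N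
      · rcases ih with ih | ih
        · left
          have := (nextRun_spec x N _ hj).1
          rw [runIdx_succ]
          omega
        · omega
      · right
        rw [runIdx_succ, nextRun_of_ge x N _ hj]
  rcases key N with hk | hk
  · exact le_antisymm (runIdx_le x N N) hk
  · exact hk

end Runs

lemma t_mono {N : ℕ} {t : ℕ → ℝ} (hstrict : ∀ k < N, t k < t (k + 1)) :
    ∀ k l, k ≤ l → l ≤ N → t k ≤ t l := by
  intro k l hkl hlN
  induction l with
  | zero =>
    have hk0 : k = 0 := by omega
    simp [hk0]
  | succ l ih =>
    rcases Nat.eq_or_lt_of_le hkl with rfl | hlt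
    · exact le_rfl
    · have h1 : t k ≤ t l := ih (by omega) (by omega)
      exact h1.trans (hstrict l (by omega)).le

/-- Sum of weighted p-th power increments over a monotone block. -/
lemma block_sum_le (hp : 1 ≤ p) {J : Set ℝ} (hbdd : BddAbove (varSums p f J))
    {x : ℕ → ℝ} {N a e : ℕ} (hae : a ≤ e) (heN : e ≤ N) (hxmem : ∀ k ≤ N, x k ∈ J)
    (hmono : MonoSeq x a e) {w : ℕ → ℝ} {W : ℝ} (hW0 : 0 ≤ W) (hw0 : ∀ k, 0 ≤ w k)
    (hwb : ∀ k, a ≤ k → k < e → x k ≠ x (k + 1) → w k ≤ W) :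
    ∑ k ∈ Finset.Ico a e, |f (x (k + 1)) - f (x k)| ^ p * w k ^ p ≤
      nuVar p f J ^ p * W ^ p := by
  have hstep : ∀ k ∈ Finset.Ico a e,
      |f (x (k + 1)) - f (x k)| ^ p * w k ^ p ≤ |f (x (k + 1)) - f (x k)| ^ p * W ^ p := by
    intro k hk
    rw [Finset.mem_Ico] at hk
    by_cases hne : x k = x (k + 1)
    · have hz : |f (x (k + 1)) - f (x k)| = 0 := by rw [hne]; simp
      rw [hz, Real.zero_rpow (hp_ne hp), zero_mul, zero_mul]
    · have h1 : w k ^ p ≤ W ^ p :=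
        Real.rpow_le_rpow (hw0 k) (hwb k hk.1 hk.2 hne) (hp_pos hp).le
      exact mul_le_mul_of_nonneg_left h1 (Real.rpow_nonneg (abs_nonneg _) _)
  have hvar : ∑ k ∈ Finset.Ico a e, |f (x (k + 1)) - f (x k)| ^ p ≤ nuVar p f J ^ p := by
    rw [Finset.sum_Ico_eq_sum_range]
    rcases hmono with hinc | hdec
    · exact weak_mono_sum_le hp hbdd (L := e - a) (v := fun i => x (a + i))
        (fun k hk => hxmem (a + k) (by omega))
        (fun k hk => hinc (a + k) (a + k + 1) (by omega) (by omega) (by omega))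
    · exact weak_anti_sum_le hp hbdd (L := e - a) (v := fun i => x (a + i))
        (fun k hk => hxmem (a + k) (by omega))
        (fun k hk => hdec (a + k) (a + k + 1) (by omega) (by omega) (by omega))
  calc ∑ k ∈ Finset.Ico a e, |f (x (k + 1)) - f (x k)| ^ p * w k ^ p
      ≤ ∑ k ∈ Finset.Ico a e, |f (x (k + 1)) - f (x k)| ^ p * W ^ p := Finset.sum_le_sum hstep
    _ = (∑ k ∈ Finset.Ico a e, |f (x (k + 1)) - f (x k)| ^ p) * W ^ p := by
        rw [Finset.sum_mul]
    _ ≤ nuVar p f J ^ p * W ^ p :=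
        mul_le_mul_of_nonneg_right hvar (Real.rpow_nonneg hW0 _)

section Main

variable {g φ : ℝ → ℝ} {t₀ α : ℝ} {h : ℝ → ℝ}

set_option maxHeartbeats 1000000 in
lemma main_partition (hp : 1 ≤ p) (hI : I.OrdConnected) (ht₀ : t₀ ∈ I)
    (hh : BddAbove (varSums p h I))
    (hgdef : ∀ t ∈ I, g t = α + ∫ x in t₀..t, h x)
    (hφ : BddAbove (varSums p φ (g '' I)))
    {N : ℕ} {t : ℕ → ℝ} (hmem : ∀ k ≤ N, t k ∈ I) (hstrict : ∀ k < N, t k < t (k + 1)) :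
    ∑ k ∈ Finset.range N, |φ (g (t (k + 1))) - φ (g (t k))| ^ p * |h (t k)| ^ p ≤
      nuVar p φ (g '' I) ^ p * (supAbs h I ^ p + 2 * nuVar p h I ^ p) := by
  classical
  have hIne : I.Nonempty := ⟨t₀, ht₀⟩
  have hgne : (g '' I).Nonempty := ⟨g t₀, t₀, ht₀, rfl⟩
  have hV0 : 0 ≤ nuVar p φ (g '' I) := nuVar_nonneg hp hgne hφ
  have hD0 : 0 ≤ nuVar p h I := nuVar_nonneg hp hIne hh
  have hH0 : 0 ≤ supAbs h I := supAbs_nonneg hp hh ht₀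
  have hRHS0 : 0 ≤ nuVar p φ (g '' I) ^ p * (supAbs h I ^ p + 2 * nuVar p h I ^ p) :=
    mul_nonneg (Real.rpow_nonneg hV0 p) (add_nonneg (Real.rpow_nonneg hH0 p)
      (mul_nonneg two_pos.le (Real.rpow_nonneg hD0 p)))
  rcases Nat.eq_zero_or_pos N with rfl | hN
  · simpa using hRHS0
  set x : ℕ → ℝ := fun k => g (t k) with hx
  set r : ℕ → ℕ := runIdx x N with hr
  have hr0 : r 0 = 0 := rfl
  have hrle : ∀ j, r j ≤ N := runIdx_le x N
  have hrmono : ∀ j1 j2, j1 ≤ j2 → r j1 ≤ r j2 := fun _ _ hj => runIdx_mono x N hj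
  have hrsucc : ∀ j, r j ≤ r (j + 1) := runIdx_mono_succ x N
  have hrsuccdef : ∀ j, r (j + 1) = nextRun x N (r j) := fun j => runIdx_succ x N j
  have hrmonoSeq : ∀ j, r j < N → MonoSeq x (r j) (r (j + 1)) := fun j hj => by
    rw [hrsuccdef j]; exact (nextRun_spec x N (r j) hj).2.2.1
  have hrmax : ∀ j, r j < N → ∀ e, e ≤ N → r j < e → MonoSeq x (r j) e → e ≤ r (j + 1) :=
    fun j hj e he hlt hm => by
      rw [hrsuccdef j]; exact (nextRun_spec x N (r j) hj).2.2.2 e he hlt hm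
  have hrlt : ∀ j, r j < N → r j < r (j + 1) := fun j hj => by
    rw [hrsuccdef j]; exact (nextRun_spec x N (r j) hj).1
  have hxmem : ∀ k, k ≤ N → x k ∈ g '' I := fun k hk => ⟨t k, hmem k hk, rfl⟩
  have htmono := t_mono hstrict
  set c : ℕ → ℝ := fun k => |φ (x (k + 1)) - φ (x k)| ^ p * |h (t k)| ^ p with hc
  show ∑ k ∈ Finset.range N, c k ≤ _
  set P : ℕ → Prop := fun j =>
    1 ≤ j ∧ j < N ∧ ∃ k, r j ≤ k ∧ k < r (j + 1) ∧ x k ≠ x (k + 1) with hP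
  have hcore : ∀ j, P j → ∃ w aa bb : ℝ,
      (∀ k, r j ≤ k → k < r (j + 1) → x k ≠ x (k + 1) → |h (t k)| ≤ w) ∧ 0 ≤ w ∧
      aa ∈ I ∧ bb ∈ I ∧ aa < bb ∧ t (r (j - 1)) ≤ aa ∧ bb ≤ t (r (j + 1)) ∧
      w ≤ |h bb - h aa| := by
    intro j hPj
    obtain ⟨hj1, hjN, k0, hk00, hk01, hk02⟩ := hPj
    have hrj1le : r (j + 1) ≤ N := hrle (j + 1)
    have hrjN : r j < N := by omega
    have hj1' : j - 1 + 1 = j := by omega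
    have hrj1N : r (j - 1) < N := by
      have h1 := hrmono (j - 1) j (by omega)
      omega
    have hmono_prev : MonoSeq x (r (j - 1)) (r j) := by
      have h1 := hrmonoSeq (j - 1) hrj1N
      rwa [hj1'] at h1
    have hmax_prev : ∀ e, e ≤ N → r (j - 1) < e → MonoSeq x (r (j - 1)) e → e ≤ r j := by
      intro e he hlt hm
      have h1 := hrmax (j - 1) hrj1N e he hlt hm
      rwa [hj1'] at h1
    have hmono_j : MonoSeq x (r j) (r (j + 1)) := hrmonoSeq j hrjN
    have hrprevle : r (j - 1) ≤ r j := hrmono (j - 1) j (by omega)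
    -- previous block has a strict step
    have hprev : ∃ k', r (j - 1) ≤ k' ∧ k' < r j ∧ x k' ≠ x (k' + 1) := by
      by_contra hcon
      push_neg at hcon
      have hconst : ∀ d, r (j - 1) + d ≤ r j → x (r (j - 1) + d) = x (r (j - 1)) := by
        intro d
        induction d with
        | zero => intro _; rfl
        | succ d ih =>
          intro hd
          have h1 := ih (by omega)
          have h2 := hcon (r (j - 1) + d) (by omega) (by omega)
          rw [show r (j - 1) + (d + 1) = (r (j - 1) + d) + 1 from rfl, ← h2, h1]
      have hconst' : ∀ i, r (j - 1) ≤ i → i ≤ r j → x i = x (r (j - 1)) := by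
        intro i hi1 hi2
        have h1 := hconst (i - r (j - 1)) (by omega)
        rwa [show r (j - 1) + (i - r (j - 1)) = i from by omega] at h1
      have hm : MonoSeq x (r (j - 1)) (r j + 1) := by
        rcases le_total (x (r (j - 1))) (x (r j + 1)) with hcmp | hcmp
        · left
          intro i1 j1 h1 h2 h3
          by_cases hj1'' : j1 = r j + 1
          · subst hj1''
            by_cases hi1 : i1 = r j + 1
            · rw [hi1]
            · rw [hconst' i1 h1 (by omega)]; exact hcmp
          · rw [hconst' i1 h1 (by omega), hconst' j1 (by omega) (by omega)]
        · right
          intro i1 j1 h1 h2 h3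
          by_cases hj1'' : j1 = r j + 1
          · subst hj1''
            by_cases hi1 : i1 = r j + 1
            · rw [hi1]
            · rw [hconst' i1 h1 (by omega)]; exact hcmp
          · rw [hconst' i1 h1 (by omega), hconst' j1 (by omega) (by omega)]
      have := hmax_prev (r j + 1) (by omega) (by omega) hm
      omega
    obtain ⟨k', hk'0, hk'1, hk'2⟩ := hprev
    -- maximal-weight strict step in block j
    obtain ⟨ks, hksmem, hksmax⟩ := Finset.exists_max_image
      ((Finset.Ico (r j) (r (j + 1))).filter (fun k => x k ≠ x (k + 1))) (fun k => |h (t k)|)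
      ⟨k0, Finset.mem_filter.mpr ⟨Finset.mem_Ico.mpr ⟨hk00, hk01⟩, hk02⟩⟩
    rw [Finset.mem_filter, Finset.mem_Ico] at hksmem
    obtain ⟨⟨hks0, hks1⟩, hks2⟩ := hksmem
    have hwbound : ∀ k, r j ≤ k → k < r (j + 1) → x k ≠ x (k + 1) → |h (t k)| ≤ |h (t ks)| :=
      fun k h1 h2 h3 => hksmax k (Finset.mem_filter.mpr ⟨Finset.mem_Ico.mpr ⟨h1, h2⟩, h3⟩)
    have hksN : ks < N := by omega
    have hk'N : k' < N := by omega
    have hk'le : k' + 1 ≤ ks := by omega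
    rcases lt_or_gt_of_ne hks2 with hup | hdown
    · -- block j goes up at ks, so previous block goes down at k'
      have hdownprev : x (k' + 1) < x k' := by
        rcases lt_or_gt_of_ne hk'2 with hupprev | hgt
        swap
        · exact hgt
        exfalso
        have hinc_prev : ∀ i1 j1, r (j - 1) ≤ i1 → i1 ≤ j1 → j1 ≤ r j → x i1 ≤ x j1 := by
          rcases hmono_prev with hA | hA
          · exact hA
          · exfalso
            have := hA k' (k' + 1) hk'0 (by omega) (by omega)
            linarith
        have hinc_j : ∀ i1 j1, r j ≤ i1 → i1 ≤ j1 → j1 ≤ r (j + 1) → x i1 ≤ x j1 := by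
          rcases hmono_j with hA | hA
          · exact hA
          · exfalso
            have := hA ks (ks + 1) hks0 (by omega) (by omega)
            linarith
        have hm : MonoSeq x (r (j - 1)) (r j + 1) := by
          left
          intro i1 j1 h1 h2 h3
          by_cases hj1'' : j1 ≤ r j
          · exact hinc_prev i1 j1 h1 h2 hj1''
          · by_cases hi1 : r j ≤ i1
            · exact hinc_j i1 j1 hi1 h2 (by omega)
            · exact le_trans (hinc_prev i1 (r j) h1 (by omega) le_rfl)
                (hinc_j (r j) j1 le_rfl (by omega) (by omega))
        have := hmax_prev (r j + 1) (by omega) (by omega) hm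
        omega
      obtain ⟨sm, hsmI, hsm1, hsm2, hsmneg⟩ := exists_neg_of_lt hp hh hI ht₀ hgdef
        (hmem k' hk'N.le) (hmem (k' + 1) hk'N) (hstrict k' hk'N) hdownprev
      obtain ⟨sp, hspI, hsp1, hsp2, hsppos⟩ := exists_pos_of_lt hp hh hI ht₀ hgdef
        (hmem ks hksN.le) (hmem (ks + 1) hksN) (hstrict ks hksN) hup
      by_cases hsign : 0 ≤ h (t ks)
      · refine ⟨|h (t ks)|, sm, t ks, hwbound, abs_nonneg _, hsmI, hmem ks hksN.le,
          ?_, ?_, ?_, ?_⟩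
        · have hle : sm ≤ t ks := le_trans hsm2 (htmono (k' + 1) ks hk'le hksN.le)
          rcases eq_or_lt_of_le hle with heq | hlt
          · exfalso; rw [heq] at hsmneg; linarith
          · exact hlt
        · exact le_trans (htmono (r (j - 1)) k' (by omega) hk'N.le) hsm1
        · exact htmono ks (r (j + 1)) (by omega) hrj1le
        · rw [abs_of_nonneg hsign, abs_of_nonneg (by linarith)]
          linarith
      · push_neg at hsign
        refine ⟨|h (t ks)|, t ks, sp, hwbound, abs_nonneg _, hmem ks hksN.le, hspI,
          ?_, ?_, ?_, ?_⟩
        · rcases eq_or_lt_of_le hsp1 with heq | hlt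
          · exfalso; rw [← heq] at hsppos; linarith
          · exact hlt
        · exact htmono (r (j - 1)) ks (by omega) hksN.le
        · exact le_trans hsp2 (htmono (ks + 1) (r (j + 1)) (by omega) hrj1le)
        · rw [abs_of_neg hsign, abs_of_nonneg (by linarith)]
          linarith
    · -- block j goes down at ks, so previous block goes up at k'
      have hupprev : x k' < x (k' + 1) := by
        rcases lt_or_gt_of_ne hk'2 with hlt | hdownprev
        · exact hlt
        exfalso
        have hdec_prev : ∀ i1 j1, r (j - 1) ≤ i1 → i1 ≤ j1 → j1 ≤ r j → x j1 ≤ x i1 := by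
          rcases hmono_prev with hA | hA
          · exfalso
            have := hA k' (k' + 1) hk'0 (by omega) (by omega)
            linarith
          · exact hA
        have hdec_j : ∀ i1 j1, r j ≤ i1 → i1 ≤ j1 → j1 ≤ r (j + 1) → x j1 ≤ x i1 := by
          rcases hmono_j with hA | hA
          · exfalso
            have := hA ks (ks + 1) hks0 (by omega) (by omega)
            linarith
          · exact hA
        have hm : MonoSeq x (r (j - 1)) (r j + 1) := by
          right
          intro i1 j1 h1 h2 h3
          by_cases hj1'' : j1 ≤ r j
          · exact hdec_prev i1 j1 h1 h2 hj1''
          · by_cases hi1 : r j ≤ i1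
            · exact hdec_j i1 j1 hi1 h2 (by omega)
            · exact le_trans (hdec_j (r j) j1 le_rfl (by omega) (by omega))
                (hdec_prev i1 (r j) h1 (by omega) le_rfl)
        have := hmax_prev (r j + 1) (by omega) (by omega) hm
        omega
      obtain ⟨sp, hspI, hsp1, hsp2, hsppos⟩ := exists_pos_of_lt hp hh hI ht₀ hgdef
        (hmem k' hk'N.le) (hmem (k' + 1) hk'N) (hstrict k' hk'N) hupprev
      obtain ⟨sm, hsmI, hsm1, hsm2, hsmneg⟩ := exists_neg_of_lt hp hh hI ht₀ hgdef
        (hmem ks hksN.le) (hmem (ks + 1) hksN) (hstrict ks hksN) hdown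
      by_cases hsign : 0 ≤ h (t ks)
      · refine ⟨|h (t ks)|, t ks, sm, hwbound, abs_nonneg _, hmem ks hksN.le, hsmI,
          ?_, ?_, ?_, ?_⟩
        · rcases eq_or_lt_of_le hsm1 with heq | hlt
          · exfalso; rw [← heq] at hsmneg; linarith
          · exact hlt
        · exact htmono (r (j - 1)) ks (by omega) hksN.le
        · exact le_trans hsm2 (htmono (ks + 1) (r (j + 1)) (by omega) hrj1le)
        · rw [abs_of_nonneg hsign, abs_of_nonpos (by linarith)]
          linarith
      · push_neg at hsign
        refine ⟨|h (t ks)|, sp, t ks, hwbound, abs_nonneg _, hspI, hmem ks hksN.le,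
          ?_, ?_, ?_, ?_⟩
        · have hle : sp ≤ t ks := le_trans hsp2 (htmono (k' + 1) ks hk'le hksN.le)
          rcases eq_or_lt_of_le hle with heq | hlt
          · exfalso; rw [heq] at hsppos; linarith
          · exact hlt
        · exact le_trans (htmono (r (j - 1)) k' (by omega) hk'N.le) hsp1
        · exact htmono ks (r (j + 1)) (by omega) hrj1le
        · rw [abs_of_neg hsign, abs_of_nonpos (by linarith)]
          linarith
  have hcore' : ∀ j, ∃ w aa bb : ℝ, P j →
      ((∀ k, r j ≤ k → k < r (j + 1) → x k ≠ x (k + 1) → |h (t k)| ≤ w) ∧ 0 ≤ w ∧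
      aa ∈ I ∧ bb ∈ I ∧ aa < bb ∧ t (r (j - 1)) ≤ aa ∧ bb ≤ t (r (j + 1)) ∧
      w ≤ |h bb - h aa|) := by
    intro j
    by_cases hPj : P j
    · obtain ⟨w, aa, bb, hw⟩ := hcore j hPj
      exact ⟨w, aa, bb, fun _ => hw⟩
    · exact ⟨0, 0, 0, fun hPj' => absurd hPj' hPj⟩
  choose W AA BB hWp using hcore'
  set W' : ℕ → ℝ := fun j => if P j then W j else 0 with hW'
  have hSj : ∀ j, 1 ≤ j → j < N → ∑ k ∈ Finset.Ico (r j) (r (j + 1)), c k ≤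
      nuVar p φ (g '' I) ^ p * W' j ^ p := by
    intro j hj1 hjN
    by_cases hPj : P j
    · have hprops := hWp j hPj
      have hW'j : W' j = W j := by rw [hW']; simp only [if_pos hPj]
      rw [hW'j]
      obtain ⟨k0, hk00, hk01, hk02⟩ := hPj.2.2
      have hrjN : r j < N := by have := hrle (j + 1); omega
      exact block_sum_le hp hφ (hrsucc j) (hrle (j + 1)) hxmem (hrmonoSeq j hrjN)
        hprops.2.1 (fun k => abs_nonneg _) hprops.1
    · have hW'j : W' j = 0 := by rw [hW']; simp only [if_neg hPj]
      rw [hW'j]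
      have hflat : ∀ k, r j ≤ k → k < r (j + 1) → x k = x (k + 1) := by
        intro k hk1 hk2
        by_contra hne
        exact hPj ⟨hj1, hjN, k, hk1, hk2, hne⟩
      have hz : ∀ k ∈ Finset.Ico (r j) (r (j + 1)), c k = 0 := by
        intro k hk
        rw [Finset.mem_Ico] at hk
        have hflk := hflat k hk.1 hk.2
        show |φ (x (k + 1)) - φ (x k)| ^ p * |h (t k)| ^ p = 0
        rw [hflk]
        simp [Real.zero_rpow (hp_ne hp)]
      rw [Finset.sum_eq_zero hz, Real.zero_rpow (hp_ne hp), mul_zero]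
  have hS0 : ∑ k ∈ Finset.Ico (r 0) (r 1), c k ≤
      nuVar p φ (g '' I) ^ p * supAbs h I ^ p := by
    have hr0N : r 0 < N := by rw [hr0]; exact hN
    exact block_sum_le hp hφ (hrsucc 0) (hrle 1) hxmem (hrmonoSeq 0 hr0N) hH0
      (fun k => abs_nonneg _)
      (fun k hk1 hk2 _ => le_supAbs hp hh ht₀ (hmem k (by have := hrle (0 + 1); omega)))
  have htotal : ∑ k ∈ Finset.range N, c k =
      (∑ k ∈ Finset.Ico (r 0) (r 1), c k) +
        ∑ j ∈ Finset.Ico 1 N, ∑ k ∈ Finset.Ico (r j) (r (j + 1)), c k := by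
    have hclaim : ∀ m, ∑ j ∈ Finset.range m, (∑ k ∈ Finset.Ico (r j) (r (j + 1)), c k) =
        ∑ k ∈ Finset.Ico 0 (r m), c k := by
      intro m
      induction m with
      | zero => rw [hr0]; simp
      | succ m ih =>
        rw [Finset.sum_range_succ, ih,
          Finset.sum_Ico_consecutive c (Nat.zero_le _) (hrsucc m)]
    have hrN : r N = N := runIdx_last x N
    have h1 : ∑ j ∈ Finset.range N, (∑ k ∈ Finset.Ico (r j) (r (j + 1)), c k) =
        ∑ k ∈ Finset.range N, c k := by
      rw [hclaim N, hrN, Finset.range_eq_Ico]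
    rw [← h1, Finset.range_eq_Ico,
      ← Finset.sum_Ico_consecutive (fun j => ∑ k ∈ Finset.Ico (r j) (r (j + 1)), c k)
        (Nat.zero_le 1) hN]
    congr 1
    rw [← Finset.range_eq_Ico, Finset.sum_range_one]
  have hQbound : ∀ par : ℕ,
      ∑ j ∈ (Finset.Ico 1 N).filter (fun j => P j ∧ j % 2 = par), W j ^ p ≤
        nuVar p h I ^ p := by
    intro par
    set Qp := (Finset.Ico 1 N).filter (fun j => P j ∧ j % 2 = par) with hQp
    have hQpP : ∀ j ∈ Qp, P j ∧ j % 2 = par ∧ 1 ≤ j ∧ j < N := by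
      intro j hj
      rw [hQp, Finset.mem_filter, Finset.mem_Ico] at hj
      tauto
    set M := Qp.card with hM
    set e := Qp.orderEmbOfFin hM.symm with he
    have hemem : ∀ i : Fin M, (e i : ℕ) ∈ Qp := fun i => Qp.orderEmbOfFin_mem hM.symm i
    set a' : ℕ → ℝ := fun i => if hi : i < M then AA (e ⟨i, hi⟩) else t₀ with ha'
    set b' : ℕ → ℝ := fun i => if hi : i < M then BB (e ⟨i, hi⟩) else t₀ with hb'
    have hprops : ∀ i : Fin M,
        (∀ k, r (e i) ≤ k → k < r ((e i) + 1) → x k ≠ x (k + 1) → |h (t k)| ≤ W (e i)) ∧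
        0 ≤ W (e i) ∧ AA (e i) ∈ I ∧ BB (e i) ∈ I ∧ AA (e i) < BB (e i) ∧
        t (r ((e i) - 1)) ≤ AA (e i) ∧ BB (e i) ≤ t (r ((e i) + 1)) ∧
        W (e i) ≤ |h (BB (e i)) - h (AA (e i))| :=
      fun i => hWp (e i) (hQpP (e i) (hemem i)).1
    have hkey := pairs_sum_le hp hh hIne (M := M) (a := a') (b := b')
      (fun i hi => by
        rw [ha']; simp only [dif_pos hi]
        exact (hprops ⟨i, hi⟩).2.2.1)
      (fun i hi => by
        rw [hb']; simp only [dif_pos hi]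
        exact (hprops ⟨i, hi⟩).2.2.2.1)
      (fun i hi => by
        rw [ha', hb']; simp only [dif_pos hi]
        exact (hprops ⟨i, hi⟩).2.2.2.2.1)
      (fun i hi1 => by
        have hi : i < M := by omega
        rw [ha', hb']; simp only [dif_pos hi, dif_pos hi1]
        have hij : (e ⟨i, hi⟩ : ℕ) < e ⟨i + 1, hi1⟩ := by
          have := e.strictMono (show (⟨i, hi⟩ : Fin M) < ⟨i + 1, hi1⟩ from by
            rw [Fin.mk_lt_mk]; omega)
          exact this
        have hpar1 := (hQpP _ (hemem ⟨i, hi⟩)).2.1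
        have hpar2 := (hQpP _ (hemem ⟨i + 1, hi1⟩)).2.1
        have hgap : (e ⟨i, hi⟩ : ℕ) + 2 ≤ e ⟨i + 1, hi1⟩ := by omega
        have h1 : BB (e ⟨i, hi⟩) ≤ t (r ((e ⟨i, hi⟩ : ℕ) + 1)) :=
          (hprops ⟨i, hi⟩).2.2.2.2.2.2.1
        have h2 : t (r ((e ⟨i + 1, hi1⟩ : ℕ) - 1)) ≤ AA (e ⟨i + 1, hi1⟩) :=
          (hprops ⟨i + 1, hi1⟩).2.2.2.2.2.1
        refine le_trans h1 (le_trans ?_ h2)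
        exact htmono _ _ (hrmono _ _ (by omega)) (hrle _))
    have hsum_eq : ∑ i ∈ Finset.range M, (if hi : i < M then W (e ⟨i, hi⟩) ^ p else 0) =
        ∑ j ∈ Qp, W j ^ p := by
      refine Finset.sum_bij (fun i hi => (e ⟨i, Finset.mem_range.mp hi⟩ : ℕ)) ?_ ?_ ?_ ?_
      · intro a ha; exact hemem _
      · intro a1 ha1 a2 ha2 hee
        have h1 := e.injective hee
        have h2 := congrArg Fin.val h1
        simpa using h2
      · intro j hj
        have hj' : j ∈ Set.range e := by
          rw [he, Finset.range_orderEmbOfFin]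
          exact hj
        obtain ⟨i, hi⟩ := hj'
        exact ⟨i.val, Finset.mem_range.mpr i.2, by simpa using hi⟩
      · intro a ha
        rw [dif_pos (Finset.mem_range.mp ha)]
    rw [← hsum_eq]
    calc ∑ i ∈ Finset.range M, (if hi : i < M then W (e ⟨i, hi⟩) ^ p else 0)
        ≤ ∑ i ∈ Finset.range M, |h (b' i) - h (a' i)| ^ p := by
          refine Finset.sum_le_sum fun i hi => ?_
          have hiM : i < M := Finset.mem_range.mp hi
          rw [dif_pos hiM, ha', hb']
          simp only [dif_pos hiM]
          exact Real.rpow_le_rpow (hprops ⟨i, hiM⟩).2.1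
            (hprops ⟨i, hiM⟩).2.2.2.2.2.2.2 (hp_pos hp).le
      _ ≤ nuVar p h I ^ p := hkey
  have hW'sum : ∑ j ∈ Finset.Ico 1 N, W' j ^ p ≤ 2 * nuVar p h I ^ p := by
    have h0 : ∑ j ∈ Finset.Ico 1 N, W' j ^ p =
        ∑ j ∈ (Finset.Ico 1 N).filter (fun j => P j), W j ^ p := by
      rw [← Finset.sum_filter_add_sum_filter_not (Finset.Ico 1 N) P (fun j => W' j ^ p)]
      have hz : ∑ j ∈ (Finset.Ico 1 N).filter (fun j => ¬ P j), W' j ^ p = 0 :=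
        Finset.sum_eq_zero fun j hj => by
          rw [Finset.mem_filter] at hj
          rw [hW']
          simp only [if_neg hj.2]
          exact Real.zero_rpow (hp_ne hp)
      rw [hz, add_zero]
      refine Finset.sum_congr rfl fun j hj => ?_
      rw [Finset.mem_filter] at hj
      rw [hW']; simp only [if_pos hj.2]
    have h1 : ∑ j ∈ (Finset.Ico 1 N).filter (fun j => P j), W j ^ p =
        (∑ j ∈ (Finset.Ico 1 N).filter (fun j => P j ∧ j % 2 = 0), W j ^ p) +
        (∑ j ∈ (Finset.Ico 1 N).filter (fun j => P j ∧ j % 2 = 1), W j ^ p) := by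
      rw [← Finset.sum_filter_add_sum_filter_not ((Finset.Ico 1 N).filter (fun j => P j))
        (fun j => j % 2 = 0) (fun j => W j ^ p)]
      rw [Finset.filter_filter, Finset.filter_filter]
      congr 1
      refine Finset.sum_congr (Finset.filter_congr fun j _ => ?_) fun _ _ => rfl
      constructor
      · rintro ⟨h1, h2⟩; exact ⟨h1, by omega⟩
      · rintro ⟨h1, h2⟩; exact ⟨h1, by omega⟩
    rw [h0, h1]
    have := hQbound 0
    have := hQbound 1
    linarith
  calc ∑ k ∈ Finset.range N, c k
      = (∑ k ∈ Finset.Ico (r 0) (r 1), c k) +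
        ∑ j ∈ Finset.Ico 1 N, ∑ k ∈ Finset.Ico (r j) (r (j + 1)), c k := htotal
    _ ≤ nuVar p φ (g '' I) ^ p * supAbs h I ^ p +
        ∑ j ∈ Finset.Ico 1 N, nuVar p φ (g '' I) ^ p * W' j ^ p := by
        refine add_le_add hS0 (Finset.sum_le_sum fun j hj => ?_)
        rw [Finset.mem_Ico] at hj
        exact hSj j hj.1 hj.2
    _ = nuVar p φ (g '' I) ^ p * supAbs h I ^ p +
        nuVar p φ (g '' I) ^ p * ∑ j ∈ Finset.Ico 1 N, W' j ^ p := by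
        rw [Finset.mul_sum]
    _ ≤ nuVar p φ (g '' I) ^ p * supAbs h I ^ p +
        nuVar p φ (g '' I) ^ p * (2 * nuVar p h I ^ p) :=
        add_le_add_right (mul_le_mul_of_nonneg_left hW'sum (Real.rpow_nonneg hV0 _)) _
    _ = nuVar p φ (g '' I) ^ p * (supAbs h I ^ p + 2 * nuVar p h I ^ p) := by ring

end Main

lemma real_rpow_add_rpow_le_add (hp : 1 ≤ p) {a b : ℝ} (ha : 0 ≤ a) (hb : 0 ≤ b) :
    (a ^ p + b ^ p) ^ (1 / p) ≤ a + b := by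
  have h1 := NNReal.rpow_add_rpow_le_add (⟨a, ha⟩ : NNReal) (⟨b, hb⟩ : NNReal) hp
  have h2 := NNReal.coe_le_coe.mpr h1
  push_cast [NNReal.coe_rpow] at h2
  exact h2

end BLSAux

open BLSAux in
/-- Basic inequality of Bourdaud–Lanza de Cristoforis–Sickel:
`ν_p((f∘g)·h, I) ≤ ν_p(f,g(I))·(sup_I|h| + 2^{1/p} ν_p(h,I)) + ν_p(h,I)·sup_{g(I)}|f|`. -/
theorem stmt9 (p : ℝ) (hp : 1 ≤ p) (I : Set ℝ) (hI : I.OrdConnected)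
    (t₀ : ℝ) (ht₀ : t₀ ∈ I) (α : ℝ) (h g f : ℝ → ℝ)
    (hh : BddAbove (varSums p h I))
    (hgdef : ∀ t ∈ I, g t = α + ∫ x in t₀..t, h x)
    (hf : BddAbove (varSums p f (g '' I))) :
    BddAbove (varSums p (fun t => f (g t) * h t) I) ∧
      nuVar p (fun t => f (g t) * h t) I ≤
        nuVar p f (g '' I) * (supAbs h I + (2 : ℝ) ^ (1 / p) * nuVar p h I) +
          nuVar p h I * supAbs f (g '' I) := by
  classical
  have hIne : I.Nonempty := ⟨t₀, ht₀⟩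
  have hgne : (g '' I).Nonempty := ⟨g t₀, t₀, ht₀, rfl⟩
  have hV0 : 0 ≤ nuVar p f (g '' I) := nuVar_nonneg hp hgne hf
  have hD0 : 0 ≤ nuVar p h I := nuVar_nonneg hp hIne hh
  have hH0 : 0 ≤ supAbs h I := supAbs_nonneg hp hh ht₀
  have hF0 : 0 ≤ supAbs f (g '' I) := supAbs_nonneg hp hf ⟨t₀, ht₀, rfl⟩
  set RHS : ℝ := nuVar p f (g '' I) * (supAbs h I + (2 : ℝ) ^ (1 / p) * nuVar p h I) +
      nuVar p h I * supAbs f (g '' I) with hRHS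
  have hub : ∀ S ∈ varSums p (fun t => f (g t) * h t) I, S ≤ RHS := by
    rintro S ⟨N, t, hmem, hstrict, rfl⟩
    set A : ℕ → ℝ := fun k => |f (g (t (k + 1)))| * |h (t (k + 1)) - h (t k)| with hA
    set B : ℕ → ℝ := fun k => |f (g (t (k + 1))) - f (g (t k))| * |h (t k)| with hB
    have hAnn : ∀ k, 0 ≤ A k := fun k => mul_nonneg (abs_nonneg _) (abs_nonneg _)
    have hBnn : ∀ k, 0 ≤ B k := fun k => mul_nonneg (abs_nonneg _) (abs_nonneg _)
    have hptwise : ∀ k, |f (g (t (k + 1))) * h (t (k + 1)) - f (g (t k)) * h (t k)| ≤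
        A k + B k := by
      intro k
      have hkey : f (g (t (k + 1))) * h (t (k + 1)) - f (g (t k)) * h (t k) =
          f (g (t (k + 1))) * (h (t (k + 1)) - h (t k)) +
            (f (g (t (k + 1))) - f (g (t k))) * h (t k) := by ring
      rw [hkey]
      refine le_trans (abs_add_le _ _) ?_
      rw [hA, hB]
      simp only [abs_mul]
      exact le_rfl
    have hsum1 : ∑ k ∈ Finset.range N,
        |f (g (t (k + 1))) * h (t (k + 1)) - f (g (t k)) * h (t k)| ^ p ≤
        ∑ k ∈ Finset.range N, |A k + B k| ^ p := by
      refine Finset.sum_le_sum fun k _ => ?_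
      have h1 : |A k + B k| = A k + B k := abs_of_nonneg (add_nonneg (hAnn k) (hBnn k))
      rw [h1]
      exact Real.rpow_le_rpow (abs_nonneg _) (hptwise k) (hp_pos hp).le
    have hminkowski := Real.Lp_add_le (Finset.range N) A B hp
    -- term A
    have htermA : (∑ k ∈ Finset.range N, |A k| ^ p) ^ (1 / p) ≤
        supAbs f (g '' I) * nuVar p h I := by
      have h1 : ∑ k ∈ Finset.range N, |A k| ^ p ≤
          supAbs f (g '' I) ^ p * nuVar p h I ^ p := by
        have h2 : ∀ k ∈ Finset.range N, |A k| ^ p ≤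
            supAbs f (g '' I) ^ p * |h (t (k + 1)) - h (t k)| ^ p := by
          intro k hk
          rw [Finset.mem_range] at hk
          rw [abs_of_nonneg (hAnn k), hA]
          simp only []
          rw [Real.mul_rpow (abs_nonneg _) (abs_nonneg _)]
          refine mul_le_mul_of_nonneg_right ?_ (Real.rpow_nonneg (abs_nonneg _) _)
          exact Real.rpow_le_rpow (abs_nonneg _)
            (le_supAbs hp hf ⟨t₀, ht₀, rfl⟩ ⟨t (k + 1), hmem (k + 1) hk, rfl⟩) (hp_pos hp).le
        calc ∑ k ∈ Finset.range N, |A k| ^ p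
            ≤ ∑ k ∈ Finset.range N, supAbs f (g '' I) ^ p * |h (t (k + 1)) - h (t k)| ^ p :=
              Finset.sum_le_sum h2
          _ = supAbs f (g '' I) ^ p * ∑ k ∈ Finset.range N, |h (t (k + 1)) - h (t k)| ^ p := by
              rw [Finset.mul_sum]
          _ ≤ supAbs f (g '' I) ^ p * nuVar p h I ^ p :=
              mul_le_mul_of_nonneg_left (sum_pow_le_nuVar_pow hp hh hmem hstrict)
                (Real.rpow_nonneg hF0 _)
      calc (∑ k ∈ Finset.range N, |A k| ^ p) ^ (1 / p)
          ≤ (supAbs f (g '' I) ^ p * nuVar p h I ^ p) ^ (1 / p) :=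
            Real.rpow_le_rpow (Finset.sum_nonneg fun k _ => Real.rpow_nonneg (abs_nonneg _) _)
              h1 (by positivity)
        _ = supAbs f (g '' I) * nuVar p h I := by
            rw [Real.mul_rpow (Real.rpow_nonneg hF0 _) (Real.rpow_nonneg hD0 _),
              one_div, Real.rpow_rpow_inv hF0 (hp_ne hp), Real.rpow_rpow_inv hD0 (hp_ne hp)]
    -- term B
    have htermB : (∑ k ∈ Finset.range N, |B k| ^ p) ^ (1 / p) ≤
        nuVar p f (g '' I) * (supAbs h I + (2 : ℝ) ^ (1 / p) * nuVar p h I) := by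
      have h1 : ∑ k ∈ Finset.range N, |B k| ^ p ≤
          nuVar p f (g '' I) ^ p * (supAbs h I ^ p + 2 * nuVar p h I ^ p) := by
        have h2 : ∀ k ∈ Finset.range N, |B k| ^ p =
            |f (g (t (k + 1))) - f (g (t k))| ^ p * |h (t k)| ^ p := by
          intro k _
          rw [abs_of_nonneg (hBnn k), hB]
          simp only []
          rw [Real.mul_rpow (abs_nonneg _) (abs_nonneg _)]
        rw [Finset.sum_congr rfl h2]
        exact main_partition hp hI ht₀ hh hgdef hf hmem hstrict
      have h3 : (nuVar p f (g '' I) ^ p * (supAbs h I ^ p + 2 * nuVar p h I ^ p)) ^ (1 / p) ≤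
          nuVar p f (g '' I) * (supAbs h I + (2 : ℝ) ^ (1 / p) * nuVar p h I) := by
        have h4 : 2 * nuVar p h I ^ p = ((2 : ℝ) ^ (1 / p) * nuVar p h I) ^ p := by
          rw [Real.mul_rpow (Real.rpow_nonneg two_pos.le _) hD0, ← Real.rpow_mul two_pos.le,
            one_div_mul_cancel (hp_ne hp), Real.rpow_one]
        have h5 : 0 ≤ supAbs h I ^ p + 2 * nuVar p h I ^ p :=
          add_nonneg (Real.rpow_nonneg hH0 _) (mul_nonneg two_pos.le (Real.rpow_nonneg hD0 _))
        rw [Real.mul_rpow (Real.rpow_nonneg hV0 _) h5, one_div,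
          Real.rpow_rpow_inv hV0 (hp_ne hp)]
        refine mul_le_mul_of_nonneg_left ?_ hV0
        rw [h4, ← one_div]
        exact real_rpow_add_rpow_le_add hp hH0
          (mul_nonneg (Real.rpow_nonneg two_pos.le _) hD0)
      calc (∑ k ∈ Finset.range N, |B k| ^ p) ^ (1 / p)
          ≤ (nuVar p f (g '' I) ^ p * (supAbs h I ^ p + 2 * nuVar p h I ^ p)) ^ (1 / p) :=
            Real.rpow_le_rpow (Finset.sum_nonneg fun k _ => Real.rpow_nonneg (abs_nonneg _) _)
              h1 (by positivity)
        _ ≤ _ := h3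
    calc (∑ k ∈ Finset.range N,
          |f (g (t (k + 1))) * h (t (k + 1)) - f (g (t k)) * h (t k)| ^ p) ^ (1 / p)
        ≤ (∑ k ∈ Finset.range N, |A k + B k| ^ p) ^ (1 / p) :=
          Real.rpow_le_rpow (Finset.sum_nonneg fun k _ => Real.rpow_nonneg (abs_nonneg _) _)
            hsum1 (by positivity)
      _ ≤ (∑ k ∈ Finset.range N, |A k| ^ p) ^ (1 / p) +
          (∑ k ∈ Finset.range N, |B k| ^ p) ^ (1 / p) := hminkowski
      _ ≤ supAbs f (g '' I) * nuVar p h I +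
          nuVar p f (g '' I) * (supAbs h I + (2 : ℝ) ^ (1 / p) * nuVar p h I) :=
          add_le_add htermA htermB
      _ = RHS := by rw [hRHS]; ring
  have hbdd : BddAbove (varSums p (fun t => f (g t) * h t) I) := ⟨RHS, fun S hS => hub S hS⟩
  refine ⟨hbdd, ?_⟩
  exact csSup_le ⟨0, zero_mem_varSums hp _ hIne⟩ hub
end
end

section
/- Under the hypotheses of the basic inequality (p ∈ [1,∞), h ∈ 𝒱_p(I), g a primitive of h, f ∈ 𝒱_p(g(I))), one has the norm inequality ‖(f∘g)·h‖_{𝒱_p(I)} ≤ 2^{1/p} ‖f‖_{𝒱_p(g(I))} ‖h‖_{𝒱_p(I)}. -/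
open Set Finset MeasureTheory Real

noncomputable section

namespace PV

/-- p-th power partition sums (no outer 1/p power). -/
def pSums (p : ℝ) (u : ℝ → ℝ) (A : Set ℝ) : Set ℝ :=
  {S | ∃ (N : ℕ) (t : ℕ → ℝ), (∀ k ≤ N, t k ∈ A) ∧ (∀ k < N, t k < t (k + 1)) ∧
    S = ∑ k ∈ Finset.range N, |u (t (k + 1)) - u (t k)| ^ p}

variable {p : ℝ}

lemma ppos (hp : 1 ≤ p) : 0 < p := lt_of_lt_of_le one_pos hp
lemma pne (hp : 1 ≤ p) : p ≠ 0 := (ppos hp).ne'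
lemma invp_pos (hp : 1 ≤ p) : 0 < 1 / p := by
  have := ppos hp; positivity

lemma rpow_invp_rpow (hp : 1 ≤ p) {x : ℝ} (hx : 0 ≤ x) : (x ^ (1 / p)) ^ p = x := by
  rw [← Real.rpow_mul hx, one_div, inv_mul_cancel₀ (pne hp), Real.rpow_one]

lemma rpow_rpow_invp (hp : 1 ≤ p) {x : ℝ} (hx : 0 ≤ x) : (x ^ p) ^ (1 / p) = x := by
  rw [← Real.rpow_mul hx, one_div, mul_inv_cancel₀ (pne hp), Real.rpow_one]

lemma pSums_nonneg {u : ℝ → ℝ} {A : Set ℝ} {S : ℝ} (hS : S ∈ pSums p u A) : 0 ≤ S := by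
  obtain ⟨N, t, -, -, rfl⟩ := hS
  exact Finset.sum_nonneg fun k _ => Real.rpow_nonneg (abs_nonneg _) p

lemma pSums_le_nuVar_rpow (hp : 1 ≤ p) {u : ℝ → ℝ} {A I' : Set ℝ} (hA : A ⊆ I')
    (hbdd : BddAbove (varSums p u I')) {S : ℝ} (hS : S ∈ pSums p u A) :
    S ≤ (nuVar p u I') ^ p := by
  have hS0 : 0 ≤ S := pSums_nonneg hS
  obtain ⟨N, t, hmem, hinc, hSeq⟩ := hS
  have h1 : S ^ (1 / p) ∈ varSums p u I' :=
    ⟨N, t, fun k hk => hA (hmem k hk), hinc, by rw [hSeq]⟩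
  have h2 : S ^ (1 / p) ≤ nuVar p u I' := le_csSup hbdd h1
  calc S = (S ^ (1 / p)) ^ p := (rpow_invp_rpow hp hS0).symm
    _ ≤ (nuVar p u I') ^ p :=
        Real.rpow_le_rpow (Real.rpow_nonneg hS0 _) h2 (ppos hp).le

lemma zero_mem_varSums (hp : 1 ≤ p) {u : ℝ → ℝ} {I' : Set ℝ} {x₀ : ℝ} (hx : x₀ ∈ I') :
    (0 : ℝ) ∈ varSums p u I' :=
  ⟨0, fun _ => x₀, fun k _ => hx, by omega, by
    rw [Finset.range_zero, Finset.sum_empty, Real.zero_rpow (one_div_ne_zero (pne hp))]⟩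

lemma nuVar_nonneg (hp : 1 ≤ p) {u : ℝ → ℝ} {I' : Set ℝ} (hbdd : BddAbove (varSums p u I'))
    (hne : I'.Nonempty) : 0 ≤ nuVar p u I' :=
  le_csSup hbdd (zero_mem_varSums hp hne.choose_spec)

lemma abs_sub_le_nuVar (hp : 1 ≤ p) {u : ℝ → ℝ} {I' : Set ℝ}
    (hbdd : BddAbove (varSums p u I')) {a b : ℝ} (ha : a ∈ I') (hb : b ∈ I') (hab : a < b) :
    |u b - u a| ≤ nuVar p u I' := by
  have h1 : |u b - u a| ^ p ∈ pSums p u I' := by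
    refine ⟨1, fun k => if k = 0 then a else b, ?_, ?_, ?_⟩
    · intro k hk; interval_cases k <;> simp [ha, hb]
    · intro k hk; interval_cases k; simpa using hab
    · simp
  have h2 := pSums_le_nuVar_rpow hp subset_rfl hbdd h1
  have h3 : 0 ≤ nuVar p u I' := nuVar_nonneg hp hbdd ⟨a, ha⟩
  calc |u b - u a| = (|u b - u a| ^ p) ^ (1 / p) := (rpow_rpow_invp hp (abs_nonneg _)).symm
    _ ≤ ((nuVar p u I') ^ p) ^ (1 / p) :=
        Real.rpow_le_rpow (Real.rpow_nonneg (abs_nonneg _) _) h2 (invp_pos hp).le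
    _ = nuVar p u I' := rpow_rpow_invp hp h3

lemma abs_le_aux (hp : 1 ≤ p) {u : ℝ → ℝ} {I' : Set ℝ}
    (hbdd : BddAbove (varSums p u I')) {x x₀ : ℝ} (hx : x ∈ I') (hx₀ : x₀ ∈ I') :
    |u x| ≤ |u x₀| + nuVar p u I' := by
  rcases lt_trichotomy x x₀ with hlt | rfl | hgt
  · have := abs_sub_le_nuVar hp hbdd hx hx₀ hlt
    have h4 : |u x| - |u x₀| ≤ |u x₀ - u x| := by
      rw [abs_sub_comm]; exact (abs_sub_abs_le_abs_sub _ _)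
    linarith
  · have := nuVar_nonneg hp hbdd ⟨x, hx⟩; linarith
  · have := abs_sub_le_nuVar hp hbdd hx₀ hx hgt
    have h4 : |u x| - |u x₀| ≤ |u x - u x₀| := abs_sub_abs_le_abs_sub _ _
    linarith

lemma bddAbove_absImage (hp : 1 ≤ p) {u : ℝ → ℝ} {I' : Set ℝ}
    (hbdd : BddAbove (varSums p u I')) {x₀ : ℝ} (hx₀ : x₀ ∈ I') :
    BddAbove ((fun x => |u x|) '' I') := by
  refine ⟨|u x₀| + nuVar p u I', ?_⟩
  rintro y ⟨x, hx, rfl⟩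
  exact abs_le_aux hp hbdd hx hx₀

lemma abs_le_supAbs (hp : 1 ≤ p) {u : ℝ → ℝ} {I' : Set ℝ}
    (hbdd : BddAbove (varSums p u I')) {x x₀ : ℝ} (hx : x ∈ I') (hx₀ : x₀ ∈ I') :
    |u x| ≤ supAbs u I' :=
  le_csSup (bddAbove_absImage hp hbdd hx₀) ⟨x, hx, rfl⟩

lemma supAbs_nonneg (hp : 1 ≤ p) {u : ℝ → ℝ} {I' : Set ℝ}
    (hbdd : BddAbove (varSums p u I')) {x₀ : ℝ} (hx₀ : x₀ ∈ I') :
    0 ≤ supAbs u I' :=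
  le_trans (abs_nonneg _) (abs_le_supAbs hp hbdd hx₀ hx₀)

lemma chain_exists {u : ℝ → ℝ} {I' : Set ℝ} (hne : I'.Nonempty)
    (K : Finset ℕ) {c d : ℕ → ℝ} :
    (∀ k ∈ K, c k ∈ I') → (∀ k ∈ K, d k ∈ I') → (∀ k ∈ K, c k < d k) →
    (∀ k ∈ K, ∀ k' ∈ K, k < k' → d k ≤ c k') →
    ∃ (N : ℕ) (t : ℕ → ℝ), (∀ k ≤ N, t k ∈ I') ∧ (∀ k < N, t k < t (k + 1)) ∧
      (∀ hKne : K.Nonempty, t N = d (K.max' hKne)) ∧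
      ∑ k ∈ K, |u (d k) - u (c k)| ^ p ≤ ∑ j ∈ Finset.range N, |u (t (j + 1)) - u (t j)| ^ p := by
  induction K using Finset.induction_on_max with
  | empty =>
    intro _ _ _ _
    obtain ⟨x₀, hx₀⟩ := hne
    exact ⟨0, fun _ => x₀, fun k _ => hx₀, by omega, fun hKne => absurd hKne (by simp), by simp⟩
  | insert a s ha IH =>
    intro hc hd hlt hord
    have hanotin : a ∉ s := fun hin => lt_irrefl a (ha a hin)
    have hamem : a ∈ insert a s := mem_insert_self a s
    have hmaxa : ∀ hne' : (insert a s).Nonempty, (insert a s).max' hne' = a := by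
      intro hne'
      refine le_antisymm (Finset.max'_le _ _ _ ?_) (Finset.le_max' _ a hamem)
      intro y hy
      rcases Finset.mem_insert.1 hy with rfl | hy
      · exact le_refl y
      · exact (ha y hy).le
    obtain ⟨N, t, hmem, hinc, hmax, hsum⟩ :=
      IH (fun k hk => hc k (mem_insert_of_mem hk)) (fun k hk => hd k (mem_insert_of_mem hk))
        (fun k hk => hlt k (mem_insert_of_mem hk))
        (fun k hk k' hk' h => hord k (mem_insert_of_mem hk) k' (mem_insert_of_mem hk') h)
    rcases s.eq_empty_or_nonempty with rfl | hs
    · refine ⟨1, fun j => if j = 0 then c a else d a, ?_, ?_, ?_, ?_⟩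
      · intro k hk; interval_cases k <;> simp [hc a hamem, hd a hamem]
      · intro k hk; interval_cases k; simpa using hlt a hamem
      · intro hne'; simp [hmaxa hne']
      · simp
    · have hb : s.max' hs ∈ s := s.max'_mem hs
      have hba : s.max' hs < a := ha _ hb
      have htN : t N = d (s.max' hs) := hmax hs
      have htNca : t N ≤ c a := by
        rw [htN]
        exact hord _ (mem_insert_of_mem hb) a hamem hba
      have hsum' : ∑ k ∈ insert a s, |u (d k) - u (c k)| ^ p
          = |u (d a) - u (c a)| ^ p + ∑ k ∈ s, |u (d k) - u (c k)| ^ p :=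
        Finset.sum_insert hanotin
      rcases eq_or_lt_of_le htNca with heq | hlt'
      · -- t N = c a : extend by one point
        refine ⟨N + 1, fun j => if j = N + 1 then d a else t j, ?_, ?_, ?_, ?_⟩
        · intro k hk
          by_cases hkN : k = N + 1
          · simp [hkN, hd a hamem]
          · have : k ≤ N := by omega
            simp [hkN, hmem k this]
        · intro k hk
          rcases Nat.lt_or_ge k N with h1 | h1
          · have e1 : k ≠ N + 1 := by omega
            have e2 : k + 1 ≠ N + 1 := by omega
            simpa [e1, e2, show k ≠ N by omega] using hinc k h1
          · have hkeq : k = N := by omega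
            subst hkeq
            have e1 : k ≠ k + 1 := by omega
            simp only [if_neg e1, if_pos rfl]
            rw [heq]
            exact hlt a hamem
        · intro hne'; simp [hmaxa hne']
        · rw [hsum', Finset.sum_range_succ]
          have e0 : ∀ j ∈ Finset.range N, |u ((fun j => if j = N + 1 then d a else t j) (j + 1))
              - u ((fun j => if j = N + 1 then d a else t j) j)| ^ p
              = |u (t (j + 1)) - u (t j)| ^ p := by
            intro j hj
            have hjN := Finset.mem_range.1 hj
            have e1 : j ≠ N + 1 := by omega
            have e2 : j + 1 ≠ N + 1 := by omega
            simp [e1, e2, show j ≠ N by omega]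
          rw [Finset.sum_congr rfl e0]
          have : |u ((fun j => if j = N + 1 then d a else t j) (N + 1))
              - u ((fun j => if j = N + 1 then d a else t j) N)| ^ p
              = |u (d a) - u (c a)| ^ p := by
            have e1 : ¬ (N = N + 1) := by omega
            simp [e1, ← heq]
          rw [this]
          linarith [hsum]
      · -- t N < c a : extend by two points
        refine ⟨N + 2, fun j => if j = N + 1 then c a else if j = N + 2 then d a else t j, ?_, ?_, ?_, ?_⟩
        · intro k hk
          by_cases h1 : k = N + 1
          · simp [h1, hc a hamem]
          · by_cases h2 : k = N + 2
            · simp [h1, h2, hd a hamem]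
            · have : k ≤ N := by omega
              simp [h1, h2, hmem k this]
        · intro k hk
          rcases Nat.lt_or_ge k N with h1 | h1
          · have e1 : k ≠ N + 1 := by omega
            have e2 : k ≠ N + 2 := by omega
            have e3 : k + 1 ≠ N + 1 := by omega
            have e4 : k + 1 ≠ N + 2 := by omega
            simpa [e1, e2, e3, e4, show k ≠ N by omega] using hinc k h1
          · rcases (by omega : k = N ∨ k = N + 1) with rfl | rfl
            · have e1 : ¬ (k = k + 1) := by omega
              have e2 : ¬ (k = k + 2) := by omega
              simpa [e1, e2] using hlt'
            · simpa using hlt a hamem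
        · intro hne'; simp [hmaxa hne']
        · rw [hsum', Finset.sum_range_succ, Finset.sum_range_succ]
          have e0 : ∀ j ∈ Finset.range N,
              |u ((fun j => if j = N + 1 then c a else if j = N + 2 then d a else t j) (j + 1))
              - u ((fun j => if j = N + 1 then c a else if j = N + 2 then d a else t j) j)| ^ p
              = |u (t (j + 1)) - u (t j)| ^ p := by
            intro j hj
            have hjN := Finset.mem_range.1 hj
            have e1 : j ≠ N + 1 := by omega
            have e2 : j ≠ N + 2 := by omega
            have e3 : j + 1 ≠ N + 1 := by omega
            have e4 : j + 1 ≠ N + 2 := by omega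
            simp [e1, e2, e3, e4, show j ≠ N by omega]
          rw [Finset.sum_congr rfl e0]
          have eN : |u ((fun j => if j = N + 1 then c a else if j = N + 2 then d a else t j) (N + 1))
              - u ((fun j => if j = N + 1 then c a else if j = N + 2 then d a else t j) N)| ^ p
              = |u (c a) - u (t N)| ^ p := by
            have e1 : N ≠ N + 1 := by omega
            have e2 : N ≠ N + 2 := by omega
            simp [e1, e2]
          have eN1 : |u ((fun j => if j = N + 1 then c a else if j = N + 2 then d a else t j) (N + 1 + 1))
              - u ((fun j => if j = N + 1 then c a else if j = N + 2 then d a else t j) (N + 1))| ^ p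
              = |u (d a) - u (c a)| ^ p := by
            have e1 : N + 1 + 1 ≠ N + 1 := by omega
            simp [e1]
          rw [eN, eN1]
          have hnn : (0:ℝ) ≤ |u (c a) - u (t N)| ^ p := Real.rpow_nonneg (abs_nonneg _) p
          linarith [hsum]
  


lemma chain_le (hp : 1 ≤ p) {u : ℝ → ℝ} {I' : Set ℝ} (hne : I'.Nonempty)
    (hbdd : BddAbove (varSums p u I')) (K : Finset ℕ) {c d : ℕ → ℝ}
    (hc : ∀ k ∈ K, c k ∈ I') (hd : ∀ k ∈ K, d k ∈ I') (hlt : ∀ k ∈ K, c k < d k)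
    (hord : ∀ k ∈ K, ∀ k' ∈ K, k < k' → d k ≤ c k') :
    ∑ k ∈ K, |u (d k) - u (c k)| ^ p ≤ (nuVar p u I') ^ p := by
  obtain ⟨N, t, hmem, hinc, -, hsum⟩ := chain_exists hne K hc hd hlt hord
  exact hsum.trans (pSums_le_nuVar_rpow hp subset_rfl hbdd ⟨N, t, hmem, hinc, rfl⟩)

section SecD
variable {p : ℝ}

lemma pSums_mono {u : ℝ → ℝ} {A B : Set ℝ} (hAB : A ⊆ B) : pSums p u A ⊆ pSums p u B := by
  rintro S ⟨N, t, hmem, hinc, rfl⟩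
  exact ⟨N, t, fun k hk => hAB (hmem k hk), hinc, rfl⟩

lemma pSums_bddAbove (hp : 1 ≤ p) {u : ℝ → ℝ} {A I' : Set ℝ} (hA : A ⊆ I')
    (hbdd : BddAbove (varSums p u I')) : BddAbove (pSums p u A) :=
  ⟨(nuVar p u I') ^ p, fun _ hS => pSums_le_nuVar_rpow hp hA hbdd hS⟩

lemma zero_mem_pSums {u : ℝ → ℝ} {A : Set ℝ} {x₀ : ℝ} (hx₀ : x₀ ∈ A) :
    (0 : ℝ) ∈ pSums p u A :=
  ⟨0, fun _ => x₀, fun _ _ => hx₀, by omega, by simp⟩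

/-- running `p`-variation sum function -/
def Wfun (p : ℝ) (h : ℝ → ℝ) (I : Set ℝ) : ℝ → ℝ := fun x => sSup (pSums p h (I ∩ Iic x))

variable {h : ℝ → ℝ} {I : Set ℝ}

lemma Wfun_mono (hp : 1 ≤ p) (hbdd : BddAbove (varSums p h I)) : Monotone (Wfun p h I) := by
  intro x x' hxx'
  rcases (pSums p h (I ∩ Iic x)).eq_empty_or_nonempty with he | hne
  · rw [Wfun, he, Real.sSup_empty]
    rcases (pSums p h (I ∩ Iic x')).eq_empty_or_nonempty with he' | hne'
    · rw [Wfun, he', Real.sSup_empty]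
    · obtain ⟨S, hS⟩ := hne'
      exact le_trans (pSums_nonneg hS)
        (le_csSup (pSums_bddAbove hp Set.inter_subset_left hbdd) hS)
  · exact csSup_le_csSup (pSums_bddAbove hp Set.inter_subset_left hbdd) hne
      (pSums_mono (Set.inter_subset_inter_right _ (Set.Iic_subset_Iic.2 hxx')))

lemma Wfun_superadd (hp : 1 ≤ p) (hbdd : BddAbove (varSums p h I)) {a b : ℝ}
    (ha : a ∈ I) (hb : b ∈ I) (hab : a < b) :
    Wfun p h I a + |h b - h a| ^ p ≤ Wfun p h I b := by
  rw [← le_sub_iff_add_le]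
  refine csSup_le ⟨0, zero_mem_pSums ⟨ha, le_refl a⟩⟩ ?_
  rintro S ⟨N, t, hmem, hinc, rfl⟩
  rw [le_sub_iff_add_le]
  have htN : t N ≤ a := (hmem N le_rfl).2
  have hBdd2 := pSums_bddAbove hp Set.inter_subset_left hbdd (A := I ∩ Iic b)
  have hIb : ∀ k ≤ N, t k ∈ I ∩ Iic b := fun k hk =>
    ⟨(hmem k hk).1, le_trans (hmem k hk).2 hab.le⟩
  rcases eq_or_lt_of_le htN with heq | hlt'
  · -- t N = a: append b
    set t' : ℕ → ℝ := fun j => if j = N + 1 then b else t j with ht'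
    have hmem' : ∀ k ≤ N + 1, t' k ∈ I ∩ Iic b := by
      intro k hk
      by_cases h1 : k = N + 1
      · simp [ht', h1, hb]
      · have : k ≤ N := by omega
        simp only [ht', if_neg h1]; exact hIb k this
    have hinc' : ∀ k < N + 1, t' k < t' (k + 1) := by
      intro k hk
      rcases Nat.lt_or_ge k N with h1 | h1
      · have e1 : k ≠ N + 1 := by omega
        have e2 : k + 1 ≠ N + 1 := by omega
        simpa [ht', e1, e2, show k ≠ N by omega] using hinc k h1
      · have hkeq : k = N := by omega
        subst hkeq
        have e1 : k ≠ k + 1 := by omega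
        simp only [ht', if_neg e1, if_pos rfl]
        rw [heq]; exact hab
    have hmemS : (∑ j ∈ Finset.range (N + 1), |h (t' (j + 1)) - h (t' j)| ^ p)
        ∈ pSums p h (I ∩ Iic b) := ⟨N + 1, t', hmem', hinc', rfl⟩
    refine le_trans (le_of_eq ?_) (le_csSup hBdd2 hmemS)
    rw [Finset.sum_range_succ]
    have e0 : ∀ j ∈ Finset.range N, |h (t' (j + 1)) - h (t' j)| ^ p
        = |h (t (j + 1)) - h (t j)| ^ p := by
      intro j hj
      have hjN := Finset.mem_range.1 hj
      have e1 : j ≠ N + 1 := by omega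
      have e2 : j + 1 ≠ N + 1 := by omega
      simp [ht', e1, e2, show j ≠ N by omega]
    rw [Finset.sum_congr rfl e0]
    have e3 : t' (N + 1) = b := by simp [ht']
    have e4 : t' N = a := by simp only [ht', if_neg (by omega : ¬ N = N + 1)]; exact heq
    rw [e3, e4]
  · -- t N < a: append a then b
    set t' : ℕ → ℝ := fun j => if j = N + 1 then a else if j = N + 2 then b else t j with ht'
    have hmem' : ∀ k ≤ N + 2, t' k ∈ I ∩ Iic b := by
      intro k hk
      by_cases h1 : k = N + 1
      · simp [ht', h1, ha, hab.le]
      · by_cases h2 : k = N + 2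
        · simp [ht', h1, h2, hb]
        · have : k ≤ N := by omega
          simp only [ht', if_neg h1, if_neg h2]; exact hIb k this
    have hinc' : ∀ k < N + 2, t' k < t' (k + 1) := by
      intro k hk
      rcases Nat.lt_or_ge k N with h1 | h1
      · have e1 : k ≠ N + 1 := by omega
        have e2 : k ≠ N + 2 := by omega
        have e3 : k + 1 ≠ N + 1 := by omega
        have e4 : k + 1 ≠ N + 2 := by omega
        simpa [ht', e1, e2, e3, e4, show k ≠ N by omega] using hinc k h1
      · rcases (by omega : k = N ∨ k = N + 1) with rfl | rfl
        · have e1 : ¬ (k = k + 1) := by omega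
          have e2 : ¬ (k = k + 2) := by omega
          simpa [ht', e1, e2] using hlt'
        · simpa [ht'] using hab
    have hmemS : (∑ j ∈ Finset.range (N + 2), |h (t' (j + 1)) - h (t' j)| ^ p)
        ∈ pSums p h (I ∩ Iic b) := ⟨N + 2, t', hmem', hinc', rfl⟩
    refine le_trans ?_ (le_csSup hBdd2 hmemS)
    rw [Finset.sum_range_succ, Finset.sum_range_succ]
    have e0 : ∀ j ∈ Finset.range N, |h (t' (j + 1)) - h (t' j)| ^ p
        = |h (t (j + 1)) - h (t j)| ^ p := by
      intro j hj
      have hjN := Finset.mem_range.1 hj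
      have e1 : j ≠ N + 1 := by omega
      have e2 : j ≠ N + 2 := by omega
      have e3 : j + 1 ≠ N + 1 := by omega
      have e4 : j + 1 ≠ N + 2 := by omega
      simp [ht', e1, e2, e3, e4, show j ≠ N by omega]
    rw [Finset.sum_congr rfl e0]
    have e3 : t' (N + 1) = a := by simp [ht']
    have e4 : t' (N + 1 + 1) = b := by simp [ht']
    have e5 : t' N = t N := by
      simp only [ht', if_neg (by omega : ¬ N = N + 1), if_neg (by omega : ¬ N = N + 2)]
    rw [e3, e4, e5]
    have : (0:ℝ) ≤ |h a - h (t N)| ^ p := Real.rpow_nonneg (abs_nonneg _) p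
    linarith

lemma abs_rpow_le_Wfun_diff (hp : 1 ≤ p) (hbdd : BddAbove (varSums p h I)) {a b : ℝ}
    (ha : a ∈ I) (hb : b ∈ I) :
    |h b - h a| ^ p ≤ |Wfun p h I b - Wfun p h I a| := by
  rcases lt_trichotomy a b with hlt | rfl | hgt
  · have h1 := Wfun_superadd hp hbdd ha hb hlt
    have h2 : Wfun p h I a ≤ Wfun p h I b := Wfun_mono hp hbdd hlt.le
    have h3 : 0 ≤ Wfun p h I a :=
      le_csSup (pSums_bddAbove hp Set.inter_subset_left hbdd) (zero_mem_pSums ⟨ha, le_refl a⟩)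
    have h4 : 0 ≤ Wfun p h I b - Wfun p h I a := by linarith
    rw [abs_of_nonneg h4]
    linarith
  · simp [Real.zero_rpow (pne hp)]
  · have h1 := Wfun_superadd hp hbdd hb ha hgt
    have h2 : Wfun p h I b ≤ Wfun p h I a := Wfun_mono hp hbdd hgt.le
    rw [abs_sub_comm (h b), abs_sub_comm (Wfun p h I b)]
    have h4 : 0 ≤ Wfun p h I a - Wfun p h I b := by linarith
    rw [abs_of_nonneg h4]
    linarith

lemma continuousWithinAt_of_WcontinuousAt (hp : 1 ≤ p) (hbdd : BddAbove (varSums p h I))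
    {x : ℝ} (hx : x ∈ I) (hW : ContinuousAt (Wfun p h I) x) :
    ContinuousWithinAt h I x := by
  rw [Metric.continuousWithinAt_iff]
  intro ε hε
  have hεp : 0 < ε ^ p := Real.rpow_pos_of_pos hε p
  rw [Metric.continuousAt_iff] at hW
  obtain ⟨δ, hδ, hWδ⟩ := hW (ε ^ p) hεp
  refine ⟨δ, hδ, ?_⟩
  intro y hy hyd
  have h1 : |h y - h x| ^ p ≤ |Wfun p h I y - Wfun p h I x| := abs_rpow_le_Wfun_diff hp hbdd hx hy
  have h2 : |Wfun p h I y - Wfun p h I x| < ε ^ p := by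
    have := hWδ hyd
    rwa [Real.dist_eq] at this
  rw [Real.dist_eq]
  by_contra hcon
  push_neg at hcon
  have : ε ^ p ≤ |h y - h x| ^ p := Real.rpow_le_rpow hε.le hcon (ppos hp).le
  linarith

lemma intervalIntegrable_of_var (hp : 1 ≤ p) (hI : I.OrdConnected)
    (hbdd : BddAbove (varSums p h I)) {t₀ : ℝ} (ht₀ : t₀ ∈ I)
    {a b : ℝ} (ha : a ∈ I) (hb : b ∈ I) : IntervalIntegrable h volume a b := by
  -- reduce to a ≤ b
  wlog hab : a ≤ b generalizing a b
  · exact (this hb ha (by linarith [le_of_not_ge hab])).symm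
  rw [intervalIntegrable_iff_integrableOn_Ioc_of_le hab]
  have hIcc : Set.Icc a b ⊆ I := hI.out ha hb
  have hIoc : Set.Ioc a b ⊆ I := fun x hx => hIcc ⟨hx.1.le, hx.2⟩
  set D := {x : ℝ | ¬ContinuousAt (Wfun p h I) x} with hD
  have hDc : D.Countable := (Wfun_mono hp hbdd).countable_not_continuousAt
  have hDnull : volume D = 0 := hDc.measure_zero volume
  have hcont : ContinuousOn h (Set.Ioc a b \ D) := by
    intro x hxmem
    have hxI : x ∈ I := hIoc hxmem.1
    have hxW : ContinuousAt (Wfun p h I) x := by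
      have := hxmem.2; simpa [hD] using this
    exact (continuousWithinAt_of_WcontinuousAt hp hbdd hxI hxW).mono
      (fun y hy => hIoc hy.1)
  have hmeas : MeasurableSet (Set.Ioc a b \ D) :=
    measurableSet_Ioc.diff hDc.measurableSet
  have haesm : AEStronglyMeasurable h (volume.restrict (Set.Ioc a b \ D)) :=
    hcont.aestronglyMeasurable hmeas
  have hres : volume.restrict (Set.Ioc a b) = volume.restrict (Set.Ioc a b \ D) := by
    refine (MeasureTheory.Measure.restrict_congr_set ?_).symm
    exact MeasureTheory.diff_ae_eq_self.2
      (MeasureTheory.measure_mono_null Set.inter_subset_right hDnull)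
  have haesm2 : AEStronglyMeasurable h (volume.restrict (Set.Ioc a b)) := by
    rw [hres]; exact haesm
  refine ⟨haesm2, ?_⟩
  refine MeasureTheory.HasFiniteIntegral.restrict_of_bounded
    (|h t₀| + nuVar p h I) (by simp) ?_
  refine (MeasureTheory.ae_restrict_iff' measurableSet_Ioc).2 (Filter.Eventually.of_forall ?_)
  intro x hxmem
  have := abs_le_aux hp hbdd (hIoc hxmem) ht₀
  simpa [Real.norm_eq_abs] using this

lemma exists_pos_of_inc (hp : 1 ≤ p) (hI : I.OrdConnected)
    (hbdd : BddAbove (varSums p h I)) {t₀ : ℝ} (ht₀ : t₀ ∈ I)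
    {α : ℝ} {g : ℝ → ℝ} (hgdef : ∀ t ∈ I, g t = α + ∫ x in t₀..t, h x)
    {a b : ℝ} (ha : a ∈ I) (hb : b ∈ I) (hab : a < b) (hg : g a < g b) :
    ∃ s, a ≤ s ∧ s ≤ b ∧ s ∈ I ∧ 0 < h s := by
  by_contra hcon
  push_neg at hcon
  have hIcc : Set.Icc a b ⊆ I := hI.out ha hb
  have hnonpos : ∀ u ∈ Set.Icc a b, h u ≤ 0 := fun u hu =>
    hcon u hu.1 hu.2 (hIcc hu)
  have hint : (∫ x in a..b, h x) ≤ 0 := by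
    have h1 : (0:ℝ) ≤ ∫ x in a..b, -h x :=
      intervalIntegral.integral_nonneg hab.le (fun u hu => by linarith [hnonpos u hu])
    rw [intervalIntegral.integral_neg] at h1
    linarith
  have hdiff : g b - g a = ∫ x in a..b, h x := by
    rw [hgdef a ha, hgdef b hb]
    have h1 := intervalIntegral.integral_interval_sub_left
      (intervalIntegrable_of_var hp hI hbdd ht₀ ht₀ hb)
      (intervalIntegrable_of_var hp hI hbdd ht₀ ht₀ ha)
    rw [← h1]; ring
  linarith

lemma exists_neg_of_dec (hp : 1 ≤ p) (hI : I.OrdConnected)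
    (hbdd : BddAbove (varSums p h I)) {t₀ : ℝ} (ht₀ : t₀ ∈ I)
    {α : ℝ} {g : ℝ → ℝ} (hgdef : ∀ t ∈ I, g t = α + ∫ x in t₀..t, h x)
    {a b : ℝ} (ha : a ∈ I) (hb : b ∈ I) (hab : a < b) (hg : g b < g a) :
    ∃ s, a ≤ s ∧ s ≤ b ∧ s ∈ I ∧ h s < 0 := by
  by_contra hcon
  push_neg at hcon
  have hIcc : Set.Icc a b ⊆ I := hI.out ha hb
  have hnonneg : ∀ u ∈ Set.Icc a b, 0 ≤ h u := fun u hu =>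
    hcon u hu.1 hu.2 (hIcc hu)
  have hint : (0:ℝ) ≤ ∫ x in a..b, h x :=
    intervalIntegral.integral_nonneg hab.le hnonneg
  have hdiff : g b - g a = ∫ x in a..b, h x := by
    rw [hgdef a ha, hgdef b hb]
    have h1 := intervalIntegral.integral_interval_sub_left
      (intervalIntegrable_of_var hp hI hbdd ht₀ ht₀ hb)
      (intervalIntegrable_of_var hp hI hbdd ht₀ ht₀ ha)
    rw [← h1]; ring
  linarith

end SecD

section SecE
variable {p : ℝ}

lemma add_rpow_le (hp : 1 ≤ p) {x y : ℝ} (hx : 0 ≤ x) (hy : 0 ≤ y) :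
    x ^ p + y ^ p ≤ (x + y) ^ p := by
  have h1 := NNReal.add_rpow_le_rpow_add (⟨x, hx⟩ : NNReal) (⟨y, hy⟩ : NNReal) hp
  have h2 := NNReal.coe_le_coe.2 h1
  push_cast at h2
  exact h2

lemma tmono {N : ℕ} {t : ℕ → ℝ} (htinc : ∀ k < N, t k < t (k + 1)) :
    ∀ j' ≤ N, ∀ j ≤ j', t j ≤ t j' := by
  intro j'
  induction j' with
  | zero => intro _ j hj; interval_cases j; rfl
  | succ b ih =>
    intro hb j hj
    rcases Nat.lt_or_ge j (b + 1) with h1 | h1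
    · have h2 : j ≤ b := by omega
      exact le_trans (ih (by omega) j h2) (htinc b (by omega)).le
    · have : j = b + 1 := by omega
      subst this; rfl

lemma ymono {y : ℕ → ℝ} :
    ∀ b a, a ≤ b → (∀ l, a ≤ l → l < b → y l ≤ y (l + 1)) → y a ≤ y b := by
  intro b
  induction b with
  | zero => intro a ha _; interval_cases a; rfl
  | succ b ih =>
    intro a ha hno
    rcases Nat.lt_or_ge a (b + 1) with h1 | h1
    · have h2 : a ≤ b := by omega
      exact le_trans (ih a h2 (fun l hl hl' => hno l hl (by omega)))
        (hno b (by omega) (by omega))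
    · have : a = b + 1 := by omega
      subst this; rfl

lemma core_up (hp : 1 ≤ p) {I : Set ℝ} {t₀ : ℝ} (ht₀ : t₀ ∈ I)
    {h : ℝ → ℝ} (hh : BddAbove (varSums p h I))
    {f : ℝ → ℝ} {J : Set ℝ} (hJne : J.Nonempty) (hf : BddAbove (varSums p f J))
    (N : ℕ) (t : ℕ → ℝ) (htI : ∀ k ≤ N, t k ∈ I) (htinc : ∀ k < N, t k < t (k + 1))
    (y : ℕ → ℝ) (hyJ : ∀ k ≤ N, y k ∈ J)
    (hup : ∀ k < N, y k < y (k + 1) → ∃ s, t k ≤ s ∧ s ≤ t (k + 1) ∧ s ∈ I ∧ 0 < h s)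
    (hdown : ∀ k < N, y (k + 1) < y k → ∃ s, t k ≤ s ∧ s ≤ t (k + 1) ∧ s ∈ I ∧ h s < 0) :
    ∑ k ∈ (Finset.range N).filter (fun k => y k < y (k + 1)),
        |f (y (k + 1)) - f (y k)| ^ p * |h (t k)| ^ p
      ≤ (nuVar p f J * supAbs h I + nuVar p f J * nuVar p h I) ^ p := by
  classical
  have hVf0 : 0 ≤ nuVar p f J := nuVar_nonneg hp hf hJne
  have hH0 : 0 ≤ supAbs h I := supAbs_nonneg hp hh ht₀
  have hVh0 : 0 ≤ nuVar p h I := nuVar_nonneg hp hh ⟨t₀, ht₀⟩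
  have htm : ∀ j' ≤ N, ∀ j ≤ j', t j ≤ t j' := tmono htinc
  set M : ℕ → ℝ := fun k => (Finset.range (k + 1)).sup' Finset.nonempty_range_add_one y with hM
  have hyleM : ∀ j k, j ≤ k → y j ≤ M k := by
    intro j k hjk
    exact Finset.le_sup' y (Finset.mem_range.2 (by omega))
  have hMwit : ∀ k, ∃ j, j ≤ k ∧ M k = y j := by
    intro k
    obtain ⟨j, hj, hje⟩ := Finset.exists_mem_eq_sup'
      (s := Finset.range (k + 1)) Finset.nonempty_range_add_one y
    have := Finset.mem_range.1 hj
    exact ⟨j, by omega, hje⟩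
  set U := (Finset.range N).filter (fun k => y k < y (k + 1)) with hU
  set F : ℕ → ℝ := fun k => |f (y (k + 1)) - f (y k)| ^ p * |h (t k)| ^ p with hF
  have hUN : ∀ k ∈ U, k < N := by
    intro k hk; rw [hU] at hk; exact Finset.mem_range.1 (Finset.mem_filter.1 hk).1
  have hUup : ∀ k ∈ U, y k < y (k + 1) := by
    intro k hk; rw [hU] at hk; exact (Finset.mem_filter.1 hk).2
  set Uov := U.filter (fun k => y k < M k) with hUov
  set Ufr := U.filter (fun k => ¬ y k < M k) with hUfr
  have hsplit : ∑ k ∈ Uov, F k + ∑ k ∈ Ufr, F k = ∑ k ∈ U, F k :=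
    Finset.sum_filter_add_sum_filter_not U (fun k => y k < M k) F
  have hUovN : ∀ k ∈ Uov, k < N := by
    intro k hk; rw [hUov] at hk; exact hUN k (Finset.mem_filter.1 hk).1
  have hUovup : ∀ k ∈ Uov, y k < y (k + 1) := by
    intro k hk; rw [hUov] at hk; exact hUup k (Finset.mem_filter.1 hk).1
  have hUovlt : ∀ k ∈ Uov, y k < M k := by
    intro k hk; rw [hUov] at hk; exact (Finset.mem_filter.1 hk).2
  have hUfrN : ∀ k ∈ Ufr, k < N := by
    intro k hk; rw [hUfr] at hk; exact hUN k (Finset.mem_filter.1 hk).1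
  have hUfrup : ∀ k ∈ Ufr, y k < y (k + 1) := by
    intro k hk; rw [hUfr] at hk; exact hUup k (Finset.mem_filter.1 hk).1
  have hUfrge : ∀ k ∈ Ufr, M k ≤ y k := by
    intro k hk; rw [hUfr] at hk; exact le_of_not_gt (Finset.mem_filter.1 hk).2
  -- fresh part
  have hfr2 : ∑ k ∈ Ufr, |f (y (k + 1)) - f (y k)| ^ p ≤ (nuVar p f J) ^ p := by
    refine chain_le hp hJne hf Ufr (c := y) (d := fun k => y (k + 1)) ?_ ?_ ?_ ?_
    · intro k hk; exact hyJ k (hUfrN k hk).le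
    · intro k hk; exact hyJ (k + 1) (hUfrN k hk)
    · intro k hk; exact hUfrup k hk
    · intro k hk k' hk' hkk'
      exact le_trans (hyleM (k + 1) k' (by omega)) (hUfrge k' hk')
  have hfr1 : ∑ k ∈ Ufr, F k ≤ (nuVar p f J) ^ p * (supAbs h I) ^ p := by
    have step1 : ∀ k ∈ Ufr, F k ≤ |f (y (k + 1)) - f (y k)| ^ p * (supAbs h I) ^ p := by
      intro k hk
      have hw : |h (t k)| ≤ supAbs h I := abs_le_supAbs hp hh (htI k (hUfrN k hk).le) ht₀
      have h2 : |h (t k)| ^ p ≤ (supAbs h I) ^ p :=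
        Real.rpow_le_rpow (abs_nonneg _) hw (ppos hp).le
      exact mul_le_mul_of_nonneg_left h2 (Real.rpow_nonneg (abs_nonneg _) _)
    calc ∑ k ∈ Ufr, F k ≤ ∑ k ∈ Ufr, |f (y (k + 1)) - f (y k)| ^ p * (supAbs h I) ^ p :=
          Finset.sum_le_sum step1
      _ = (∑ k ∈ Ufr, |f (y (k + 1)) - f (y k)| ^ p) * (supAbs h I) ^ p := by
          rw [Finset.sum_mul]
      _ ≤ (nuVar p f J) ^ p * (supAbs h I) ^ p :=
          mul_le_mul_of_nonneg_right hfr2 (Real.rpow_nonneg hH0 _)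
  -- overlap part
  have hexdown : ∀ k ∈ Uov, ∃ l, l < k ∧ y (l + 1) < y l := by
    intro k hk
    by_contra hcon
    push_neg at hcon
    obtain ⟨j, hj, hje⟩ := hMwit k
    have h1 : y j ≤ y k := ymono k j hj (fun l hl hl' => hcon l hl')
    have h2 : y k < M k := hUovlt k hk
    rw [hje] at h2; linarith
  set lk : ℕ → ℕ := fun k => Nat.findGreatest (fun l => y (l + 1) < y l) k with hlk
  have hlkspec : ∀ k ∈ Uov, (y (lk k + 1) < y (lk k)) ∧ lk k < k ∧
      (∀ j, lk k < j → j ≤ k → ¬ y (j + 1) < y j) := by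
    intro k hk
    obtain ⟨l, hl, hldwn⟩ := hexdown k hk
    have h1 : y (lk k + 1) < y (lk k) := by
      have hsp := Nat.findGreatest_spec (P := fun l => y (l + 1) < y l)
        (Nat.le_of_lt hl) hldwn
      simpa [hlk] using hsp
    have h2 : lk k ≤ k := Nat.findGreatest_le k
    have h3 : lk k ≠ k := by
      intro he
      have hkup := hUovup k hk
      rw [he] at h1; linarith
    refine ⟨h1, by omega, ?_⟩
    intro j hj1 hj2
    exact Nat.findGreatest_is_greatest hj1 hj2
  set L := Uov.image lk with hL
  have hfib : ∑ m ∈ L, ∑ k ∈ Uov.filter (fun k => lk k = m), F k = ∑ k ∈ Uov, F k :=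
    Finset.sum_fiberwise_of_maps_to (fun k hk => Finset.mem_image_of_mem lk hk) F
  have hLwit : ∀ m ∈ L, ∃ k ∈ Uov, lk k = m := by
    intro m hm; rw [hL] at hm
    obtain ⟨k, hk, he⟩ := Finset.mem_image.1 hm; exact ⟨k, hk, he⟩
  have hfibmem : ∀ m, ∀ k ∈ Uov.filter (fun k => lk k = m), k ∈ Uov ∧ lk k = m := by
    intro m k hk; exact ⟨(Finset.mem_filter.1 hk).1, (Finset.mem_filter.1 hk).2⟩
  -- max-weight element of each fiber
  have hKex : ∀ m, ∃ b, m ∈ L → b ∈ Uov ∧ lk b = m ∧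
      ∀ k ∈ Uov.filter (fun k => lk k = m), |h (t k)| ≤ |h (t b)| := by
    intro m
    by_cases hm : m ∈ L
    · obtain ⟨k0, hk0, hk0e⟩ := hLwit m hm
      have hne : (Uov.filter (fun k => lk k = m)).Nonempty :=
        ⟨k0, Finset.mem_filter.2 ⟨hk0, hk0e⟩⟩
      obtain ⟨b, hb, hmax⟩ := Finset.exists_max_image
        (Uov.filter (fun k => lk k = m)) (fun k => |h (t k)|) hne
      exact ⟨b, fun _ => ⟨(Finset.mem_filter.1 hb).1, (Finset.mem_filter.1 hb).2, hmax⟩⟩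
    · exact ⟨0, fun hc => absurd hc hm⟩
  choose ks hks using hKex
  -- inner bound per fiber
  have hinner : ∀ m ∈ L, ∑ k ∈ Uov.filter (fun k => lk k = m), F k
      ≤ (nuVar p f J) ^ p * |h (t (ks m))| ^ p := by
    intro m hm
    obtain ⟨hks1, hks2, hks3⟩ := hks m hm
    have hchain : ∑ k ∈ Uov.filter (fun k => lk k = m), |f (y (k + 1)) - f (y k)| ^ p
        ≤ (nuVar p f J) ^ p := by
      refine chain_le hp hJne hf _ (c := y) (d := fun k => y (k + 1)) ?_ ?_ ?_ ?_
      · intro k hk; exact hyJ k (hUovN k (hfibmem m k hk).1).le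
      · intro k hk; exact hyJ (k + 1) (hUovN k (hfibmem m k hk).1)
      · intro k hk; exact hUovup k (hfibmem m k hk).1
      · intro k hk k' hk' hkk'
        obtain ⟨hkov, hkm⟩ := hfibmem m k hk
        obtain ⟨hkov', hkm'⟩ := hfibmem m k' hk'
        have hnd := (hlkspec k' hkov').2.2
        have hmk : lk k < k := (hlkspec k hkov).2.1
        refine ymono k' (k + 1) (by omega) ?_
        intro l hl hl'
        have hml : m < l := by omega
        have := hnd l (by omega) (by omega)
        exact le_of_not_gt this
    have step1 : ∀ k ∈ Uov.filter (fun k => lk k = m),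
        F k ≤ |f (y (k + 1)) - f (y k)| ^ p * |h (t (ks m))| ^ p := by
      intro k hk
      have h2 : |h (t k)| ^ p ≤ |h (t (ks m))| ^ p :=
        Real.rpow_le_rpow (abs_nonneg _) (hks3 k hk) (ppos hp).le
      exact mul_le_mul_of_nonneg_left h2 (Real.rpow_nonneg (abs_nonneg _) _)
    calc ∑ k ∈ Uov.filter (fun k => lk k = m), F k
        ≤ ∑ k ∈ Uov.filter (fun k => lk k = m),
            |f (y (k + 1)) - f (y k)| ^ p * |h (t (ks m))| ^ p := Finset.sum_le_sum step1
      _ = (∑ k ∈ Uov.filter (fun k => lk k = m), |f (y (k + 1)) - f (y k)| ^ p)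
            * |h (t (ks m))| ^ p := by rw [Finset.sum_mul]
      _ ≤ (nuVar p f J) ^ p * |h (t (ks m))| ^ p :=
          mul_le_mul_of_nonneg_right hchain (Real.rpow_nonneg (abs_nonneg _) _)
  -- dwn facts about members of L
  have hLdwn : ∀ m ∈ L, y (m + 1) < y m := by
    intro m hm
    obtain ⟨k, hk, he⟩ := hLwit m hm
    have := (hlkspec k hk).1
    rw [he] at this; exact this
  have hLltN : ∀ m ∈ L, m < N := by
    intro m hm
    obtain ⟨k, hk, he⟩ := hLwit m hm
    have h1 := (hlkspec k hk).2.1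
    have h2 := hUovN k hk
    omega
  -- outer bound
  have houter : ∑ m ∈ L, |h (t (ks m))| ^ p ≤ (nuVar p h I) ^ p := by
    have hpair : ∀ m, ∃ cdp : ℝ × ℝ, m ∈ L →
        cdp.1 ∈ I ∧ cdp.2 ∈ I ∧ cdp.1 < cdp.2 ∧ |h (t (ks m))| ≤ |h cdp.2 - h cdp.1| ∧
        t m ≤ cdp.1 ∧ cdp.2 ≤ t (ks m + 1) := by
      intro m
      by_cases hm : m ∈ L
      · obtain ⟨hks1, hks2, hks3⟩ := hks m hm
        have hkslt : ks m < N := hUovN _ hks1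
        have hmlt : m < ks m := by
          have := (hlkspec (ks m) hks1).2.1; rw [hks2] at this; exact this
        have hdwnm : y (m + 1) < y m := hLdwn m hm
        have hmN : m < N := hLltN m hm
        by_cases hsig : 0 < h (t (ks m))
        · obtain ⟨s, hs1, hs2, hs3, hs4⟩ := hdown m hmN hdwnm
          refine ⟨(s, t (ks m)), fun _ => ⟨hs3, htI _ hkslt.le, ?_, ?_, hs1,
            htm (ks m + 1) (by omega) (ks m) (by omega)⟩⟩
          · have hle : s ≤ t (ks m) := le_trans hs2 (htm (ks m) hkslt.le (m + 1) (by omega))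
            rcases eq_or_lt_of_le hle with he | hlt2
            · rw [he] at hs4; linarith
            · exact hlt2
          · have e1 : |h (t (ks m))| = h (t (ks m)) := abs_of_pos hsig
            have e2 : |h (t (ks m)) - h s| = h (t (ks m)) - h s := abs_of_pos (by linarith)
            rw [e1, e2]; linarith
        · push_neg at hsig
          obtain ⟨s, hs1, hs2, hs3, hs4⟩ := hup (ks m) hkslt (hUovup _ hks1)
          refine ⟨(t (ks m), s), fun _ => ⟨htI _ hkslt.le, hs3, ?_, ?_,
            htm (ks m) hkslt.le m (by omega), hs2⟩⟩
          · rcases eq_or_lt_of_le hs1 with he | hlt2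
            · rw [← he] at hs4; linarith
            · exact hlt2
          · have e1 : |h (t (ks m))| = -h (t (ks m)) := abs_of_nonpos hsig
            have e2 : |h s - h (t (ks m))| = h s - h (t (ks m)) := abs_of_pos (by linarith)
            rw [e1, e2]; linarith
      · exact ⟨(0, 1), fun hc => absurd hc hm⟩
    choose cdp hcdp using hpair
    have hchain2 : ∑ m ∈ L, |h ((cdp m).2) - h ((cdp m).1)| ^ p ≤ (nuVar p h I) ^ p := by
      refine chain_le hp ⟨t₀, ht₀⟩ hh L (c := fun m => (cdp m).1) (d := fun m => (cdp m).2)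
        ?_ ?_ ?_ ?_
      · intro m hm; exact (hcdp m hm).1
      · intro m hm; exact (hcdp m hm).2.1
      · intro m hm; exact (hcdp m hm).2.2.1
      · intro m hm m' hm' hmm'
        have h1 := (hcdp m hm).2.2.2.2.2
        have h2 := (hcdp m' hm').2.2.2.2.1
        have hksm : ks m < m' := by
          obtain ⟨hks1, hks2, _⟩ := hks m hm
          have hnd := (hlkspec (ks m) hks1).2.2
          have hdwnm' : y (m' + 1) < y m' := hLdwn m' hm'
          by_contra hcon
          push_neg at hcon
          exact (hnd m' (by rw [hks2]; omega) hcon) hdwnm'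
        have h3 : t (ks m + 1) ≤ t m' := htm m' (hLltN m' hm').le (ks m + 1) (by omega)
        linarith
    refine le_trans (Finset.sum_le_sum ?_) hchain2
    intro m hm
    exact Real.rpow_le_rpow (abs_nonneg _) (hcdp m hm).2.2.2.1 (ppos hp).le
  -- combine
  have hov : ∑ k ∈ Uov, F k ≤ (nuVar p f J) ^ p * (nuVar p h I) ^ p := by
    rw [← hfib]
    calc ∑ m ∈ L, ∑ k ∈ Uov.filter (fun k => lk k = m), F k
        ≤ ∑ m ∈ L, (nuVar p f J) ^ p * |h (t (ks m))| ^ p := Finset.sum_le_sum hinner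
      _ = (nuVar p f J) ^ p * ∑ m ∈ L, |h (t (ks m))| ^ p := by rw [← Finset.mul_sum]
      _ ≤ (nuVar p f J) ^ p * (nuVar p h I) ^ p :=
          mul_le_mul_of_nonneg_left houter (Real.rpow_nonneg hVf0 _)
  have htot : ∑ k ∈ U, F k
      ≤ (nuVar p f J * supAbs h I) ^ p + (nuVar p f J * nuVar p h I) ^ p := by
    rw [← hsplit]
    have e1 : (nuVar p f J) ^ p * (supAbs h I) ^ p = (nuVar p f J * supAbs h I) ^ p :=
      (Real.mul_rpow hVf0 hH0).symm
    have e2 : (nuVar p f J) ^ p * (nuVar p h I) ^ p = (nuVar p f J * nuVar p h I) ^ p :=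
      (Real.mul_rpow hVf0 hVh0).symm
    rw [← e1, ← e2]
    linarith
  exact le_trans htot (add_rpow_le hp (mul_nonneg hVf0 hH0) (mul_nonneg hVf0 hVh0))

end SecE

section SecF
variable {p : ℝ}

lemma varSums_neg_incl {u : ℝ → ℝ} {A : Set ℝ} :
    varSums p u A ⊆ varSums p (fun x => u (-x)) ((fun x => -x) '' A) := by
  rintro S ⟨N, τ, hmem, hinc, rfl⟩
  refine ⟨N, fun k => -τ (N - k), ?_, ?_, ?_⟩
  · intro k hk; exact ⟨τ (N - k), hmem (N - k) (by omega), rfl⟩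
  · intro k hk
    have h1 : N - (k + 1) < N := by omega
    have h2 : τ (N - (k + 1)) < τ (N - (k + 1) + 1) := hinc _ h1
    have e : N - (k + 1) + 1 = N - k := by omega
    rw [e] at h2
    simp only [neg_lt_neg_iff]
    exact h2
  · congr 1
    rw [← Finset.sum_range_reflect (fun j => |u (τ (j + 1)) - u (τ j)| ^ p) N]
    refine Finset.sum_congr rfl ?_
    intro k hk
    have hkN := Finset.mem_range.1 hk
    have e1 : N - 1 - k + 1 = N - k := by omega
    have e2 : N - 1 - k = N - (k + 1) := by omega
    simp only []
    rw [e1, e2, neg_neg, neg_neg, abs_sub_comm]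

lemma varSums_neg_eq {u : ℝ → ℝ} {A : Set ℝ} :
    varSums p (fun x => u (-x)) ((fun x => -x) '' A) = varSums p u A := by
  refine le_antisymm ?_ varSums_neg_incl
  have h1 := varSums_neg_incl (p := p) (u := fun x => u (-x)) (A := (fun x : ℝ => -x) '' A)
  have e1 : (fun x => u (- -x)) = u := by funext x; rw [neg_neg]
  have e2 : (fun x : ℝ => -x) '' ((fun x : ℝ => -x) '' A) = A := by
    rw [Set.image_image]; simp
  rw [e1, e2] at h1
  exact h1

lemma varSums_neg_fun {u : ℝ → ℝ} {A : Set ℝ} :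
    varSums p (fun x => -u x) A = varSums p u A := by
  ext S
  constructor
  · rintro ⟨N, τ, hmem, hinc, rfl⟩
    refine ⟨N, τ, hmem, hinc, ?_⟩
    congr 1
    refine Finset.sum_congr rfl fun k _ => ?_
    rw [show -u (τ (k + 1)) - -u (τ k) = -(u (τ (k + 1)) - u (τ k)) by ring, abs_neg]
  · rintro ⟨N, τ, hmem, hinc, rfl⟩
    refine ⟨N, τ, hmem, hinc, ?_⟩
    congr 1
    refine Finset.sum_congr rfl fun k _ => ?_
    rw [show -u (τ (k + 1)) - -u (τ k) = -(u (τ (k + 1)) - u (τ k)) by ring, abs_neg]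

lemma supAbs_neg_fun {u : ℝ → ℝ} {A : Set ℝ} : supAbs (fun x => -u x) A = supAbs u A := by
  unfold supAbs
  congr 1
  ext z
  constructor
  · rintro ⟨x, hx, rfl⟩; exact ⟨x, hx, by simp⟩
  · rintro ⟨x, hx, rfl⟩; exact ⟨x, hx, by simp⟩

end SecF

end PV

open PV in
/-- Norm form of the basic inequality:
`‖(f∘g)·h‖_{𝒱_p(I)} ≤ 2^{1/p} ‖f‖_{𝒱_p(g(I))} ‖h‖_{𝒱_p(I)}`. -/
theorem stmt10 (p : ℝ) (hp : 1 ≤ p) (I : Set ℝ) (hI : I.OrdConnected)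
    (t₀ : ℝ) (ht₀ : t₀ ∈ I) (α : ℝ) (h g f : ℝ → ℝ)
    (hh : BddAbove (varSums p h I))
    (hgdef : ∀ t ∈ I, g t = α + ∫ x in t₀..t, h x)
    (hf : BddAbove (varSums p f (g '' I))) :
    vNorm p (fun t => f (g t) * h t) I ≤
      (2 : ℝ) ^ (1 / p) * vNorm p f (g '' I) * vNorm p h I := by
  classical
  have hJne : (g '' I).Nonempty := ⟨g t₀, t₀, ht₀, rfl⟩
  have hgt₀J : g t₀ ∈ g '' I := ⟨t₀, ht₀, rfl⟩
  have hF0 : 0 ≤ supAbs f (g '' I) := supAbs_nonneg hp hf hgt₀J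
  have hVf0 : 0 ≤ nuVar p f (g '' I) := nuVar_nonneg hp hf hJne
  have hH0 : 0 ≤ supAbs h I := supAbs_nonneg hp hh ht₀
  have hVh0 : 0 ≤ nuVar p h I := nuVar_nonneg hp hh ⟨t₀, ht₀⟩
  have hC1 : (1 : ℝ) ≤ (2 : ℝ) ^ (1 / p) := by
    have h0 : (2:ℝ) ^ (0:ℝ) ≤ (2:ℝ) ^ (1 / p) :=
      Real.rpow_le_rpow_of_exponent_le one_le_two (invp_pos hp).le
    simpa using h0
  have hX0 : 0 ≤ nuVar p f (g '' I) * supAbs h I + nuVar p f (g '' I) * nuVar p h I :=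
    add_nonneg (mul_nonneg hVf0 hH0) (mul_nonneg hVf0 hVh0)
  have key : ∀ S ∈ varSums p (fun t => f (g t) * h t) I,
      S ≤ supAbs f (g '' I) * nuVar p h I + (2 : ℝ) ^ (1 / p) *
          (nuVar p f (g '' I) * supAbs h I + nuVar p f (g '' I) * nuVar p h I) := by
    rintro S ⟨N, τ, hmem, hinc, rfl⟩
    have hyJ : ∀ k ≤ N, g (τ k) ∈ g '' I := fun k hk => ⟨τ k, hmem k hk, rfl⟩
    have hupW : ∀ k < N, g (τ k) < g (τ (k + 1)) →
        ∃ s, τ k ≤ s ∧ s ≤ τ (k + 1) ∧ s ∈ I ∧ 0 < h s := fun k hk hgk =>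
      exists_pos_of_inc hp hI hh ht₀ hgdef (hmem k hk.le) (hmem (k + 1) hk) (hinc k hk) hgk
    have hdownW : ∀ k < N, g (τ (k + 1)) < g (τ k) →
        ∃ s, τ k ≤ s ∧ s ≤ τ (k + 1) ∧ s ∈ I ∧ h s < 0 := fun k hk hgk =>
      exists_neg_of_dec hp hI hh ht₀ hgdef (hmem k hk.le) (hmem (k + 1) hk) (hinc k hk) hgk
    have hupsum := core_up hp ht₀ hh hJne hf N τ hmem hinc (fun k => g (τ k)) hyJ hupW hdownW
    -- down part via reflection
    have hh' : BddAbove (varSums p (fun s => -h s) I) := by rw [varSums_neg_fun]; exact hh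
    have hf' : BddAbove (varSums p (fun x => f (-x)) ((fun x : ℝ => -x) '' (g '' I))) := by
      rw [varSums_neg_eq]; exact hf
    have hJne' : ((fun x : ℝ => -x) '' (g '' I)).Nonempty := hJne.image _
    have hyJ' : ∀ k ≤ N, (fun k => -g (τ k)) k ∈ (fun x : ℝ => -x) '' (g '' I) :=
      fun k hk => ⟨g (τ k), hyJ k hk, rfl⟩
    have hup' : ∀ k < N, (fun k => -g (τ k)) k < (fun k => -g (τ k)) (k + 1) →
        ∃ s, τ k ≤ s ∧ s ≤ τ (k + 1) ∧ s ∈ I ∧ 0 < (fun s => -h s) s := by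
      intro k hk hlt
      simp only [neg_lt_neg_iff] at hlt
      obtain ⟨s, hs1, hs2, hs3, hs4⟩ := hdownW k hk hlt
      exact ⟨s, hs1, hs2, hs3, by simpa using hs4⟩
    have hdown' : ∀ k < N, (fun k => -g (τ k)) (k + 1) < (fun k => -g (τ k)) k →
        ∃ s, τ k ≤ s ∧ s ≤ τ (k + 1) ∧ s ∈ I ∧ (fun s => -h s) s < 0 := by
      intro k hk hlt
      simp only [neg_lt_neg_iff] at hlt
      obtain ⟨s, hs1, hs2, hs3, hs4⟩ := hupW k hk hlt
      exact ⟨s, hs1, hs2, hs3, by simpa using hs4⟩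
    have hdownsum := core_up hp ht₀ hh' hJne' hf' N τ hmem hinc
      (fun k => -g (τ k)) hyJ' hup' hdown'
    have e_nuf : nuVar p (fun x => f (-x)) ((fun x : ℝ => -x) '' (g '' I))
        = nuVar p f (g '' I) := by unfold nuVar; rw [varSums_neg_eq]
    have e_suph : supAbs (fun s => -h s) I = supAbs h I := supAbs_neg_fun
    have e_nuh : nuVar p (fun s => -h s) I = nuVar p h I := by
      unfold nuVar; rw [varSums_neg_fun]
    rw [e_nuf, e_suph, e_nuh] at hdownsum
    simp only [neg_neg, abs_neg, neg_lt_neg_iff] at hdownsum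
    -- total bound on the weighted f-increment sum
    have hTsum : ∑ k ∈ Finset.range N,
        |f (g (τ (k + 1))) - f (g (τ k))| ^ p * |h (τ k)| ^ p
        ≤ 2 * (nuVar p f (g '' I) * supAbs h I + nuVar p f (g '' I) * nuVar p h I) ^ p := by
      have hs1 := Finset.sum_filter_add_sum_filter_not (Finset.range N)
        (fun k => g (τ k) < g (τ (k + 1)))
        (fun k => |f (g (τ (k + 1))) - f (g (τ k))| ^ p * |h (τ k)| ^ p)
      have hs2 := Finset.sum_filter_add_sum_filter_not
        ((Finset.range N).filter (fun k => ¬ g (τ k) < g (τ (k + 1))))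
        (fun k => g (τ (k + 1)) < g (τ k))
        (fun k => |f (g (τ (k + 1))) - f (g (τ k))| ^ p * |h (τ k)| ^ p)
      have hQeq : ((Finset.range N).filter (fun k => ¬ g (τ k) < g (τ (k + 1)))).filter
            (fun k => g (τ (k + 1)) < g (τ k))
          = (Finset.range N).filter (fun k => g (τ (k + 1)) < g (τ k)) := by
        rw [Finset.filter_filter]
        refine Finset.filter_congr fun k _ => ?_
        constructor
        · rintro ⟨-, h2⟩; exact h2
        · intro h2; exact ⟨by intro h3; linarith, h2⟩
      have hzero : ∑ k ∈ ((Finset.range N).filter (fun k => ¬ g (τ k) < g (τ (k + 1)))).filter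
            (fun k => ¬ g (τ (k + 1)) < g (τ k)),
          |f (g (τ (k + 1))) - f (g (τ k))| ^ p * |h (τ k)| ^ p = 0 := by
        refine Finset.sum_eq_zero fun k hk => ?_
        have h1 := (Finset.mem_filter.1 hk).2
        have h2 := (Finset.mem_filter.1 (Finset.mem_filter.1 hk).1).2
        have h3 : g (τ (k + 1)) = g (τ k) := le_antisymm (le_of_not_gt h2) (le_of_not_gt h1)
        rw [h3, sub_self, abs_zero, Real.zero_rpow (pne hp), zero_mul]
      rw [hQeq, hzero] at hs2
      have e2 : (2 : ℝ) * (nuVar p f (g '' I) * supAbs h I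
          + nuVar p f (g '' I) * nuVar p h I) ^ p
          = (nuVar p f (g '' I) * supAbs h I + nuVar p f (g '' I) * nuVar p h I) ^ p
          + (nuVar p f (g '' I) * supAbs h I + nuVar p f (g '' I) * nuVar p h I) ^ p := by ring
      rw [e2]
      linarith [hupsum, hdownsum, hs1, hs2]
    -- Minkowski split
    show (∑ k ∈ Finset.range N,
        |f (g (τ (k + 1))) * h (τ (k + 1)) - f (g (τ k)) * h (τ k)| ^ p) ^ (1 / p) ≤ _
    set a : ℕ → ℝ := fun k => |f (g (τ (k + 1)))| * |h (τ (k + 1)) - h (τ k)| with ha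
    set b : ℕ → ℝ := fun k => |f (g (τ (k + 1))) - f (g (τ k))| * |h (τ k)| with hb
    have hab0 : ∀ k, 0 ≤ a k ∧ 0 ≤ b k := fun k =>
      ⟨mul_nonneg (abs_nonneg _) (abs_nonneg _), mul_nonneg (abs_nonneg _) (abs_nonneg _)⟩
    have hptw : ∀ k ∈ Finset.range N,
        |f (g (τ (k + 1))) * h (τ (k + 1)) - f (g (τ k)) * h (τ k)| ^ p
        ≤ |a k + b k| ^ p := by
      intro k hk
      refine Real.rpow_le_rpow (abs_nonneg _) ?_ (ppos hp).le
      have e : f (g (τ (k + 1))) * h (τ (k + 1)) - f (g (τ k)) * h (τ k)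
          = f (g (τ (k + 1))) * (h (τ (k + 1)) - h (τ k))
            + (f (g (τ (k + 1))) - f (g (τ k))) * h (τ k) := by ring
      rw [e]
      refine le_trans (abs_add_le _ _) ?_
      rw [abs_mul, abs_mul]
      show a k + b k ≤ |a k + b k|
      exact le_abs_self _
    have hsum1 : (∑ k ∈ Finset.range N,
        |f (g (τ (k + 1))) * h (τ (k + 1)) - f (g (τ k)) * h (τ k)| ^ p) ^ (1 / p)
        ≤ (∑ k ∈ Finset.range N, |a k + b k| ^ p) ^ (1 / p) := by
      refine Real.rpow_le_rpow ?_ (Finset.sum_le_sum hptw) (invp_pos hp).le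
      exact Finset.sum_nonneg fun k _ => Real.rpow_nonneg (abs_nonneg _) _
    have hMink := Real.Lp_add_le (Finset.range N) a b hp
    have hA : (∑ k ∈ Finset.range N, |a k| ^ p) ^ (1 / p)
        ≤ supAbs f (g '' I) * nuVar p h I := by
      have h1 : ∀ k ∈ Finset.range N, |a k| ^ p
          ≤ (supAbs f (g '' I)) ^ p * |h (τ (k + 1)) - h (τ k)| ^ p := by
        intro k hk
        have hkN := Finset.mem_range.1 hk
        rw [abs_of_nonneg (hab0 k).1, ha]
        rw [Real.mul_rpow (abs_nonneg _) (abs_nonneg _)]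
        exact mul_le_mul_of_nonneg_right
          (Real.rpow_le_rpow (abs_nonneg _)
            (abs_le_supAbs hp hf (hyJ (k + 1) hkN) hgt₀J) (ppos hp).le)
          (Real.rpow_nonneg (abs_nonneg _) _)
      have h3 : ∑ k ∈ Finset.range N, |h (τ (k + 1)) - h (τ k)| ^ p ≤ (nuVar p h I) ^ p :=
        pSums_le_nuVar_rpow hp subset_rfl hh ⟨N, τ, hmem, hinc, rfl⟩
      have h4 : ∑ k ∈ Finset.range N, |a k| ^ p
          ≤ (supAbs f (g '' I) * nuVar p h I) ^ p := by
        rw [Real.mul_rpow hF0 hVh0]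
        calc ∑ k ∈ Finset.range N, |a k| ^ p
            ≤ ∑ k ∈ Finset.range N,
              (supAbs f (g '' I)) ^ p * |h (τ (k + 1)) - h (τ k)| ^ p :=
              Finset.sum_le_sum h1
          _ = (supAbs f (g '' I)) ^ p * ∑ k ∈ Finset.range N,
              |h (τ (k + 1)) - h (τ k)| ^ p := by rw [← Finset.mul_sum]
          _ ≤ (supAbs f (g '' I)) ^ p * (nuVar p h I) ^ p :=
              mul_le_mul_of_nonneg_left h3 (Real.rpow_nonneg hF0 _)
      calc (∑ k ∈ Finset.range N, |a k| ^ p) ^ (1 / p)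
          ≤ ((supAbs f (g '' I) * nuVar p h I) ^ p) ^ (1 / p) := by
            refine Real.rpow_le_rpow ?_ h4 (invp_pos hp).le
            exact Finset.sum_nonneg fun k _ => Real.rpow_nonneg (abs_nonneg _) _
        _ = supAbs f (g '' I) * nuVar p h I :=
            rpow_rpow_invp hp (mul_nonneg hF0 hVh0)
    have hB : (∑ k ∈ Finset.range N, |b k| ^ p) ^ (1 / p)
        ≤ (2 : ℝ) ^ (1 / p) *
          (nuVar p f (g '' I) * supAbs h I + nuVar p f (g '' I) * nuVar p h I) := by
      have h1 : ∀ k ∈ Finset.range N, |b k| ^ p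
          = |f (g (τ (k + 1))) - f (g (τ k))| ^ p * |h (τ k)| ^ p := by
        intro k hk
        rw [abs_of_nonneg (hab0 k).2, hb]
        exact Real.mul_rpow (abs_nonneg _) (abs_nonneg _)
      rw [Finset.sum_congr rfl h1]
      calc (∑ k ∈ Finset.range N,
            |f (g (τ (k + 1))) - f (g (τ k))| ^ p * |h (τ k)| ^ p) ^ (1 / p)
          ≤ ((2 : ℝ) * (nuVar p f (g '' I) * supAbs h I
              + nuVar p f (g '' I) * nuVar p h I) ^ p) ^ (1 / p) := by
            refine Real.rpow_le_rpow ?_ hTsum (invp_pos hp).le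
            exact Finset.sum_nonneg fun k _ => mul_nonneg
              (Real.rpow_nonneg (abs_nonneg _) _) (Real.rpow_nonneg (abs_nonneg _) _)
        _ = (2 : ℝ) ^ (1 / p) *
            (nuVar p f (g '' I) * supAbs h I + nuVar p f (g '' I) * nuVar p h I) := by
            rw [Real.mul_rpow (by norm_num) (Real.rpow_nonneg hX0 _),
              rpow_rpow_invp hp hX0]
    calc (∑ k ∈ Finset.range N,
        |f (g (τ (k + 1))) * h (τ (k + 1)) - f (g (τ k)) * h (τ k)| ^ p) ^ (1 / p)
        ≤ (∑ k ∈ Finset.range N, |a k + b k| ^ p) ^ (1 / p) := hsum1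
      _ ≤ (∑ k ∈ Finset.range N, |a k| ^ p) ^ (1 / p)
          + (∑ k ∈ Finset.range N, |b k| ^ p) ^ (1 / p) := hMink
      _ ≤ supAbs f (g '' I) * nuVar p h I + (2 : ℝ) ^ (1 / p) *
          (nuVar p f (g '' I) * supAbs h I + nuVar p f (g '' I) * nuVar p h I) :=
          add_le_add hA hB
  have hnu : nuVar p (fun t => f (g t) * h t) I
      ≤ supAbs f (g '' I) * nuVar p h I + (2 : ℝ) ^ (1 / p) *
        (nuVar p f (g '' I) * supAbs h I + nuVar p f (g '' I) * nuVar p h I) :=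
    csSup_le ⟨0, zero_mem_varSums hp ht₀⟩ key
  have hsup : supAbs (fun t => f (g t) * h t) I ≤ supAbs f (g '' I) * supAbs h I := by
    refine csSup_le ⟨|f (g t₀) * h t₀|, ⟨t₀, ht₀, rfl⟩⟩ ?_
    rintro z ⟨x, hx, rfl⟩
    show |f (g x) * h x| ≤ _
    rw [abs_mul]
    exact mul_le_mul (abs_le_supAbs hp hf ⟨x, hx, rfl⟩ hgt₀J)
      (abs_le_supAbs hp hh hx ht₀) (abs_nonneg _) hF0
  show supAbs (fun t => f (g t) * h t) I + nuVar p (fun t => f (g t) * h t) I ≤ _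
  have expand : (2 : ℝ) ^ (1 / p) * vNorm p f (g '' I) * vNorm p h I
      = (2 : ℝ) ^ (1 / p) * (supAbs f (g '' I) * supAbs h I)
        + (2 : ℝ) ^ (1 / p) * (supAbs f (g '' I) * nuVar p h I)
        + (2 : ℝ) ^ (1 / p) * (nuVar p f (g '' I) * supAbs h I)
        + (2 : ℝ) ^ (1 / p) * (nuVar p f (g '' I) * nuVar p h I) := by
    unfold vNorm; ring
  rw [expand]
  have k1 : 0 ≤ ((2 : ℝ) ^ (1 / p) - 1) * (supAbs f (g '' I) * supAbs h I) :=
    mul_nonneg (by linarith) (mul_nonneg hF0 hH0)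
  have k2 : 0 ≤ ((2 : ℝ) ^ (1 / p) - 1) * (supAbs f (g '' I) * nuVar p h I) :=
    mul_nonneg (by linarith) (mul_nonneg hF0 hVh0)
  nlinarith [hsup, hnu, k1, k2]

end
end

section
/- Let p ∈ [1,∞), n ≥ 2, intervals I = I_n, and differentiable functions g_k with derivatives g_k' of bounded p-variation on the appropriate images. Then ν_p-norm of the derivative of the n-fold composition satisfies ‖(g₁∘⋯∘g_n)'‖_{𝒱_p(I)} ≤ 2^{(n-1)/p} ‖g_n'‖_{𝒱_p(I)} · ∏_{k=1}^{n-1} ‖g_k'‖_{𝒱_p((g_{k+1}∘⋯∘g_n)(I))}. -/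
open Set Finset MeasureTheory Real

noncomputable section

/-- The composition `g i ∘ g (i+1) ∘ ⋯ ∘ g n` (identity if `i > n`). -/
def compIco (g : ℕ → ℝ → ℝ) (i n : ℕ) : ℝ → ℝ :=
  ((List.Ico i (n + 1)).map g).foldr (· ∘ ·) id

lemma chain_lt {y : ℕ → ℝ} {a c : ℕ} (h : ∀ k, a ≤ k → k < c → y k < y (k+1)) :
    ∀ j i, a ≤ i → i < j → j ≤ c → y i < y j := by
  intro j
  induction j with
  | zero => omega
  | succ j IH =>
    intro i hai hij hjc
    rcases Nat.lt_or_ge i j with h' | h'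
    · exact lt_trans (IH i hai h' (by omega)) (h j (by omega) (by omega))
    · have : i = j := by omega
      subst this; exact h i hai (by omega)

lemma exists_runs (N : ℕ) (hN : 0 < N) (dir : ℕ → Bool) :
    ∃ (M : ℕ) (r : ℕ → ℕ), 0 < M ∧ r 0 = 0 ∧ r M = N ∧
      (∀ j, j < M → r j < r (j+1)) ∧ (∀ j, j < M → r (j+1) ≤ N) ∧
      (∀ j, j < M → ∀ k, r j ≤ k → k < r (j+1) → dir k = dir (r j)) ∧
      (∀ j, j + 1 < M → dir (r (j+1)) ≠ dir (r j)) := by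
  classical
  set f : ℕ → ℕ := fun a => if h : ∃ k, a < k ∧ k < N ∧ dir k ≠ dir a then Nat.find h else N
    with hf
  have hf1 : ∀ a, a < N → a < f a := by
    intro a ha
    by_cases h : ∃ k, a < k ∧ k < N ∧ dir k ≠ dir a
    · simp only [hf, dif_pos h]; exact (Nat.find_spec h).1
    · simp only [hf, dif_neg h]; exact ha
  have hf2 : ∀ a, f a ≤ N := by
    intro a
    by_cases h : ∃ k, a < k ∧ k < N ∧ dir k ≠ dir a
    · simp only [hf, dif_pos h]; exact (Nat.find_spec h).2.1.le
    · simp only [hf, dif_neg h]; exact le_refl N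
  have hf3 : ∀ a, a < N → ∀ k, a ≤ k → k < f a → dir k = dir a := by
    intro a ha k hak hkfa
    rcases Nat.eq_or_lt_of_le hak with rfl | hlt
    · rfl
    by_cases h : ∃ k, a < k ∧ k < N ∧ dir k ≠ dir a
    · simp only [hf, dif_pos h] at hkfa
      have := Nat.find_min h hkfa
      push_neg at this
      exact this hlt (lt_of_lt_of_le hkfa ((Nat.find_spec h).2.1.le))
    · push_neg at h
      have : f a ≤ N := hf2 a
      exact h k hlt (lt_of_lt_of_le hkfa this)
  have hf4 : ∀ a, a < N → f a < N → dir (f a) ≠ dir a := by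
    intro a ha hfa
    by_cases h : ∃ k, a < k ∧ k < N ∧ dir k ≠ dir a
    · simp only [hf, dif_pos h] at hfa ⊢; exact (Nat.find_spec h).2.2
    · simp only [hf, dif_neg h] at hfa; omega
  set r : ℕ → ℕ := fun j => Nat.rec 0 (fun _ prev => f prev) j with hr
  have hrsucc : ∀ j, r (j+1) = f (r j) := fun j => rfl
  have hinv : ∀ j, r j = N ∨ (r j < N ∧ j ≤ r j) := by
    intro j
    induction j with
    | zero => right; exact ⟨hN, le_refl 0⟩
    | succ j IH =>
      rcases IH with h | ⟨h1, h2⟩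
      · left; rw [hrsucc, h]
        by_cases hh : ∃ k, N < k ∧ k < N ∧ dir k ≠ dir N
        · obtain ⟨k, hk⟩ := hh; omega
        · simp only [hf, dif_neg hh]
      · have hlt := hf1 _ h1
        have hle := hf2 (r j)
        rw [hrsucc]
        rcases Nat.eq_or_lt_of_le hle with he | hl
        · left; exact he
        · right; omega
  have hrN : r N = N := by rcases hinv N with h | ⟨h1, h2⟩; exact h; omega
  have hex : ∃ j, r j = N := ⟨N, hrN⟩
  set M := Nat.find hex with hM
  have hrM : r M = N := Nat.find_spec hex
  have hltN : ∀ j, j < M → r j < N := by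
    intro j hj
    have := Nat.find_min hex hj
    rcases hinv j with h | ⟨h1, _⟩
    · exact absurd h this
    · exact h1
  have hM0 : 0 < M := by
    rcases Nat.eq_zero_or_pos M with h | h
    · exfalso; rw [h] at hrM; have : r 0 = 0 := rfl; omega
    · exact h
  refine ⟨M, r, hM0, rfl, hrM, ?_, ?_, ?_, ?_⟩
  · intro j hj; rw [hrsucc]; exact hf1 _ (hltN j hj)
  · intro j hj; rw [hrsucc]; exact hf2 _
  · intro j hj k h1 h2; rw [hrsucc] at h2; exact hf3 _ (hltN j hj) k h1 h2
  · intro j hj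
    have h1 : r (j+1) < N := hltN _ hj
    rw [hrsucc] at h1 ⊢
    exact hf4 _ (hltN j (by omega)) h1

open Set Real

lemma core_main (p : ℝ) (hp : 1 ≤ p) (I : Set ℝ) (hI : Set.OrdConnected I)
    (G u : ℝ → ℝ) (hG : Differentiable ℝ G)
    (B σ b : ℝ) (hB0 : 0 ≤ B) (hσ0 : 0 ≤ σ) (hb0 : 0 ≤ b)
    (hB : ∀ (m : ℕ) (z : ℕ → ℝ), (∀ i ≤ m, z i ∈ G '' I) → (∀ i < m, z i < z (i+1)) →
      ∑ i ∈ Finset.range m, |u (z (i+1)) - u (z i)| ^ p ≤ B ^ p)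
    (hσ : ∀ x ∈ I, |deriv G x| ≤ σ)
    (hb : ∀ (m : ℕ) (z : ℕ → ℝ), (∀ i ≤ m, z i ∈ I) → (∀ i < m, z i < z (i+1)) →
      ∑ i ∈ Finset.range m, |deriv G (z (i+1)) - deriv G (z i)| ^ p ≤ b ^ p)
    (N : ℕ) (hN : 0 < N) (t : ℕ → ℝ) (ht : ∀ k ≤ N, t k ∈ I) (hm : ∀ k < N, t k < t (k + 1))
    (hz : ∀ k < N, G (t k) ≠ G (t (k+1))) :
    ∑ k ∈ Finset.range N, |deriv G (t k)| ^ p * |u (G (t (k+1))) - u (G (t k))| ^ p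
      ≤ B ^ p * (σ ^ p + 2 * b ^ p) := by
  classical
  have hp0 : (0:ℝ) ≤ p := le_trans zero_le_one hp
  obtain ⟨M, r, hM0, hr0, hrM, hrlt, hrleN, hrun, hflip⟩ :=
    exists_runs N hN (fun k => decide (G (t k) < G (t (k+1))))
  have tmono : ∀ i j, i < j → j ≤ N → t i < t j := fun i j hij hj =>
    chain_lt (a := 0) (c := N) (fun k _ hk => hm k hk) j i (Nat.zero_le _) hij hj
  -- direction of each step within a run
  have hstepup : ∀ j, j < M → ∀ k, r j ≤ k → k < r (j+1) →
      ((G (t k) < G (t (k+1))) ↔ (G (t (r j)) < G (t (r j + 1)))) := by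
    intro j hj k h1 h2
    have := hrun j hj k h1 h2
    simpa using this
  -- monotone chains within runs
  have hchainup : ∀ j, j < M → (G (t (r j)) < G (t (r j + 1))) →
      ∀ i l, r j ≤ i → i < l → l ≤ r (j+1) → G (t i) < G (t l) := by
    intro j hj hd
    exact fun i l h1 h2 h3 => chain_lt (y := fun k => G (t k)) (a := r j) (c := r (j+1))
      (fun k hk1 hk2 => (hstepup j hj k hk1 hk2).mpr hd) l i h1 h2 h3
  have hchaindn : ∀ j, j < M → ¬ (G (t (r j)) < G (t (r j + 1))) →
      ∀ i l, r j ≤ i → i < l → l ≤ r (j+1) → G (t l) < G (t i) := by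
    intro j hj hd i l h1 h2 h3
    have hsteps : ∀ k, r j ≤ k → k < r (j+1) → G (t (k+1)) < G (t k) := by
      intro k hk1 hk2
      have hne := hz k (lt_of_lt_of_le hk2 (hrleN j hj))
      have hnot : ¬ (G (t k) < G (t (k+1))) := fun h => hd ((hstepup j hj k hk1 hk2).mp h)
      rcases lt_or_gt_of_ne hne with h | h
      · exact absurd h hnot
      · exact h
    have := chain_lt (y := fun k => - G (t k)) (a := r j) (c := r (j+1))
      (fun k hk1 hk2 => by simpa using hsteps k hk1 hk2) l i h1 h2 h3
    simpa using this
  -- per-run variation bound for u along y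
  have hrunvar : ∀ j, j < M →
      ∑ k ∈ Finset.Ico (r j) (r (j+1)), |u (G (t (k+1))) - u (G (t k))| ^ p ≤ B ^ p := by
    intro j hj
    have hle : r j ≤ r (j+1) := (hrlt j hj).le
    have hup : r j + (r (j+1) - r j) = r (j+1) := by omega
    by_cases hd : G (t (r j)) < G (t (r j + 1))
    · -- increasing run
      have h := hB (r (j+1) - r j) (fun i => G (t (r j + i)))
        (by
          intro i hi
          exact ⟨t (r j + i), ht _ (by have := hrleN j hj; omega), rfl⟩)
        (by
          intro i hi
          have : r j + i < r (j+1) := by omega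
          exact (hstepup j hj (r j + i) (by omega) this).mpr hd)
      rw [Finset.sum_Ico_eq_sum_range]
      exact h
    · -- decreasing run
      have h := hB (r (j+1) - r j) (fun i => G (t (r (j+1) - i)))
        (by
          intro i hi
          exact ⟨t (r (j+1) - i), ht _ (by have := hrleN j hj; omega), rfl⟩)
        (by
          intro i hi
          have h1 : r (j+1) - (i+1) < r (j+1) - i := by omega
          have h2 : r j ≤ r (j+1) - (i+1) := by omega
          have h3 : r (j+1) - i ≤ r (j+1) := by omega
          exact hchaindn j hj hd _ _ h2 h1 h3)
      rw [Finset.sum_Ico_eq_sum_range, ← Finset.sum_range_reflect]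
      refine le_trans (le_of_eq (Finset.sum_congr rfl ?_)) h
      intro i hi
      simp only [Finset.mem_range] at hi
      have e1 : r j + (r (j+1) - r j - 1 - i) + 1 = r (j+1) - i := by omega
      have e2 : r j + (r (j+1) - r j - 1 - i) = r (j+1) - (i+1) := by omega
      rw [e1, e2, abs_sub_comm]
  -- choose the index of maximal weight within each run
  have hKex : ∀ j, ∃ kk, j < M → (kk ∈ Finset.Ico (r j) (r (j+1)) ∧
      ∀ k' ∈ Finset.Ico (r j) (r (j+1)), |deriv G (t k')| ≤ |deriv G (t kk)|) := by
    intro j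
    by_cases hj : j < M
    · obtain ⟨kk, hk1, hk2⟩ := Finset.exists_max_image (Finset.Ico (r j) (r (j+1)))
        (fun k => |deriv G (t k)|) ⟨r j, by simp [hrlt j hj]⟩
      exact ⟨kk, fun _ => ⟨hk1, hk2⟩⟩
    · exact ⟨0, fun h => absurd h hj⟩
  choose K hK using hKex
  -- weighted per-run bound
  have hrunbound : ∀ j, j < M →
      ∑ k ∈ Finset.Ico (r j) (r (j+1)), |deriv G (t k)| ^ p * |u (G (t (k+1))) - u (G (t k))| ^ p
        ≤ |deriv G (t (K j))| ^ p * B ^ p := by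
    intro j hj
    obtain ⟨hK1, hK2⟩ := hK j hj
    calc ∑ k ∈ Finset.Ico (r j) (r (j+1)),
          |deriv G (t k)| ^ p * |u (G (t (k+1))) - u (G (t k))| ^ p
        ≤ ∑ k ∈ Finset.Ico (r j) (r (j+1)),
          |deriv G (t (K j))| ^ p * |u (G (t (k+1))) - u (G (t k))| ^ p := by
          refine Finset.sum_le_sum ?_
          intro k hk
          exact mul_le_mul_of_nonneg_right
            (Real.rpow_le_rpow (abs_nonneg _) (hK2 k hk) hp0)
            (Real.rpow_nonneg (abs_nonneg _) _)
      _ = |deriv G (t (K j))| ^ p *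
          ∑ k ∈ Finset.Ico (r j) (r (j+1)), |u (G (t (k+1))) - u (G (t k))| ^ p := by
          rw [Finset.mul_sum]
      _ ≤ |deriv G (t (K j))| ^ p * B ^ p :=
          mul_le_mul_of_nonneg_left (hrunvar j hj) (Real.rpow_nonneg (abs_nonneg _) _)
  -- MVT points with definite sign in each run
  have hXiex : ∀ j, ∃ x, j < M → (x ∈ Set.Ioo (t (r j)) (t (r (j+1))) ∧
      ((G (t (r j)) < G (t (r j + 1))) → 0 < deriv G x) ∧
      (¬ (G (t (r j)) < G (t (r j + 1))) → deriv G x < 0)) := by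
    intro j
    by_cases hj : j < M
    · have hab : t (r j) < t (r (j+1)) := tmono _ _ (hrlt j hj) (hrleN j hj)
      obtain ⟨c, hc, hcslope⟩ := exists_deriv_eq_slope G hab
        (hG.continuous.continuousOn) (hG.differentiableOn)
      refine ⟨c, fun _ => ⟨hc, ?_, ?_⟩⟩
      · intro hd
        have hnum : 0 < G (t (r (j+1))) - G (t (r j)) := by
          have := hchainup j hj hd (r j) (r (j+1)) (le_refl _) (hrlt j hj) (le_refl _)
          linarith
        rw [hcslope]
        exact div_pos hnum (by linarith)
      · intro hd
        have hnum : G (t (r (j+1))) - G (t (r j)) < 0 := by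
          have := hchaindn j hj hd (r j) (r (j+1)) (le_refl _) (hrlt j hj) (le_refl _)
          linarith
        rw [hcslope]
        exact div_neg_of_neg_of_pos hnum (by linarith)
    · exact ⟨0, fun h => absurd h hj⟩
  choose Xi hXi using hXiex
  -- adjacent runs have opposite directions, so adjacent Xi's have opposite derivative signs
  have hopp : ∀ j, 1 ≤ j → j < M →
      (0 < deriv G (Xi (j-1)) ∧ deriv G (Xi j) < 0) ∨
      (deriv G (Xi (j-1)) < 0 ∧ 0 < deriv G (Xi j)) := by
    intro j h1 hj
    have hj1 : j - 1 < M := by omega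
    have hflip' := hflip (j-1) (by omega)
    have he : j - 1 + 1 = j := by omega
    rw [he] at hflip'
    by_cases hd : G (t (r j)) < G (t (r j + 1))
    · -- run j up, so run j-1 down
      have hdm1 : ¬ (G (t (r (j-1))) < G (t (r (j-1) + 1))) := by
        intro hcon
        apply hflip'
        simp [hd, hcon]
      exact Or.inr ⟨((hXi (j-1) hj1).2.2 hdm1), (hXi j hj).2.1 hd⟩
    · have hdm1 : (G (t (r (j-1))) < G (t (r (j-1) + 1))) := by
        by_contra hcon
        apply hflip'
        simp [hd, hcon]
      exact Or.inl ⟨(hXi (j-1) hj1).2.1 hdm1, (hXi j hj).2.2 hd⟩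
  -- the partner point with opposite derivative sign
  set Z : ℕ → ℝ := fun j =>
    if deriv G (Xi (j-1)) < 0 then
      (if 0 ≤ deriv G (t (K j)) then Xi (j-1) else Xi j)
    else
      (if 0 ≤ deriv G (t (K j)) then Xi j else Xi (j-1)) with hZdef
  set lo : ℕ → ℝ := fun j => min (t (K j)) (Z j) with hlodef
  set hi : ℕ → ℝ := fun j => max (t (K j)) (Z j) with hhidef
  have hZsign : ∀ j, 1 ≤ j → j < M →
      (0 ≤ deriv G (t (K j)) → deriv G (Z j) < 0) ∧
      (deriv G (t (K j)) < 0 → 0 < deriv G (Z j)) := by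
    intro j h1 hj
    rcases hopp j h1 hj with ⟨ha, hbb⟩ | ⟨ha, hbb⟩
    · constructor
      · intro hpos
        simp only [hZdef, if_neg (not_lt.mpr ha.le), if_pos hpos]
        exact hbb
      · intro hneg
        simp only [hZdef, if_neg (not_lt.mpr ha.le), if_neg (not_le.mpr hneg)]
        exact ha
    · constructor
      · intro hpos
        simp only [hZdef, if_pos ha, if_pos hpos]
        exact ha
      · intro hneg
        simp only [hZdef, if_pos ha, if_neg (not_le.mpr hneg)]
        exact hbb
  have hZloc : ∀ j, 1 ≤ j → j < M → t (r (j-1)) < Z j ∧ Z j < t (r (j+1)) := by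
    intro j h1 hj
    have hj1 : j - 1 < M := by omega
    have he : j - 1 + 1 = j := by omega
    have hXa := (hXi (j-1) hj1).1
    rw [he] at hXa
    have hXb := (hXi j hj).1
    have hr1 : r (j-1) < r j := by have h := hrlt (j-1) hj1; rw [he] at h; exact h
    have htm : t (r (j-1)) < t (r j) := tmono _ _ hr1
      (le_trans (hrlt j hj).le (hrleN j hj))
    have h1a : t (r (j-1)) < Xi (j-1) := hXa.1
    have h2a : Xi (j-1) < t (r (j+1)) := lt_trans hXa.2 (lt_of_le_of_lt (le_of_lt hXb.1) hXb.2)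
    have h1b : t (r (j-1)) < Xi j := lt_trans htm hXb.1
    have h2b : Xi j < t (r (j+1)) := hXb.2
    simp only [hZdef]
    split_ifs <;> exact ⟨by assumption, by assumption⟩
  have hKloc : ∀ j, 1 ≤ j → j < M → t (r (j-1)) < t (K j) ∧ t (K j) < t (r (j+1)) := by
    intro j h1 hj
    obtain ⟨hK1, _⟩ := hK j hj
    simp only [Finset.mem_Ico] at hK1
    have hj1 : j - 1 < M := by omega
    have he : j - 1 + 1 = j := by omega
    have hr1 : r (j-1) < r j := by have h := hrlt (j-1) hj1; rw [he] at h; exact h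
    constructor
    · exact tmono _ _ (by omega) (le_trans hK1.2.le (hrleN j hj))
    · exact tmono _ _ hK1.2 (hrleN j hj)
  have hpair : ∀ j, 1 ≤ j → j < M →
      (|deriv G (t (K j))| ≤ |deriv G (hi j) - deriv G (lo j)|) ∧ lo j < hi j ∧
      t (r (j-1)) < lo j ∧ hi j < t (r (j+1)) ∧ lo j ∈ I ∧ hi j ∈ I := by
    intro j h1 hj
    have hzs := hZsign j h1 hj
    have hzl := hZloc j h1 hj
    have hkl := hKloc j h1 hj
    have he : j - 1 + 1 = j := by omega
    have hr1 : r (j-1) < r j := by have h := hrlt (j-1) (by omega); rw [he] at h; exact h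
    have hrr : r (j-1) ≤ r (j+1) := le_trans hr1.le (hrlt j hj).le
    have hne : t (K j) ≠ Z j := by
      intro he
      rcases le_or_gt 0 (deriv G (t (K j))) with h | h
      · have := hzs.1 h; rw [← he] at this; linarith
      · have := hzs.2 h; rw [← he] at this; linarith
    have habs : |deriv G (hi j) - deriv G (lo j)| = |deriv G (t (K j)) - deriv G (Z j)| := by
      simp only [hlodef, hhidef]
      rcases le_total (t (K j)) (Z j) with h | h
      · rw [min_eq_left h, max_eq_right h, abs_sub_comm]
      · rw [min_eq_right h, max_eq_left h]
    rw [habs]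
    refine ⟨?_, ?_, ?_, ?_, ?_, ?_⟩
    · rcases le_or_gt 0 (deriv G (t (K j))) with h | h
      · have hz := hzs.1 h
        rw [abs_of_nonneg h]
        calc deriv G (t (K j)) ≤ deriv G (t (K j)) - deriv G (Z j) := by linarith
          _ ≤ |deriv G (t (K j)) - deriv G (Z j)| := le_abs_self _
      · have hz := hzs.2 h
        rw [abs_of_neg h]
        calc -deriv G (t (K j)) ≤ deriv G (Z j) - deriv G (t (K j)) := by linarith
          _ ≤ |deriv G (Z j) - deriv G (t (K j))| := le_abs_self _
          _ = |deriv G (t (K j)) - deriv G (Z j)| := abs_sub_comm _ _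
    · exact min_lt_max.mpr hne
    · simp only [hlodef, lt_min_iff]; exact ⟨hkl.1, hzl.1⟩
    · simp only [hhidef, max_lt_iff]; exact ⟨hkl.2, hzl.2⟩
    · have hsub : Set.Icc (t (r (j-1))) (t (r (j+1))) ⊆ I :=
        hI.out (ht _ (le_trans hrr (hrleN j hj))) (ht _ (hrleN j hj))
      apply hsub
      constructor
      · exact le_of_lt (by simp only [hlodef, lt_min_iff]; exact ⟨hkl.1, hzl.1⟩)
      · calc lo j ≤ hi j := min_le_max
          _ ≤ t (r (j+1)) := le_of_lt (by simp only [hhidef, max_lt_iff]; exact ⟨hkl.2, hzl.2⟩)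
    · have hsub : Set.Icc (t (r (j-1))) (t (r (j+1))) ⊆ I :=
        hI.out (ht _ (le_trans hrr (hrleN j hj))) (ht _ (hrleN j hj))
      apply hsub
      constructor
      · calc t (r (j-1)) ≤ lo j := le_of_lt (by simp only [hlodef, lt_min_iff]; exact ⟨hkl.1, hzl.1⟩)
          _ ≤ hi j := min_le_max
      · exact le_of_lt (by simp only [hhidef, max_lt_iff]; exact ⟨hkl.2, hzl.2⟩)
  -- parity-class sums of maximal weights are bounded by the variation of deriv G
  have hparity : ∀ s, 1 ≤ s → s ≤ 2 →
      ∑ i ∈ Finset.range ((M - s + 1)/2), |deriv G (t (K (s + 2*i)))| ^ p ≤ b ^ p := by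
    intro s hs1 hs2
    set c := (M - s + 1)/2 with hc
    rcases Nat.eq_zero_or_pos c with hc0 | hc0
    · rw [hc0]; simpa using Real.rpow_nonneg hb0 p
    set z : ℕ → ℝ := fun l => if l % 2 = 0 then lo (s + l) else hi (s + l - 1) with hzdef
    have hmem : ∀ l, l ≤ 2*c - 1 → z l ∈ I := by
      intro l hl
      rcases Nat.even_or_odd l with ⟨m2, hm2⟩ | ⟨m2, hm2⟩
      · have hl0 : l % 2 = 0 := by omega
        simp only [hzdef, if_pos hl0]
        exact (hpair (s + l) (by omega) (by omega)).2.2.2.2.1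
      · have hl0 : ¬ (l % 2 = 0) := by omega
        simp only [hzdef, if_neg hl0]
        exact (hpair (s + l - 1) (by omega) (by omega)).2.2.2.2.2
    have hstrict : ∀ l, l < 2*c - 1 → z l < z (l+1) := by
      intro l hl
      rcases Nat.even_or_odd l with ⟨m2, hm2⟩ | ⟨m2, hm2⟩
      · have hl0 : l % 2 = 0 := by omega
        have hl1 : ¬ ((l+1) % 2 = 0) := by omega
        have he : s + (l+1) - 1 = s + l := by omega
        simp only [hzdef, if_pos hl0, if_neg hl1, he]
        exact (hpair (s + l) (by omega) (by omega)).2.1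
      · have hl0 : ¬ (l % 2 = 0) := by omega
        have hl1 : (l+1) % 2 = 0 := by omega
        simp only [hzdef, if_neg hl0, if_pos hl1]
        have h1 := (hpair (s+l-1) (by omega) (by omega)).2.2.2.1
        have h2 := (hpair (s+l+1) (by omega) (by omega)).2.2.1
        have e1 : s + l - 1 + 1 = s + l := by omega
        have e2 : s + l + 1 - 1 = s + l := by omega
        rw [e1] at h1; rw [e2] at h2
        have e3 : s + (l+1) = s + l + 1 := by omega
        rw [e3]
        linarith
    have H := hb (2*c - 1) z (fun l hl => hmem l hl) (fun l hl => hstrict l hl)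
    have heven : ∀ i, i < c → |deriv G (t (K (s + 2*i)))| ^ p
        ≤ |deriv G (z (2*i+1)) - deriv G (z (2*i))| ^ p := by
      intro i hi
      have hz0 : (2*i) % 2 = 0 := by omega
      have hz1 : ¬ ((2*i+1) % 2 = 0) := by omega
      have he : s + (2*i+1) - 1 = s + 2*i := by omega
      simp only [hzdef, if_pos hz0, if_neg hz1, he]
      exact Real.rpow_le_rpow (abs_nonneg _) (hpair (s+2*i) (by omega) (by omega)).1 hp0
    calc ∑ i ∈ Finset.range c, |deriv G (t (K (s + 2*i)))| ^ p
        ≤ ∑ i ∈ Finset.range c, |deriv G (z (2*i+1)) - deriv G (z (2*i))| ^ p :=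
          Finset.sum_le_sum (fun i hi => heven i (Finset.mem_range.mp hi))
      _ = ∑ l ∈ (Finset.range c).image (fun i => 2*i),
            |deriv G (z (l+1)) - deriv G (z l)| ^ p := by
          rw [Finset.sum_image (by intro a _ b' _ h; simp only at h; omega)]
      _ ≤ ∑ l ∈ Finset.range (2*c-1), |deriv G (z (l+1)) - deriv G (z l)| ^ p := by
          apply Finset.sum_le_sum_of_subset_of_nonneg
          · intro l hl
            simp only [Finset.mem_image, Finset.mem_range] at hl ⊢
            obtain ⟨i, hi, rfl⟩ := hl
            omega
          · intro l _ _
            exact Real.rpow_nonneg (abs_nonneg _) _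
      _ ≤ b ^ p := H
  -- split the total sum along the runs
  have hsplit : ∀ J, J ≤ M → ∑ k ∈ Finset.range (r J),
      |deriv G (t k)| ^ p * |u (G (t (k+1))) - u (G (t k))| ^ p
      = ∑ j ∈ Finset.range J, ∑ k ∈ Finset.Ico (r j) (r (j+1)),
        |deriv G (t k)| ^ p * |u (G (t (k+1))) - u (G (t k))| ^ p := by
    intro J
    induction J with
    | zero => intro _; rw [hr0]; simp
    | succ J IH =>
      intro hJ
      rw [Finset.sum_range_succ, ← IH (by omega)]
      simp only [Finset.range_eq_Ico]
      exact (Finset.sum_Ico_consecutive _ (Nat.zero_le _) (hrlt J (by omega)).le).symm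
  have htotal := hsplit M (le_refl M)
  rw [hrM] at htotal
  rw [htotal]
  have hw : ∑ j ∈ Finset.range M, |deriv G (t (K j))| ^ p ≤ σ ^ p + 2 * b ^ p := by
    rw [Finset.range_eq_Ico, Finset.sum_eq_sum_Ico_succ_bot hM0]
    have h0 : |deriv G (t (K 0))| ^ p ≤ σ ^ p := by
      obtain ⟨hK1, _⟩ := hK 0 hM0
      simp only [Finset.mem_Ico] at hK1
      have : t (K 0) ∈ I := ht _ (le_trans hK1.2.le (hrleN 0 hM0))
      exact Real.rpow_le_rpow (abs_nonneg _) (hσ _ this) hp0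
    have hrest : ∑ j ∈ Finset.Ico 1 M, |deriv G (t (K j))| ^ p ≤ b ^ p + b ^ p := by
      have hsub : Finset.Ico 1 M ⊆
          ((Finset.range ((M - 1 + 1)/2)).image (fun i => 1 + 2*i)) ∪
          ((Finset.range ((M - 2 + 1)/2)).image (fun i => 2 + 2*i)) := by
        intro j hj
        simp only [Finset.mem_Ico] at hj
        simp only [Finset.mem_union, Finset.mem_image, Finset.mem_range]
        rcases Nat.even_or_odd j with ⟨m2, hm2⟩ | ⟨m2, hm2⟩
        · right; exact ⟨m2 - 1, by omega, by omega⟩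
        · left; exact ⟨m2, by omega, by omega⟩
      have hdisj : Disjoint ((Finset.range ((M - 1 + 1)/2)).image (fun i => 1 + 2*i))
          ((Finset.range ((M - 2 + 1)/2)).image (fun i => 2 + 2*i)) := by
        simp only [Finset.disjoint_left, Finset.mem_image, Finset.mem_range]
        rintro a ⟨i, _, rfl⟩ ⟨i', _, h⟩
        omega
      calc ∑ j ∈ Finset.Ico 1 M, |deriv G (t (K j))| ^ p
          ≤ ∑ j ∈ (((Finset.range ((M - 1 + 1)/2)).image (fun i => 1 + 2*i)) ∪
              ((Finset.range ((M - 2 + 1)/2)).image (fun i => 2 + 2*i))),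
              |deriv G (t (K j))| ^ p :=
            Finset.sum_le_sum_of_subset_of_nonneg hsub
              (fun j _ _ => Real.rpow_nonneg (abs_nonneg _) _)
        _ = ∑ i ∈ Finset.range ((M-1+1)/2), |deriv G (t (K (1 + 2*i)))| ^ p
            + ∑ i ∈ Finset.range ((M-2+1)/2), |deriv G (t (K (2 + 2*i)))| ^ p := by
            rw [Finset.sum_union hdisj, Finset.sum_image (by intro a _ b' _ h; simp only at h; omega),
              Finset.sum_image (by intro a _ b' _ h; simp only at h; omega)]
        _ ≤ b ^ p + b ^ p :=
            add_le_add (hparity 1 (le_refl 1) one_le_two) (hparity 2 one_le_two (le_refl 2))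
    linarith
  calc ∑ j ∈ Finset.range M, ∑ k ∈ Finset.Ico (r j) (r (j+1)),
        |deriv G (t k)| ^ p * |u (G (t (k+1))) - u (G (t k))| ^ p
      ≤ ∑ j ∈ Finset.range M, |deriv G (t (K j))| ^ p * B ^ p :=
        Finset.sum_le_sum (fun j hj => hrunbound j (Finset.mem_range.mp hj))
    _ = (∑ j ∈ Finset.range M, |deriv G (t (K j))| ^ p) * B ^ p := by
        rw [← Finset.sum_mul]
    _ ≤ (σ ^ p + 2 * b ^ p) * B ^ p :=
        mul_le_mul_of_nonneg_right hw (Real.rpow_nonneg hB0 _)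
    _ = B ^ p * (σ ^ p + 2 * b ^ p) := mul_comm _ _

lemma core (p : ℝ) (hp : 1 ≤ p) (I : Set ℝ) (hI : Set.OrdConnected I)
    (G u : ℝ → ℝ) (hG : Differentiable ℝ G)
    (B σ b : ℝ) (hB0 : 0 ≤ B) (hσ0 : 0 ≤ σ) (hb0 : 0 ≤ b)
    (hB : ∀ (m : ℕ) (z : ℕ → ℝ), (∀ i ≤ m, z i ∈ G '' I) → (∀ i < m, z i < z (i+1)) →
      ∑ i ∈ Finset.range m, |u (z (i+1)) - u (z i)| ^ p ≤ B ^ p)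
    (hσ : ∀ x ∈ I, |deriv G x| ≤ σ)
    (hb : ∀ (m : ℕ) (z : ℕ → ℝ), (∀ i ≤ m, z i ∈ I) → (∀ i < m, z i < z (i+1)) →
      ∑ i ∈ Finset.range m, |deriv G (z (i+1)) - deriv G (z i)| ^ p ≤ b ^ p) :
    ∀ (N : ℕ) (t : ℕ → ℝ), (∀ k ≤ N, t k ∈ I) → (∀ k < N, t k < t (k + 1)) →
    ∑ k ∈ Finset.range N, |deriv G (t k)| ^ p * |u (G (t (k+1))) - u (G (t k))| ^ p
      ≤ B ^ p * (σ ^ p + 2 * b ^ p) := by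
  have hp0 : (0:ℝ) ≤ p := le_trans zero_le_one hp
  have hpne : p ≠ 0 := (lt_of_lt_of_le one_pos hp).ne'
  intro N
  induction N using Nat.strong_induction_on with
  | _ N IH =>
    intro t ht hm
    rcases Nat.eq_zero_or_pos N with rfl | hN
    · simp only [Finset.range_zero, Finset.sum_empty]
      have h1 : (0:ℝ) ≤ B ^ p := Real.rpow_nonneg hB0 _
      have h2 : (0:ℝ) ≤ σ ^ p := Real.rpow_nonneg hσ0 _
      have h3 : (0:ℝ) ≤ b ^ p := Real.rpow_nonneg hb0 _
      nlinarith
    by_cases hzz : ∀ k < N, G (t k) ≠ G (t (k+1))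
    · exact core_main p hp I hI G u hG B σ b hB0 hσ0 hb0 hB hσ hb N hN t ht hm hzz
    · push_neg at hzz
      obtain ⟨k, hk, hGk⟩ := hzz
      rcases Nat.eq_zero_or_pos k with rfl | hk0
      · obtain ⟨N', rfl⟩ : ∃ N', N = N' + 1 := ⟨N - 1, by omega⟩
        rw [Finset.sum_range_succ']
        have h0 : |deriv G (t 0)| ^ p * |u (G (t (0+1))) - u (G (t 0))| ^ p = 0 := by
          rw [hGk]
          simp [Real.zero_rpow hpne]
        rw [h0, add_zero]
        exact IH N' (by omega) (fun j => t (j+1)) (fun j hj => ht (j+1) (by omega))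
          (fun j hj => hm (j+1) (by omega))
      · obtain ⟨N', rfl⟩ : ∃ N', N = N' + 1 := ⟨N - 1, by omega⟩
        set t' : ℕ → ℝ := fun j => if j < k then t j else t (j+1) with ht'def
        have ht'mem : ∀ j ≤ N', t' j ∈ I := by
          intro j hj
          simp only [ht'def]
          split_ifs
          · exact ht j (by omega)
          · exact ht (j+1) (by omega)
        have ht'mono : ∀ j < N', t' j < t' (j+1) := by
          intro j hj
          simp only [ht'def]
          rcases Nat.lt_trichotomy (j+1) k with h | h | h
          · rw [if_pos (by omega), if_pos h]
            exact hm j (by omega)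
          · rw [if_pos (by omega), if_neg (by omega)]
            exact lt_trans (hm j (by omega)) (hm (j+1) (by omega))
          · rw [if_neg (by omega), if_neg (by omega)]
            exact hm (j+1) (by omega)
        have key : ∑ j ∈ Finset.range (N'+1),
            |deriv G (t j)| ^ p * |u (G (t (j+1))) - u (G (t j))| ^ p
            = ∑ j ∈ Finset.range N',
            |deriv G (t' j)| ^ p * |u (G (t' (j+1))) - u (G (t' j))| ^ p := by
          have hkN : k ≤ N' := by omega
          simp only [Finset.range_eq_Ico]
          rw [← Finset.sum_Ico_consecutive _ (Nat.zero_le k) (by omega : k ≤ N'+1),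
            ← Finset.sum_Ico_consecutive _ (Nat.zero_le k) hkN,
            Finset.sum_eq_sum_Ico_succ_bot (by omega : k < N'+1)]
          have hTk : |deriv G (t k)| ^ p * |u (G (t (k+1))) - u (G (t k))| ^ p = 0 := by
            rw [hGk]
            simp [Real.zero_rpow hpne]
          rw [hTk, zero_add]
          congr 1
          · -- first blocks equal
            refine Finset.sum_congr rfl ?_
            intro j hj
            simp only [Finset.mem_Ico] at hj
            have hjk : j < k := hj.2
            simp only [ht'def]
            rcases Nat.lt_or_ge (j+1) k with h | h
            · rw [if_pos hjk, if_pos h]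
            · have hjk1 : j + 1 = k := by omega
              rw [if_pos hjk, if_neg (by omega), hjk1, ← hGk]
          · -- shifted blocks equal
            rw [Finset.sum_Ico_eq_sum_range, Finset.sum_Ico_eq_sum_range]
            have he : N' + 1 - (k+1) = N' - k := by omega
            rw [he]
            refine Finset.sum_congr rfl ?_
            intro i hi
            simp only [ht'def]
            rw [if_neg (by omega), if_neg (by omega)]
            have e1 : k + 1 + i = k + i + 1 := by omega
            rw [e1]
        rw [key]
        exact IH N' (by omega) t' ht'mem ht'mono

lemma add_rpow_le {p : ℝ} (hp : 1 ≤ p) {x y : ℝ} (hx : 0 ≤ x) (hy : 0 ≤ y) :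
    x ^ p + y ^ p ≤ (x + y) ^ p := by
  have h := NNReal.add_rpow_le_rpow_add ⟨x, hx⟩ ⟨y, hy⟩ hp
  have := (NNReal.coe_le_coe).2 h
  push_cast [NNReal.coe_rpow] at this
  convert this using 2 <;> rfl

lemma rpow_cancelA {p : ℝ} (hp : 1 ≤ p) {x : ℝ} (hx : 0 ≤ x) : (x ^ (1/p)) ^ p = x := by
  rw [one_div]; exact Real.rpow_inv_rpow hx (lt_of_lt_of_le one_pos hp).ne'

lemma rpow_cancelB {p : ℝ} (hp : 1 ≤ p) {x : ℝ} (hx : 0 ≤ x) : (x ^ p) ^ (1/p) = x := by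
  rw [one_div]; exact Real.rpow_rpow_inv hx (lt_of_lt_of_le one_pos hp).ne'

lemma one_le_two_rpow {p : ℝ} (hp : 1 ≤ p) : (1:ℝ) ≤ 2 ^ (1/p) := by
  have h : (0:ℝ) ≤ 1/p := by positivity
  calc (1:ℝ) = 2 ^ (0:ℝ) := by simp
  _ ≤ 2 ^ (1/p) := Real.rpow_le_rpow_of_exponent_le one_le_two h

lemma step (p : ℝ) (hp : 1 ≤ p) (I : Set ℝ) (hI : Set.OrdConnected I)
    (f G : ℝ → ℝ) (hf : Differentiable ℝ f) (hG : Differentiable ℝ G)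
    (A B σ b : ℝ) (hA0 : 0 ≤ A) (hB0 : 0 ≤ B) (hσ0 : 0 ≤ σ) (hb0 : 0 ≤ b)
    (hA : ∀ y ∈ G '' I, |deriv f y| ≤ A)
    (hB : ∀ (m : ℕ) (z : ℕ → ℝ), (∀ i ≤ m, z i ∈ G '' I) → (∀ i < m, z i < z (i+1)) →
      ∑ i ∈ Finset.range m, |deriv f (z (i+1)) - deriv f (z i)| ^ p ≤ B ^ p)
    (hσ : ∀ x ∈ I, |deriv G x| ≤ σ)
    (hb : ∀ (m : ℕ) (z : ℕ → ℝ), (∀ i ≤ m, z i ∈ I) → (∀ i < m, z i < z (i+1)) →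
      ∑ i ∈ Finset.range m, |deriv G (z (i+1)) - deriv G (z i)| ^ p ≤ b ^ p) :
    (∀ x ∈ I, |deriv (f ∘ G) x| ≤ A * σ) ∧
    (∀ (m : ℕ) (z : ℕ → ℝ), (∀ i ≤ m, z i ∈ I) → (∀ i < m, z i < z (i+1)) →
      ∑ i ∈ Finset.range m, |deriv (f ∘ G) (z (i+1)) - deriv (f ∘ G) (z i)| ^ p
        ≤ (A * b + B * (σ ^ p + 2 * b ^ p) ^ (1/p)) ^ p) ∧
    A * σ + (A * b + B * (σ ^ p + 2 * b ^ p) ^ (1/p)) ≤ 2 ^ (1/p) * (A + B) * (σ + b) := by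
  have hp0 : (0:ℝ) ≤ p := le_trans zero_le_one hp
  have hd : ∀ x, deriv (f ∘ G) x = deriv f (G x) * deriv G x := fun x =>
    deriv_comp x (hf.differentiableAt) (hG.differentiableAt)
  have hX0 : (0:ℝ) ≤ σ ^ p + 2 * b ^ p := by
    have := Real.rpow_nonneg hσ0 p
    have := Real.rpow_nonneg hb0 p
    linarith
  have hW0 : (0:ℝ) ≤ A * b + B * (σ ^ p + 2 * b ^ p) ^ (1/p) := by
    have := Real.rpow_nonneg hX0 (1/p)
    have := mul_nonneg hA0 hb0
    have := mul_nonneg hB0 (Real.rpow_nonneg hX0 (1/p))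
    linarith
  refine ⟨?_, ?_, ?_⟩
  · intro x hx
    rw [hd, abs_mul]
    exact mul_le_mul (hA (G x) ⟨x, hx, rfl⟩) (hσ x hx) (abs_nonneg _) hA0
  · intro m z hzI hzm
    set F : ℕ → ℝ := fun i => deriv f (G (z (i+1))) * (deriv G (z (i+1)) - deriv G (z i))
      with hF
    set H : ℕ → ℝ := fun i => (deriv f (G (z (i+1))) - deriv f (G (z i))) * deriv G (z i)
      with hH
    have hFH : ∀ i, deriv (f ∘ G) (z (i+1)) - deriv (f ∘ G) (z i) = F i + H i := by
      intro i; rw [hd, hd]; simp only [hF, hH]; ring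
    have hS0 : (0:ℝ) ≤ ∑ i ∈ Finset.range m,
        |deriv (f ∘ G) (z (i+1)) - deriv (f ∘ G) (z i)| ^ p :=
      Finset.sum_nonneg fun i _ => Real.rpow_nonneg (abs_nonneg _) _
    have hmink : (∑ i ∈ Finset.range m,
        |deriv (f ∘ G) (z (i+1)) - deriv (f ∘ G) (z i)| ^ p) ^ (1/p)
        ≤ (∑ i ∈ Finset.range m, |F i| ^ p) ^ (1/p)
          + (∑ i ∈ Finset.range m, |H i| ^ p) ^ (1/p) := by
      have := Real.Lp_add_le (Finset.range m) F H hp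
      refine le_trans (le_of_eq ?_) this
      congr 1
      exact Finset.sum_congr rfl fun i _ => by rw [hFH]
    have hbF : (∑ i ∈ Finset.range m, |F i| ^ p) ^ (1/p) ≤ A * b := by
      have h1 : ∑ i ∈ Finset.range m, |F i| ^ p ≤ (A*b) ^ p := by
        calc ∑ i ∈ Finset.range m, |F i| ^ p
            ≤ ∑ i ∈ Finset.range m, A ^ p * |deriv G (z (i+1)) - deriv G (z i)| ^ p := by
              refine Finset.sum_le_sum fun i hi => ?_
              have him : i < m := Finset.mem_range.mp hi
              rw [hF]
              simp only
              rw [abs_mul, Real.mul_rpow (abs_nonneg _) (abs_nonneg _)]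
              refine mul_le_mul_of_nonneg_right ?_ (Real.rpow_nonneg (abs_nonneg _) _)
              exact Real.rpow_le_rpow (abs_nonneg _) (hA _ ⟨z (i+1), hzI _ (by omega), rfl⟩) hp0
          _ = A ^ p * ∑ i ∈ Finset.range m, |deriv G (z (i+1)) - deriv G (z i)| ^ p := by
              rw [Finset.mul_sum]
          _ ≤ A ^ p * b ^ p :=
              mul_le_mul_of_nonneg_left (hb m z hzI hzm) (Real.rpow_nonneg hA0 _)
          _ = (A*b) ^ p := (Real.mul_rpow hA0 hb0).symm
      calc (∑ i ∈ Finset.range m, |F i| ^ p) ^ (1/p)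
          ≤ ((A*b) ^ p) ^ (1/p) := Real.rpow_le_rpow
            (Finset.sum_nonneg fun i _ => Real.rpow_nonneg (abs_nonneg _) _) h1 (by positivity)
        _ = A * b := rpow_cancelB hp (mul_nonneg hA0 hb0)
    have hbH : (∑ i ∈ Finset.range m, |H i| ^ p) ^ (1/p)
        ≤ B * (σ ^ p + 2 * b ^ p) ^ (1/p) := by
      have h1 : ∑ i ∈ Finset.range m, |H i| ^ p ≤ B ^ p * (σ ^ p + 2 * b ^ p) := by
        have hc := core p hp I hI G (deriv f) hG B σ b hB0 hσ0 hb0 hB hσ hb m z hzI hzm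
        refine le_trans (le_of_eq ?_) hc
        refine Finset.sum_congr rfl fun i _ => ?_
        rw [hH]
        simp only
        rw [abs_mul, Real.mul_rpow (abs_nonneg _) (abs_nonneg _), mul_comm]
      calc (∑ i ∈ Finset.range m, |H i| ^ p) ^ (1/p)
          ≤ (B ^ p * (σ ^ p + 2 * b ^ p)) ^ (1/p) := Real.rpow_le_rpow
            (Finset.sum_nonneg fun i _ => Real.rpow_nonneg (abs_nonneg _) _) h1 (by positivity)
        _ = (B ^ p) ^ (1/p) * (σ ^ p + 2 * b ^ p) ^ (1/p) :=
            Real.mul_rpow (Real.rpow_nonneg hB0 _) hX0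
        _ = B * (σ ^ p + 2 * b ^ p) ^ (1/p) := by rw [rpow_cancelB hp hB0]
    have hfinal : (∑ i ∈ Finset.range m,
        |deriv (f ∘ G) (z (i+1)) - deriv (f ∘ G) (z i)| ^ p) ^ (1/p)
        ≤ A * b + B * (σ ^ p + 2 * b ^ p) ^ (1/p) :=
      le_trans hmink (add_le_add hbF hbH)
    calc ∑ i ∈ Finset.range m, |deriv (f ∘ G) (z (i+1)) - deriv (f ∘ G) (z i)| ^ p
        = ((∑ i ∈ Finset.range m,
            |deriv (f ∘ G) (z (i+1)) - deriv (f ∘ G) (z i)| ^ p) ^ (1/p)) ^ p :=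
          (rpow_cancelA hp hS0).symm
      _ ≤ (A * b + B * (σ ^ p + 2 * b ^ p) ^ (1/p)) ^ p :=
          Real.rpow_le_rpow (Real.rpow_nonneg hS0 _) hfinal hp0
  · -- the algebraic estimate
    have h1 : (σ ^ p + 2 * b ^ p) ^ (1/p) ≤ 2 ^ (1/p) * (σ + b) := by
      have hA1 : σ ^ p + 2 * b ^ p ≤ 2 * (σ + b) ^ p := by
        have h2 := add_rpow_le hp hσ0 hb0
        have h3 : b ^ p ≤ (σ + b) ^ p := Real.rpow_le_rpow hb0 (by linarith) hp0
        linarith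
      calc (σ ^ p + 2 * b ^ p) ^ (1/p) ≤ (2 * (σ + b) ^ p) ^ (1/p) :=
            Real.rpow_le_rpow hX0 hA1 (by positivity)
        _ = 2 ^ (1/p) * ((σ + b) ^ p) ^ (1/p) :=
            Real.mul_rpow (by norm_num) (Real.rpow_nonneg (by linarith) _)
        _ = 2 ^ (1/p) * (σ + b) := by rw [rpow_cancelB hp (by linarith : (0:ℝ) ≤ σ + b)]
    have h2 : (1:ℝ) ≤ 2 ^ (1/p) := one_le_two_rpow hp
    have hσb : (0:ℝ) ≤ σ + b := by linarith
    have hAσb : A * (σ + b) ≤ 2 ^ (1/p) * A * (σ + b) := by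
      nlinarith [mul_nonneg hA0 hσb]
    have hBX : B * (σ ^ p + 2 * b ^ p) ^ (1/p) ≤ B * (2 ^ (1/p) * (σ + b)) :=
      mul_le_mul_of_nonneg_left h1 hB0
    nlinarith [hAσb, hBX]

variable {p : ℝ} {v : ℝ → ℝ} {J : Set ℝ}

lemma VSsum_nonneg (p : ℝ) (v : ℝ → ℝ) (N : ℕ) (t : ℕ → ℝ) :
    0 ≤ ∑ k ∈ Finset.range N, |v (t (k + 1)) - v (t k)| ^ p :=
  Finset.sum_nonneg fun k _ => Real.rpow_nonneg (abs_nonneg _) p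

lemma nuVar_nonneg (p : ℝ) (v : ℝ → ℝ) (J : Set ℝ) : 0 ≤ nuVar p v J :=
  Real.sSup_nonneg fun x hx => by
    obtain ⟨N, t, _, _, rfl⟩ := hx
    exact Real.rpow_nonneg (VSsum_nonneg p v N t) _

lemma supAbs_nonneg (v : ℝ → ℝ) (J : Set ℝ) : 0 ≤ supAbs v J :=
  Real.sSup_nonneg fun x hx => by obtain ⟨y, _, rfl⟩ := hx; exact abs_nonneg _

lemma VS_le_nuVar (hp : 1 ≤ p) (hbdd : BddAbove (varSums p v J)) (N : ℕ) (t : ℕ → ℝ)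
    (ht : ∀ k ≤ N, t k ∈ J) (hm : ∀ k < N, t k < t (k + 1)) :
    ∑ k ∈ Finset.range N, |v (t (k + 1)) - v (t k)| ^ p ≤ (nuVar p v J) ^ p := by
  have hmem : (∑ k ∈ Finset.range N, |v (t (k + 1)) - v (t k)| ^ p) ^ (1/p) ∈ varSums p v J :=
    ⟨N, t, ht, hm, rfl⟩
  have h1 : (∑ k ∈ Finset.range N, |v (t (k + 1)) - v (t k)| ^ p) ^ (1/p) ≤ nuVar p v J :=
    le_csSup hbdd hmem
  calc ∑ k ∈ Finset.range N, |v (t (k + 1)) - v (t k)| ^ p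
      = ((∑ k ∈ Finset.range N, |v (t (k + 1)) - v (t k)| ^ p) ^ (1/p)) ^ p :=
        (rpow_cancelA hp (VSsum_nonneg p v N t)).symm
    _ ≤ (nuVar p v J) ^ p :=
        Real.rpow_le_rpow (Real.rpow_nonneg (VSsum_nonneg p v N t) _) h1
          (le_trans zero_le_one hp)

lemma abs_sub_le_nuVar (hp : 1 ≤ p) (hbdd : BddAbove (varSums p v J)) {x y : ℝ}
    (hx : x ∈ J) (hy : y ∈ J) (hxy : x < y) : |v y - v x| ≤ nuVar p v J := by
  have h := VS_le_nuVar hp hbdd 1 (fun i => if i = 0 then x else y)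
    (by intro k hk; interval_cases k <;> simpa) (by intro k hk; interval_cases k; simpa)
  simp only [Finset.range_one, Finset.sum_singleton] at h
  norm_num at h
  calc |v y - v x| = ((|v y - v x|) ^ p) ^ (1/p) := (rpow_cancelB hp (abs_nonneg _)).symm
    _ ≤ ((nuVar p v J) ^ p) ^ (1/p) :=
        Real.rpow_le_rpow (Real.rpow_nonneg (abs_nonneg _) _) h (by positivity)
    _ = nuVar p v J := rpow_cancelB hp (nuVar_nonneg p v J)

lemma abs_le_supAbs (hp : 1 ≤ p) (hbdd : BddAbove (varSums p v J)) {x : ℝ}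
    (hx : x ∈ J) : |v x| ≤ supAbs v J := by
  have hb : BddAbove ((fun x => |v x|) '' J) := by
    refine ⟨|v x| + nuVar p v J, ?_⟩
    rintro _ ⟨y, hy, rfl⟩
    rcases lt_trichotomy x y with h | h | h
    · have := abs_sub_le_nuVar hp hbdd hx hy h
      calc |v y| ≤ |v x| + |v y - v x| := by
            have := abs_sub_abs_le_abs_sub (v y) (v x); linarith [abs_nonneg (v y - v x)]
      _ ≤ |v x| + nuVar p v J := by linarith
    · subst h; simp [le_add_iff_nonneg_right, nuVar_nonneg p v J]
    · have h2 := abs_sub_le_nuVar hp hbdd hy hx h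
      have : |v y| - |v x| ≤ |v x - v y| := by
        have := abs_sub_abs_le_abs_sub (v y) (v x); rwa [abs_sub_comm] at this
      simp only []; linarith
  exact le_csSup hb ⟨x, hx, rfl⟩

lemma compIco_of_lt (g : ℕ → ℝ → ℝ) {i n : ℕ} (h : n < i) : compIco g i n = id := by
  unfold compIco
  rw [List.Ico.eq_nil_of_le (by omega)]
  rfl

lemma compIco_succ (g : ℕ → ℝ → ℝ) {i n : ℕ} (h : i ≤ n) :
    compIco g i n = g i ∘ compIco g (i+1) n := by
  unfold compIco
  rw [List.Ico.eq_cons (by omega : i < n+1)]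
  rfl

lemma compIco_self (g : ℕ → ℝ → ℝ) (n : ℕ) : compIco g n n = g n := by
  rw [compIco_succ g (le_refl n), compIco_of_lt g (by omega)]
  rfl

lemma main_ind (p : ℝ) (hp : 1 ≤ p) (n : ℕ) (I : Set ℝ) (hI : Set.OrdConnected I)
    (g : ℕ → ℝ → ℝ) (hg : ∀ k, 1 ≤ k → k ≤ n → Differentiable ℝ (g k))
    (hgn : BddAbove (varSums p (deriv (g n)) I))
    (hgk : ∀ k ∈ Finset.Ico 1 n,
      BddAbove (varSums p (deriv (g k)) (compIco g (k + 1) n '' I))) :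
    ∀ d i, i + d = n → 1 ≤ i →
    ∃ σ b : ℝ, 0 ≤ σ ∧ 0 ≤ b ∧ Differentiable ℝ (compIco g i n) ∧
      (∀ x ∈ I, |deriv (compIco g i n) x| ≤ σ) ∧
      (∀ (m : ℕ) (z : ℕ → ℝ), (∀ j ≤ m, z j ∈ I) → (∀ j < m, z j < z (j+1)) →
        ∑ j ∈ Finset.range m,
          |deriv (compIco g i n) (z (j+1)) - deriv (compIco g i n) (z j)| ^ p ≤ b ^ p) ∧
      σ + b ≤ 2 ^ (((n : ℝ) - (i : ℝ))/p) * vNorm p (deriv (g n)) I *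
        ∏ k ∈ Finset.Ico i n, vNorm p (deriv (g k)) (compIco g (k+1) n '' I) := by
  intro d
  induction d with
  | zero =>
    intro i hi h1
    have hin : i = n := by omega
    subst hin
    refine ⟨supAbs (deriv (g i)) I, nuVar p (deriv (g i)) I,
      supAbs_nonneg _ _, nuVar_nonneg _ _ _, ?_, ?_, ?_, ?_⟩
    · rw [compIco_self]; exact hg i h1 (le_refl i)
    · rw [compIco_self]
      intro x hx
      exact abs_le_supAbs hp hgn hx
    · rw [compIco_self]
      intro m z hz1 hz2
      exact VS_le_nuVar hp hgn m z hz1 hz2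
    · have he : ((i : ℝ) - (i : ℝ))/p = 0 := by ring
      rw [he, Real.rpow_zero, Finset.Ico_self, Finset.prod_empty, one_mul, mul_one]
      exact le_of_eq rfl
  | succ d IHd =>
    intro i hi h1
    have hin : i < n := by omega
    obtain ⟨σ', b', hσ'0, hb'0, hdiff', hsup', hvar', hbound'⟩ :=
      IHd (i+1) (by omega) (by omega)
    have hmem : i ∈ Finset.Ico 1 n := by simp [Finset.mem_Ico]; omega
    have hbddi := hgk i hmem
    set S := compIco g (i+1) n '' I with hS
    set A := supAbs (deriv (g i)) S with hA
    set B := nuVar p (deriv (g i)) S with hB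
    have hA0 : 0 ≤ A := supAbs_nonneg _ _
    have hB0 : 0 ≤ B := nuVar_nonneg _ _ _
    have hfd : Differentiable ℝ (g i) := hg i (by omega) (by omega)
    obtain ⟨c1, c2, c3⟩ := step p hp I hI (g i) (compIco g (i+1) n) hfd hdiff'
      A B σ' b' hA0 hB0 hσ'0 hb'0
      (fun y hy => abs_le_supAbs hp hbddi hy)
      (fun m z hz1 hz2 => VS_le_nuVar hp hbddi m z hz1 hz2)
      hsup' hvar'
    have hcomp : compIco g i n = g i ∘ compIco g (i+1) n := compIco_succ g (by omega)
    refine ⟨A * σ', A * b' + B * (σ' ^ p + 2 * b' ^ p) ^ (1/p),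
      mul_nonneg hA0 hσ'0, ?_, ?_, ?_, ?_, ?_⟩
    · have hX0 : (0:ℝ) ≤ σ' ^ p + 2 * b' ^ p := by
        have := Real.rpow_nonneg hσ'0 p
        have := Real.rpow_nonneg hb'0 p
        linarith
      have := Real.rpow_nonneg hX0 (1/p)
      have := mul_nonneg hA0 hb'0
      have := mul_nonneg hB0 (Real.rpow_nonneg hX0 (1/p))
      linarith
    · rw [hcomp]; exact hfd.comp hdiff'
    · rw [hcomp]; exact c1
    · rw [hcomp]; exact c2
    · have hprod : ∏ k ∈ Finset.Ico i n, vNorm p (deriv (g k)) (compIco g (k+1) n '' I)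
          = (A + B) * ∏ k ∈ Finset.Ico (i+1) n,
              vNorm p (deriv (g k)) (compIco g (k+1) n '' I) := by
        rw [Finset.prod_eq_prod_Ico_succ_bot hin]
        rfl
      have hPnn : (0:ℝ) ≤ ∏ k ∈ Finset.Ico (i+1) n,
          vNorm p (deriv (g k)) (compIco g (k+1) n '' I) := by
        refine Finset.prod_nonneg fun k _ => ?_
        exact add_nonneg (supAbs_nonneg _ _) (nuVar_nonneg _ _ _)
      have hvN : (0:ℝ) ≤ vNorm p (deriv (g n)) I :=
        add_nonneg (supAbs_nonneg _ _) (nuVar_nonneg _ _ _)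
      have h2p : (0:ℝ) < 2 ^ (1/p) := Real.rpow_pos_of_pos two_pos _
      rw [hprod]
      refine le_trans c3 ?_
      have hmul := mul_le_mul_of_nonneg_left hbound'
        (show (0:ℝ) ≤ 2 ^ (1/p) * (A + B) by positivity)
      refine le_trans hmul (le_of_eq ?_)
      have he2 : ((n : ℝ) - (i:ℝ))/p = 1/p + ((n : ℝ) - (((i+1) : ℕ):ℝ))/p := by
        push_cast; ring
      rw [he2, Real.rpow_add two_pos]
      ring

/-- n-fold composition estimate:
`‖(g₁∘⋯∘g_n)'‖_{𝒱_p(I)} ≤ 2^{(n-1)/p} ‖g_n'‖_{𝒱_p(I)} ∏_{k=1}^{n-1} ‖g_k'‖_{𝒱_p((g_{k+1}∘⋯∘g_n)(I))}`. -/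
theorem stmt13 (p : ℝ) (hp : 1 ≤ p) (n : ℕ) (hn : 2 ≤ n) (I : Set ℝ) (hI : I.OrdConnected)
    (g : ℕ → ℝ → ℝ) (hg : ∀ k, 1 ≤ k → k ≤ n → Differentiable ℝ (g k))
    (hgn : BddAbove (varSums p (deriv (g n)) I))
    (hgk : ∀ k ∈ Finset.Ico 1 n,
      BddAbove (varSums p (deriv (g k)) (compIco g (k + 1) n '' I))) :
    vNorm p (deriv (compIco g 1 n)) I ≤
      (2 : ℝ) ^ (((n : ℝ) - 1) / p) * vNorm p (deriv (g n)) I *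
        ∏ k ∈ Finset.Ico 1 n, vNorm p (deriv (g k)) (compIco g (k + 1) n '' I) := by
  obtain ⟨σ, b, hσ0, hb0, hdiff, hsup, hvar, hbound⟩ :=
    main_ind p hp n I hI g hg hgn hgk (n - 1) 1 (by omega) (le_refl 1)
  have h1 : supAbs (deriv (compIco g 1 n)) I ≤ σ :=
    Real.sSup_le (by rintro _ ⟨x, hx, rfl⟩; exact hsup x hx) hσ0
  have h2 : nuVar p (deriv (compIco g 1 n)) I ≤ b := by
    refine Real.sSup_le ?_ hb0
    rintro _ ⟨N, t, ht, hm, rfl⟩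
    have hv := hvar N t ht hm
    calc (∑ k ∈ Finset.range N,
          |deriv (compIco g 1 n) (t (k+1)) - deriv (compIco g 1 n) (t k)| ^ p) ^ (1/p)
        ≤ (b ^ p) ^ (1/p) :=
          Real.rpow_le_rpow (VSsum_nonneg p _ N t) hv (by positivity)
      _ = b := rpow_cancelB hp hb0
  have hfin : σ + b ≤ (2 : ℝ) ^ (((n : ℝ) - 1) / p) * vNorm p (deriv (g n)) I *
      ∏ k ∈ Finset.Ico 1 n, vNorm p (deriv (g k)) (compIco g (k + 1) n '' I) := by
    convert hbound using 4
    norm_num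
  exact le_trans (add_le_add h1 h2) hfin
end
end
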